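/- arXiv:1502.06841 — 8 statements merged into one kernel-verified Lean document; each statement's English description precedes it below -/
import Mathlib

section
/- Let X be a real Banach space, t₀ ∈ ℝ, and let u : (t₀,∞) → X be continuously differentiable. Suppose there exist a continuously differentiable function H : (t₀,∞) → ℝ, an exponent η ∈ (0,1) and a constant c > 0 such that H(t) > 0 for all t ≥ t₀ and −H′(t) ≥ c·H(t)^{1−η}·‖u′(t)‖ for all t ≥ t₀. Then u′ is Bochner integrable on (t₀,∞) (indeed ∫_{t₀}^∞ ‖u′(t)‖ dt ≤ H(t₀)^η/(cη)) and there exists φ ∈ X such that u(t) → φ in X as t → ∞. -/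
open Filter MeasureTheory Set
open scoped Topology

/-- Lemma 1.2.3: if `H > 0` and `-H' ≥ c · H^{1-η} · ‖u'‖` on `[t₀, ∞)`, then `u'` is
integrable on `[t₀, ∞)` with `∫ ‖u'‖ ≤ H(t₀)^η / (c·η)` and `u(t)` converges as `t → ∞`. -/
theorem stmt_0
    {X : Type*} [NormedAddCommGroup X] [NormedSpace ℝ X] [CompleteSpace X]
    (t₀ : ℝ) (u u' : ℝ → X) (H H' : ℝ → ℝ) (η c : ℝ)
    (hη : η ∈ Set.Ioo (0:ℝ) 1) (hc : 0 < c)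
    (hu : ∀ t ∈ Set.Ici t₀, HasDerivAt u (u' t) t)
    (hu' : ContinuousOn u' (Set.Ici t₀))
    (hH : ∀ t ∈ Set.Ici t₀, HasDerivAt H (H' t) t)
    (hH' : ContinuousOn H' (Set.Ici t₀))
    (hHpos : ∀ t ∈ Set.Ici t₀, 0 < H t)
    (hineq : ∀ t ∈ Set.Ici t₀, c * H t ^ (1 - η) * ‖u' t‖ ≤ -H' t) :
    MeasureTheory.IntegrableOn u' (Set.Ici t₀) ∧
      (∫ t in Set.Ici t₀, ‖u' t‖) ≤ H t₀ ^ η / (c * η) ∧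
      ∃ φ : X, Filter.Tendsto u Filter.atTop (nhds φ) := by
  obtain ⟨hη0, hη1⟩ := hη
  set M : ℝ := H t₀ ^ η / (c * η) with hM
  set g : ℝ → ℝ := fun t => -(H' t * η * H t ^ (η - 1)) / (c * η) with hg
  -- continuity of H on Ici t₀
  have hHcont : ContinuousOn H (Set.Ici t₀) := fun t ht =>
    ((hH t ht).continuousAt).continuousWithinAt
  -- pointwise bound ‖u' t‖ ≤ g t
  have hbound : ∀ t ∈ Set.Ici t₀, ‖u' t‖ ≤ g t := by
    intro t ht
    have hHt := hHpos t ht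
    have hpow : (0:ℝ) < H t ^ (1 - η) := Real.rpow_pos_of_pos hHt _
    have key := hineq t ht
    have hηm : H t ^ (η - 1) = (H t ^ (1 - η))⁻¹ := by
      rw [← Real.rpow_neg hHt.le]; ring_nf
    have : g t = -H' t / (c * H t ^ (1 - η)) := by
      simp only [hg, hηm]
      field_simp
    rw [this, le_div_iff₀ (by positivity)]
    nlinarith [key]
  -- derivative of H^η
  have hF : ∀ t ∈ Set.Ici t₀, HasDerivAt (fun s => H s ^ η)
      (H' t * η * H t ^ (η - 1)) t := by
    intro t ht
    exact (hH t ht).rpow_const (Or.inl (hHpos t ht).ne')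
  -- continuity of derivative of H^η and of g
  have hderivcont : ContinuousOn (fun t => H' t * η * H t ^ (η - 1)) (Set.Ici t₀) := by
    apply (hH'.mul continuousOn_const).mul
    exact hHcont.rpow_const fun t ht => Or.inl (hHpos t ht).ne'
  have hgcont : ContinuousOn g (Set.Ici t₀) := (hderivcont.neg).div_const _
  -- key interval bound
  have hkey : ∀ b, t₀ ≤ b → (∫ t in t₀..b, ‖u' t‖) ≤ M := by
    intro b hb
    have hsub : Set.Icc t₀ b ⊆ Set.Ici t₀ := Icc_subset_Ici_self
    have huIcc : Set.uIcc t₀ b = Set.Icc t₀ b := uIcc_of_le hb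
    have hintg : IntervalIntegrable g volume t₀ b :=
      (hgcont.mono (huIcc ▸ hsub)).intervalIntegrable
    have hintu : IntervalIntegrable (fun t => ‖u' t‖) volume t₀ b :=
      ((hu'.norm).mono (huIcc ▸ hsub)).intervalIntegrable
    have h1 : (∫ t in t₀..b, ‖u' t‖) ≤ ∫ t in t₀..b, g t := by
      apply intervalIntegral.integral_mono_on hb hintu hintg
      intro t ht
      exact hbound t (hsub ht)
    have hFTC : (∫ t in t₀..b, H' t * η * H t ^ (η - 1)) = H b ^ η - H t₀ ^ η := by
      apply intervalIntegral.integral_eq_sub_of_hasDerivAt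
      · intro t ht
        exact hF t (hsub (huIcc ▸ ht))
      · exact (hderivcont.mono (huIcc ▸ hsub)).intervalIntegrable
    have h2 : (∫ t in t₀..b, g t) = (H t₀ ^ η - H b ^ η) / (c * η) := by
      simp only [hg]
      rw [intervalIntegral.integral_div]
      rw [show (fun t => -(H' t * η * H t ^ (η - 1))) = fun t => -(H' t * η * H t ^ (η - 1))
        from rfl]
      rw [intervalIntegral.integral_neg, hFTC]
      ring
    have h3 : (H t₀ ^ η - H b ^ η) / (c * η) ≤ M := by
      rw [hM]
      apply div_le_div_of_nonneg_right ?_ (by positivity) |>.trans_eq rfl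
      · nlinarith [Real.rpow_pos_of_pos (hHpos b hb) η]
    calc (∫ t in t₀..b, ‖u' t‖) ≤ ∫ t in t₀..b, g t := h1
      _ = (H t₀ ^ η - H b ^ η) / (c * η) := h2
      _ ≤ M := h3
  -- integrability on Ioi
  have hseq : Tendsto (fun n : ℕ => t₀ + n) atTop atTop :=
    tendsto_atTop_add_const_left _ _ tendsto_natCast_atTop_atTop
  have hintIoc : ∀ n : ℕ, IntegrableOn u' (Set.Ioc t₀ (t₀ + n)) := by
    intro n
    apply (hu'.mono (Icc_subset_Ici_self)).integrableOn_Icc.mono_set Ioc_subset_Icc_self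
  have hIoi : IntegrableOn u' (Set.Ioi t₀) := by
    apply integrableOn_Ioi_of_intervalIntegral_norm_bounded M t₀ hintIoc hseq
    filter_upwards with n
    exact hkey _ (le_add_of_nonneg_right n.cast_nonneg)
  have hIci : IntegrableOn u' (Set.Ici t₀) := by
    rwa [← integrableOn_Ici_iff_integrableOn_Ioi] at hIoi
  refine ⟨hIci, ?_, ?_⟩
  · -- integral bound
    rw [integral_Ici_eq_integral_Ioi]
    have htend : Tendsto (fun n : ℕ => ∫ t in t₀..(t₀ + n), ‖u' t‖) atTop
        (𝓝 (∫ t in Set.Ioi t₀, ‖u' t‖)) :=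
      intervalIntegral_tendsto_integral_Ioi t₀ hIoi.norm hseq
    apply le_of_tendsto htend
    filter_upwards with n
    exact hkey _ (le_add_of_nonneg_right n.cast_nonneg)
  · -- convergence of u
    have hFTCu : ∀ b, t₀ ≤ b → u b = u t₀ + ∫ t in t₀..b, u' t := by
      intro b hb
      have huIcc : Set.uIcc t₀ b = Set.Icc t₀ b := uIcc_of_le hb
      have := intervalIntegral.integral_eq_sub_of_hasDerivAt
        (f := u) (f' := u') (a := t₀) (b := b)
        (fun t ht => hu t (Icc_subset_Ici_self (huIcc ▸ ht)))
        ((hu'.mono (huIcc ▸ Icc_subset_Ici_self)).intervalIntegrable)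
      rw [this]; abel
    refine ⟨u t₀ + ∫ t in Set.Ioi t₀, u' t, ?_⟩
    have htend : Tendsto (fun b : ℝ => ∫ t in t₀..b, u' t) atTop
        (𝓝 (∫ t in Set.Ioi t₀, u' t)) :=
      intervalIntegral_tendsto_integral_Ioi t₀ hIoi tendsto_id
    have := (tendsto_const_nhds.add htend :
      Tendsto (fun b : ℝ => u t₀ + ∫ t in t₀..b, u' t) atTop
        (𝓝 (u t₀ + ∫ t in Set.Ioi t₀, u' t)))
    apply this.congr'
    filter_upwards [eventually_ge_atTop t₀] with b hb
    exact (hFTCu b hb).symm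
end

section
/- Let T > 0 and let p be a nonnegative square-integrable function on [0,T). Assume there exist constants γ > 0 and a > 0 such that ∫_t^T p(s)² ds ≤ a·e^{−γt} for all t ∈ [0,T]. Then, setting b := e^{γ/2}/(e^{γ/2} − 1), for all 0 ≤ t ≤ τ ≤ T one has ∫_t^τ p(s) ds ≤ √a · b · e^{−γt/2}. -/
open MeasureTheory Set intervalIntegral

/-- Lemma 1.2.4: if `∫_t^T p² ≤ a·e^{-γt}` for all `t ∈ [0,T]`, then with
`b = e^{γ/2}/(e^{γ/2}-1)` one has `∫_t^τ p ≤ √a · b · e^{-γt/2}` for `0 ≤ t ≤ τ ≤ T`. -/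
theorem stmt_1 (T : ℝ) (hT : 0 < T) (p : ℝ → ℝ) (γ a : ℝ)
    (hγ : 0 < γ) (ha : 0 < a)
    (hp_nonneg : ∀ s ∈ Set.Ico (0:ℝ) T, 0 ≤ p s)
    (hp_sq_int : MeasureTheory.IntegrableOn (fun s => p s ^ 2) (Set.Ico 0 T))
    (hp : ∀ t ∈ Set.Icc (0:ℝ) T, (∫ s in t..T, p s ^ 2) ≤ a * Real.exp (-γ * t)) :
    ∀ t τ : ℝ, 0 ≤ t → t ≤ τ → τ ≤ T →
      (∫ s in t..τ, p s) ≤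
        Real.sqrt a * (Real.exp (γ / 2) / (Real.exp (γ / 2) - 1)) *
          Real.exp (-(γ * t) / 2) := by
  set b : ℝ := Real.exp (γ / 2) / (Real.exp (γ / 2) - 1) with hb
  have hE : 1 < Real.exp (γ / 2) := by
    have := Real.exp_pos (γ/2)
    nlinarith [Real.add_one_le_exp (γ/2)]
  have hE1 : 0 < Real.exp (γ / 2) - 1 := by linarith
  have hb1 : 1 ≤ b := by
    rw [hb, le_div_iff₀ hE1]; linarith
  have hb0 : 0 < b := lt_of_lt_of_le one_pos hb1
  -- measurability of p on Ico 0 T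
  have hmeas : AEStronglyMeasurable p (volume.restrict (Ico 0 T)) := by
    have h1 : AEStronglyMeasurable (fun s => Real.sqrt (p s ^ 2))
        (volume.restrict (Ico 0 T)) :=
      Real.continuous_sqrt.comp_aestronglyMeasurable hp_sq_int.aestronglyMeasurable
    refine h1.congr ?_
    refine (ae_restrict_iff' measurableSet_Ico).2 (ae_of_all _ fun s hs => ?_)
    exact Real.sqrt_sq (hp_nonneg s hs)
  -- integrability of p on Icc 0 T
  have hint : IntegrableOn p (Ico 0 T) := by
    have hg : IntegrableOn (fun s => (p s ^ 2 + 1) / 2) (Ico 0 T) := by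
      exact (hp_sq_int.add (integrableOn_const measure_Ico_lt_top.ne)).div_const 2
    refine hg.mono' hmeas ?_
    refine (ae_restrict_iff' measurableSet_Ico).2 (ae_of_all _ fun s hs => ?_)
    have h0 := hp_nonneg s hs
    rw [Real.norm_eq_abs, abs_of_nonneg h0]
    nlinarith [sq_nonneg (p s - 1)]
  have hintIcc : IntegrableOn p (Icc 0 T) :=
    (integrableOn_Icc_iff_integrableOn_Ico).2 hint
  have hsqIcc : IntegrableOn (fun s => p s ^ 2) (Icc 0 T) :=
    (integrableOn_Icc_iff_integrableOn_Ico).2 hp_sq_int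
  have hii : ∀ x y : ℝ, 0 ≤ x → y ≤ T → x ≤ y → IntervalIntegrable p volume x y := by
    intro x y hx hy hxy
    refine (hintIcc.mono_set ?_).intervalIntegrable
    rw [uIcc_of_le hxy]; exact Icc_subset_Icc hx hy
  have hii2 : ∀ x y : ℝ, 0 ≤ x → y ≤ T → x ≤ y →
      IntervalIntegrable (fun s => p s ^ 2) volume x y := by
    intro x y hx hy hxy
    refine (hsqIcc.mono_set ?_).intervalIntegrable
    rw [uIcc_of_le hxy]; exact Icc_subset_Icc hx hy
  -- Cauchy-Schwarz type step on an interval of length ≤ 1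
  have hCS : ∀ t u : ℝ, 0 ≤ t → t ≤ u → u ≤ T → u ≤ t + 1 →
      (∫ s in t..u, p s) ≤ Real.sqrt a * Real.exp (-(γ * t) / 2) := by
    intro t u ht htu huT hlen
    set ε : ℝ := Real.sqrt a * Real.exp (-(γ * t) / 2) with hε
    have hεpos : 0 < ε := mul_pos (Real.sqrt_pos.2 ha) (Real.exp_pos _)
    have hε2 : ε ^ 2 = a * Real.exp (-γ * t) := by
      rw [hε, mul_pow, Real.sq_sqrt ha.le, ← Real.exp_nat_mul]
      ring_nf
    have hsq_tu : (∫ s in t..u, p s ^ 2) ≤ a * Real.exp (-γ * t) := by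
      have hadd := integral_add_adjacent_intervals (hii2 t u ht huT htu)
        (hii2 u T (ht.trans htu) le_rfl huT)
      have hnn : (0:ℝ) ≤ ∫ s in u..T, p s ^ 2 :=
        integral_nonneg huT (fun x _ => sq_nonneg _)
      have hTb := hp t ⟨ht, htu.trans huT⟩
      linarith
    have h1 : (∫ s in t..u, p s) ≤ ∫ s in t..u, (p s ^ 2 / (2 * ε) + ε / 2) := by
      refine integral_mono_on htu (hii t u ht huT htu) ?_ ?_
      · exact ((hii2 t u ht huT htu).div_const (2 * ε)).add
          (intervalIntegrable_const)
      · intro x _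
        have hkey : p x ^ 2 / (2 * ε) + ε / 2 - p x = (p x - ε) ^ 2 / (2 * ε) := by
          field_simp; ring
        nlinarith [div_nonneg (sq_nonneg (p x - ε)) (by positivity : (0:ℝ) ≤ 2 * ε)]
    have h2 : (∫ s in t..u, (p s ^ 2 / (2 * ε) + ε / 2))
        = (∫ s in t..u, p s ^ 2) / (2 * ε) + (u - t) * (ε / 2) := by
      rw [integral_add ((hii2 t u ht huT htu).div_const (2 * ε)) intervalIntegrable_const,
        intervalIntegral.integral_div, intervalIntegral.integral_const, smul_eq_mul]
    have h3 : (∫ s in t..u, p s ^ 2) / (2 * ε) ≤ ε / 2 := by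
      rw [div_le_iff₀ (by positivity)]
      nlinarith
    have h4 : (u - t) * (ε / 2) ≤ ε / 2 := by nlinarith
    calc (∫ s in t..u, p s) ≤ _ := h1
      _ = _ := h2
      _ ≤ ε / 2 + ε / 2 := add_le_add h3 h4
      _ = ε := by ring
  -- key induction
  have key : ∀ n : ℕ, ∀ t : ℝ, 0 ≤ t → t ≤ T → T ≤ t + n →
      (∫ s in t..T, p s) ≤ Real.sqrt a * b * Real.exp (-(γ * t) / 2) := by
    intro n
    induction n with
    | zero =>
      intro t ht htT hTn
      have : t = T := le_antisymm htT (by simpa using hTn)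
      subst this
      rw [integral_same]
      positivity
    | succ n ih =>
      intro t ht htT hTn
      by_cases h : T ≤ t + 1
      · have := hCS t T ht htT le_rfl h
        have hrb : Real.sqrt a * Real.exp (-(γ * t) / 2)
            ≤ Real.sqrt a * b * Real.exp (-(γ * t) / 2) := by
          have h0 : 0 ≤ Real.sqrt a * Real.exp (-(γ * t) / 2) := by positivity
          nlinarith
        linarith
      · push_neg at h
        have ht1 : (0:ℝ) ≤ t + 1 := by linarith
        have hadd := integral_add_adjacent_intervals (hii t (t+1) ht h.le (by linarith))
          (hii (t+1) T ht1 le_rfl h.le)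
        have hA := hCS t (t+1) ht (by linarith) h.le le_rfl
        have hB := ih (t+1) ht1 h.le (by push_cast at hTn ⊢; linarith)
        have hexp : Real.exp (-(γ * (t+1)) / 2)
            = Real.exp (-(γ * t) / 2) * (Real.exp (γ / 2))⁻¹ := by
          rw [← Real.exp_neg, ← Real.exp_add]; ring_nf
        have hbid : 1 + b * (Real.exp (γ / 2))⁻¹ = b := by
          rw [hb]
          field_simp
          ring
        rw [hexp] at hB
        have heq : Real.sqrt a * Real.exp (-(γ * t) / 2)
            + Real.sqrt a * b * (Real.exp (-(γ * t) / 2) * (Real.exp (γ / 2))⁻¹)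
            = Real.sqrt a * b * Real.exp (-(γ * t) / 2) := by
          calc Real.sqrt a * Real.exp (-(γ * t) / 2)
              + Real.sqrt a * b * (Real.exp (-(γ * t) / 2) * (Real.exp (γ / 2))⁻¹)
              = Real.sqrt a * Real.exp (-(γ * t) / 2) * (1 + b * (Real.exp (γ / 2))⁻¹) := by
                ring
            _ = Real.sqrt a * Real.exp (-(γ * t) / 2) * b := by rw [hbid]
            _ = Real.sqrt a * b * Real.exp (-(γ * t) / 2) := by ring
        linarith
  -- conclude
  intro t τ ht htτ hτT
  have hkey := key ⌈T - t⌉₊ t ht (htτ.trans hτT) (by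
    have := Nat.le_ceil (T - t); linarith)
  have hadd := integral_add_adjacent_intervals (hii t τ ht hτT htτ)
    (hii τ T (ht.trans htτ) le_rfl hτT)
  have hnn : (0:ℝ) ≤ ∫ s in τ..T, p s := by
    refine integral_nonneg_of_ae_restrict hτT ?_
    have hTne : ∀ᵐ s : ℝ ∂(volume.restrict (Icc τ T)), s ≠ T := by
      refine ae_restrict_of_ae ?_
      rw [ae_iff]
      simpa using Real.volume_singleton
    filter_upwards [hTne, ae_restrict_mem measurableSet_Icc] with s hs1 hs2
    exact hp_nonneg s ⟨le_trans (ht.trans htτ) hs2.1, lt_of_le_of_ne hs2.2 hs1⟩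
  linarith
end

section
/- Let W and X be real Banach spaces, U ⊆ W open, and E : U → ℝ, G : U → X continuous. Assume that for every a ∈ U with G(a) = 0 there exist σ_a > 0 (with the ball B(a,σ_a) contained in U), θ(a) ∈ (0,1) and c(a) > 0 such that ‖G(u)‖_X ≥ c(a)·|E(u) − E(a)|^{1−θ(a)} for all u with ‖u − a‖_W < σ_a. Let Γ be a compact connected subset of {u ∈ U : G(u) = 0}. Then: (1) E is constant on Γ, with common value Ē; (2) there exist σ > 0, θ ∈ (0,1) and c > 0 such that for every u ∈ U with dist(u,Γ) < σ one has ‖G(u)‖_X ≥ c·|E(u) − Ē|^{1−θ}. -/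
open Set Metric

/-- Lemma 1.2.6: topological reduction principle for the Łojasiewicz gradient inequality
on a compact connected set of zeroes of `G`. -/
theorem stmt_3 {W X : Type*} [NormedAddCommGroup W] [NormedSpace ℝ W] [CompleteSpace W]
    [NormedAddCommGroup X] [NormedSpace ℝ X] [CompleteSpace X]
    (U : Set W) (hU : IsOpen U) (E : W → ℝ) (G : W → X)
    (hE : ContinuousOn E U) (hG : ContinuousOn G U)
    (hLoj : ∀ a ∈ U, G a = 0 →
      ∃ σ > 0, Metric.ball a σ ⊆ U ∧ ∃ θ ∈ Set.Ioo (0:ℝ) 1, ∃ c > 0,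
        ∀ u : W, ‖u - a‖ < σ → c * |E u - E a| ^ (1 - θ) ≤ ‖G u‖)
    (Γ : Set W) (hΓU : Γ ⊆ U) (hΓG : ∀ u ∈ Γ, G u = 0)
    (hΓcomp : IsCompact Γ) (hΓconn : IsConnected Γ) :
    ∃ Ebar : ℝ, (∀ a ∈ Γ, E a = Ebar) ∧
      ∃ σ > 0, ∃ θ ∈ Set.Ioo (0:ℝ) 1, ∃ c > 0,
        ∀ u ∈ U, Metric.infDist u Γ < σ → c * |E u - Ebar| ^ (1 - θ) ≤ ‖G u‖ := by
  classical
  -- local data at each point of Γ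
  have key : ∀ a : Γ, ∃ r > 0, Metric.ball (a:W) r ⊆ U ∧
      (∀ u ∈ Metric.ball (a:W) r, |E u - E a| ≤ 1) ∧
      ∃ θ ∈ Set.Ioo (0:ℝ) 1, ∃ c > 0,
        (∀ u ∈ Metric.ball (a:W) r, c * |E u - E a| ^ (1 - θ) ≤ ‖G u‖) ∧
        (∀ u ∈ Γ ∩ Metric.ball (a:W) r, E u = E a) := by
    rintro ⟨a, ha⟩
    obtain ⟨σa, hσa, hball, θa, hθa, ca, hca, hineq⟩ :=
      hLoj a (hΓU ha) (hΓG a ha)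
    -- continuity of E at a: get δ with |E u - E a| ≤ 1 on ball a δ ∩ U
    have haU : a ∈ U := hΓU ha
    obtain ⟨δ, hδ, hδ1⟩ : ∃ δ > 0, ∀ u ∈ U, dist u a < δ → |E u - E a| ≤ 1 := by
      have := Metric.continuousWithinAt_iff.mp (hE a haU) 1 one_pos
      obtain ⟨δ, hδ, h⟩ := this
      exact ⟨δ, hδ, fun u hu hd => le_of_lt (by simpa [Real.dist_eq] using h hu hd)⟩
    refine ⟨min σa δ, lt_min hσa hδ, ?_, ?_, θa, hθa, ca, hca, ?_, ?_⟩
    · exact (Metric.ball_subset_ball (min_le_left _ _)).trans hball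
    · intro u hu
      have huU : u ∈ U := hball (Metric.ball_subset_ball (min_le_left _ _) hu)
      exact hδ1 u huU (lt_of_lt_of_le (Metric.mem_ball.mp hu) (min_le_right _ _))
    · intro u hu
      exact hineq u (by rw [← dist_eq_norm]; exact lt_of_lt_of_le (Metric.mem_ball.mp hu) (min_le_left _ _))
    · rintro u ⟨huΓ, hu⟩
      have h0 := hineq u (by rw [← dist_eq_norm]; exact lt_of_lt_of_le (Metric.mem_ball.mp hu) (min_le_left _ _))
      rw [hΓG u huΓ] at h0
      simp only [norm_zero] at h0
      have h1 : |E u - E a| ^ (1 - θa) ≤ 0 := by nlinarith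
      have h2 : |E u - E a| ^ (1 - θa) = 0 :=
        le_antisymm h1 (Real.rpow_nonneg (abs_nonneg _) _)
      have h3 : |E u - E a| = 0 :=
        (Real.rpow_eq_zero (abs_nonneg _) (by linarith [hθa.2] : (1:ℝ) - θa ≠ 0)).mp h2
      linarith [abs_nonneg (E u - E a), abs_sub_abs_le_abs_sub (E u) (E a), abs_eq_zero.mp h3]
  choose r hr hrU hE1 θ hθ c hc hineq hconst using key
  obtain ⟨a₀, ha₀⟩ := hΓconn.nonempty
  set Ebar := E a₀ with hEbar
  -- Step 1: E constant on Γ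
  have hconstΓ : ∀ a ∈ Γ, E a = Ebar := by
    by_contra hcon
    push_neg at hcon
    obtain ⟨b, hb, hbE⟩ := hcon
    set V₁ : Set W := ⋃ (a : Γ) (_ : E (a:W) = Ebar), Metric.ball (a:W) (r a)
    set V₂ : Set W := ⋃ (a : Γ) (_ : E (a:W) ≠ Ebar), Metric.ball (a:W) (r a)
    have hV₁ : IsOpen V₁ := isOpen_iUnion fun a => isOpen_iUnion fun _ => Metric.isOpen_ball
    have hV₂ : IsOpen V₂ := isOpen_iUnion fun a => isOpen_iUnion fun _ => Metric.isOpen_ball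
    have hcover : Γ ⊆ V₁ ∪ V₂ := by
      intro x hx
      by_cases hxE : E x = Ebar
      · exact Or.inl (mem_iUnion.mpr ⟨⟨x, hx⟩, mem_iUnion.mpr ⟨hxE, Metric.mem_ball_self (hr _)⟩⟩)
      · exact Or.inr (mem_iUnion.mpr ⟨⟨x, hx⟩, mem_iUnion.mpr ⟨hxE, Metric.mem_ball_self (hr _)⟩⟩)
    have h1 : (Γ ∩ V₁).Nonempty :=
      ⟨a₀, ha₀, mem_iUnion.mpr ⟨⟨a₀, ha₀⟩, mem_iUnion.mpr ⟨rfl, Metric.mem_ball_self (hr _)⟩⟩⟩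
    have h2 : (Γ ∩ V₂).Nonempty :=
      ⟨b, hb, mem_iUnion.mpr ⟨⟨b, hb⟩, mem_iUnion.mpr ⟨hbE, Metric.mem_ball_self (hr _)⟩⟩⟩
    obtain ⟨x, hxΓ, hx1, hx2⟩ := hΓconn.isPreconnected V₁ V₂ hV₁ hV₂ hcover h1 h2
    obtain ⟨a, haE, hxa⟩ : ∃ a : Γ, E (a:W) = Ebar ∧ x ∈ Metric.ball (a:W) (r a) := by
      simpa [V₁, mem_iUnion] using hx1
    obtain ⟨a', haE', hxa'⟩ : ∃ a : Γ, E (a:W) ≠ Ebar ∧ x ∈ Metric.ball (a:W) (r a) := by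
      simpa [V₂, mem_iUnion] using hx2
    have e1 : E x = E (a:W) := hconst a x ⟨hxΓ, hxa⟩
    have e2 : E x = E (a':W) := hconst a' x ⟨hxΓ, hxa'⟩
    exact haE' (by rw [← e2, e1, haE])
  -- Step 2: finite subcover
  have hcov : Γ ⊆ ⋃ a : Γ, Metric.ball (a:W) (r a / 2) := fun x hx =>
    mem_iUnion.mpr ⟨⟨x, hx⟩, Metric.mem_ball_self (by linarith [hr ⟨x, hx⟩])⟩
  obtain ⟨t, ht⟩ := hΓcomp.elim_finite_subcover (fun a : Γ => Metric.ball (a:W) (r a / 2))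
    (fun a => Metric.isOpen_ball) hcov
  have htne : t.Nonempty := by
    obtain ⟨i, hi, _⟩ := mem_iUnion₂.mp (ht ha₀)
    exact ⟨i, hi⟩
  set σ := t.inf' htne (fun i => r i / 2) with hσdef
  set θm := t.inf' htne θ with hθdef
  set cm := t.inf' htne c with hcdef
  have hσpos : 0 < σ := (Finset.lt_inf'_iff htne).mpr fun i _ => by linarith [hr i]
  have hθpos : 0 < θm := (Finset.lt_inf'_iff htne).mpr fun i _ => (hθ i).1
  have hθlt : θm < 1 := by
    obtain ⟨i, hi⟩ := htne
    exact lt_of_le_of_lt (Finset.inf'_le _ hi) (hθ i).2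
  have hcpos : 0 < cm := (Finset.lt_inf'_iff htne).mpr fun i _ => hc i
  refine ⟨Ebar, hconstΓ, σ, hσpos, θm, ⟨hθpos, hθlt⟩, cm, hcpos, ?_⟩
  intro u huU hdist
  obtain ⟨y, hyΓ, hy⟩ := (Metric.infDist_lt_iff hΓconn.nonempty).mp hdist
  obtain ⟨i, hi, hyi⟩ := mem_iUnion₂.mp (ht hyΓ)
  have hσi : σ ≤ r i / 2 := Finset.inf'_le _ hi
  have hui : u ∈ Metric.ball (i:W) (r i) := by
    rw [Metric.mem_ball]
    calc dist u (i:W) ≤ dist u y + dist y (i:W) := dist_triangle _ _ _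
    _ < σ + r i / 2 := add_lt_add hy (Metric.mem_ball.mp hyi)
    _ ≤ r i := by linarith
  have hEi : E (i:W) = Ebar := hconstΓ _ i.2
  have hmain := hineq i u hui
  rw [hEi] at hmain
  have hT1 : |E u - Ebar| ≤ 1 := by have := hE1 i u hui; rwa [hEi] at this
  have hT0 : 0 ≤ |E u - Ebar| := abs_nonneg _
  rcases eq_or_lt_of_le hT0 with hT | hT
  · rw [← hT, Real.zero_rpow (by linarith : (1:ℝ) - θm ≠ 0), mul_zero]
    exact norm_nonneg _
  · have hexp : |E u - Ebar| ^ (1 - θm) ≤ |E u - Ebar| ^ (1 - θ i) :=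
      Real.rpow_le_rpow_of_exponent_ge hT hT1 (by linarith [Finset.inf'_le θ hi])
    calc cm * |E u - Ebar| ^ (1 - θm) ≤ c i * |E u - Ebar| ^ (1 - θ i) := by
          apply mul_le_mul (Finset.inf'_le _ hi) hexp (Real.rpow_nonneg hT0 _) (le_of_lt (hc i))
    _ ≤ ‖G u‖ := hmain
end

section
/- Let (S(t))_{t≥0} be a dynamical system on a complete metric space (Z,d), let 𝓕 = {x ∈ Z : S(t)x = x for all t ≥ 0} be its set of equilibrium points, and let u₀ ∈ Z be such that the orbit {S(t)u₀ : t ≥ 0} is relatively compact in Z. Then the following three properties are equivalent: (1) ω(u₀) ⊆ 𝓕; (2) for every h > 0, d(S(t+h)u₀, S(t)u₀) → 0 as t → ∞; (3) there exists α > 0 such that for every h ∈ [0,α], d(S(t+h)u₀, S(t)u₀) → 0 as t → ∞. -/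
open Filter Metric Set

private lemma dist_add_tendsto {Z : Type*} [MetricSpace Z] (S : ℝ → Z → Z) (u₀ : Z) {a b : ℝ}
    (ha : Filter.Tendsto (fun t => dist (S (t + a) u₀) (S t u₀)) Filter.atTop (nhds 0))
    (hb : Filter.Tendsto (fun t => dist (S (t + b) u₀) (S t u₀)) Filter.atTop (nhds 0)) :
    Filter.Tendsto (fun t => dist (S (t + (a + b)) u₀) (S t u₀)) Filter.atTop (nhds 0) := by
  have h1 : Filter.Tendsto (fun t => dist (S ((t + b) + a) u₀) (S (t + b) u₀)) Filter.atTop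
      (nhds 0) := ha.comp (tendsto_atTop_add_const_right _ b tendsto_id)
  have h2 := h1.add hb
  rw [add_zero] at h2
  refine squeeze_zero (fun t => dist_nonneg) (fun t => ?_) h2
  have : t + (a + b) = (t + b) + a := by ring
  rw [this]
  exact dist_triangle _ _ _

/-- The ω-limit set of a point `z` under a dynamical system `S`:
the set of all limits of `S(tₙ)z` along sequences `tₙ → ∞`. -/
def omegaSet {Z : Type*} [MetricSpace Z] (S : ℝ → Z → Z) (z : Z) : Set Z :=
  {y : Z | ∃ tn : ℕ → ℝ, Filter.Tendsto tn Filter.atTop Filter.atTop ∧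
    Filter.Tendsto (fun n => S (tn n) z) Filter.atTop (nhds y)}

/-- Theorem 6.1.1: for a precompact trajectory, `ω(u₀) ⊆ 𝓕` (set of equilibria) is
equivalent to the asymptotic flatness conditions (2) and (3). -/
theorem stmt_10 {Z : Type*} [MetricSpace Z] [CompleteSpace Z]
    (S : ℝ → Z → Z)
    (hcont : ∀ t ≥ (0:ℝ), Continuous (S t))
    (hS0 : S 0 = id)
    (hSadd : ∀ s ≥ (0:ℝ), ∀ t ≥ (0:ℝ), S (t + s) = S t ∘ S s)
    (htraj : ∀ z : Z, ContinuousOn (fun t => S t z) (Set.Ici 0))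
    (u₀ : Z)
    (hcpt : IsCompact (closure ((fun t => S t u₀) '' Set.Ici 0))) :
    ((omegaSet S u₀ ⊆ {x : Z | ∀ t ≥ (0:ℝ), S t x = x}) ↔
      (∀ h > (0:ℝ), Filter.Tendsto (fun t => dist (S (t + h) u₀) (S t u₀))
        Filter.atTop (nhds 0))) ∧
    ((∀ h > (0:ℝ), Filter.Tendsto (fun t => dist (S (t + h) u₀) (S t u₀))
        Filter.atTop (nhds 0)) ↔
      (∃ α > (0:ℝ), ∀ h ∈ Set.Icc (0:ℝ) α,
        Filter.Tendsto (fun t => dist (S (t + h) u₀) (S t u₀))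
          Filter.atTop (nhds 0))) := by
  have hzero : Filter.Tendsto (fun t => dist (S (t + 0) u₀) (S t u₀)) Filter.atTop (nhds 0) := by
    simp only [add_zero, dist_self]
    exact tendsto_const_nhds
  constructor
  · constructor
    · -- (1) → (2)
      intro h1 h hh
      by_contra hnot
      rw [Metric.tendsto_atTop] at hnot
      push_neg at hnot
      obtain ⟨ε, hε, hseq⟩ := hnot
      choose t ht1 ht2 using fun N => hseq N
      set u : ℕ → ℝ := fun n => t (max n 0) with hu
      have hun : ∀ n : ℕ, (n : ℝ) ≤ u n := fun n => le_trans (le_max_left _ _) (ht1 _)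
      have hu0 : ∀ n : ℕ, (0:ℝ) ≤ u n := fun n => le_trans (le_max_right _ _) (ht1 _)
      have hmem : ∀ n : ℕ, S (u n) u₀ ∈ closure ((fun t => S t u₀) '' Set.Ici 0) :=
        fun n => subset_closure ⟨u n, hu0 n, rfl⟩
      obtain ⟨y, hy, φ, hφ, hlim⟩ := hcpt.tendsto_subseq hmem
      have htop : Filter.Tendsto (fun n => u (φ n)) Filter.atTop Filter.atTop := by
        apply tendsto_atTop_mono (fun n => hun (φ n))
        exact tendsto_natCast_atTop_atTop.comp hφ.tendsto_atTop
      have hyω : y ∈ omegaSet S u₀ := ⟨fun n => u (φ n), htop, hlim⟩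
      have hfix : S h y = y := h1 hyω h hh.le
      have hlim2 : Filter.Tendsto (fun n => S h (S (u (φ n)) u₀)) Filter.atTop (nhds y) := by
        have := ((hcont h hh.le).tendsto y).comp hlim
        rwa [hfix] at this
      have heq : ∀ n, S (u (φ n) + h) u₀ = S h (S (u (φ n)) u₀) := by
        intro n
        rw [add_comm, hSadd (u (φ n)) (hu0 _) h hh.le]
        rfl
      have hdist : Filter.Tendsto (fun n => dist (S (u (φ n) + h) u₀) (S (u (φ n)) u₀))
          Filter.atTop (nhds 0) := by
        have := hlim2.dist hlim
        simp only [dist_self] at this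
        exact this.congr (fun n => by rw [heq]; rfl)
      have hev := hdist.eventually (eventually_lt_nhds hε)
      obtain ⟨n, hn⟩ := hev.exists
      have : ε ≤ dist (S (u (φ n) + h) u₀) (S (u (φ n)) u₀) := by
        have := ht2 ((φ n : ℝ) ⊔ 0)
        simpa [u, Real.dist_eq, abs_of_nonneg (dist_nonneg (x := S (u (φ n) + h) u₀))] using this
      linarith
    · -- (2) → (1)
      intro h2 y hy t ht
      rcases eq_or_lt_of_le ht with rfl | ht'
      · rw [hS0]; rfl
      obtain ⟨tn, htn, hlim⟩ := hy
      have hev : ∀ᶠ n in Filter.atTop, (0:ℝ) ≤ tn n := htn.eventually_ge_atTop 0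
      have hlim1 : Filter.Tendsto (fun n => S t (S (tn n) u₀)) Filter.atTop (nhds (S t y)) :=
        ((hcont t ht).tendsto y).comp hlim
      have hlim2 : Filter.Tendsto (fun n => S (tn n + t) u₀) Filter.atTop (nhds (S t y)) := by
        apply hlim1.congr' 
        filter_upwards [hev] with n hn
        rw [add_comm, hSadd (tn n) hn t ht]
        rfl
      have hd : Filter.Tendsto (fun n => dist (S (tn n + t) u₀) (S (tn n) u₀))
          Filter.atTop (nhds 0) := (h2 t ht').comp htn
      have : Filter.Tendsto (fun n => S (tn n + t) u₀) Filter.atTop (nhds y) := by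
        apply hlim.congr_dist
        exact hd.congr (fun n => by rw [dist_comm])
      exact tendsto_nhds_unique hlim2 this
  · constructor
    · -- (2) → (3)
      intro h2
      refine ⟨1, one_pos, fun h hh => ?_⟩
      rcases eq_or_lt_of_le hh.1 with rfl | hpos
      · exact hzero
      · exact h2 h hpos
    · -- (3) → (2)
      rintro ⟨α, hα, h3⟩ h hh
      have key : ∀ n : ℕ, ∀ h : ℝ, 0 ≤ h → h ≤ n * α →
          Filter.Tendsto (fun t => dist (S (t + h) u₀) (S t u₀)) Filter.atTop (nhds 0) := by
        intro n
        induction n with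
        | zero =>
          intro h h0 hle
          simp only [Nat.cast_zero, zero_mul] at hle
          have : h = 0 := le_antisymm hle h0
          subst this
          exact hzero
        | succ n ih =>
          intro h h0 hle
          by_cases hcase : h ≤ α
          · exact h3 h ⟨h0, hcase⟩
          · push_neg at hcase
            have h1 : (0:ℝ) ≤ h - α := by linarith
            have h2' : h - α ≤ n * α := by
              push_cast at hle ⊢
              linarith
            have := dist_add_tendsto S u₀ (ih (h - α) h1 h2') (h3 α ⟨hα.le, le_refl α⟩)
            simpa using this
      obtain ⟨n, hn⟩ := exists_nat_ge (h / α)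
      have : h ≤ n * α := by
        rw [div_le_iff₀ hα] at hn
        linarith
      exact key n h hh.le this
end

section
/- Let f, g : ℝ → ℝ be locally Lipschitz continuous with g(v)·v > 0 for all v ≠ 0, and assume that for some ε ∈ (0,1] and δ > 0 one has g(v)·v ≥ δ·min{1, |v|^{3−ε}} for all v ∈ ℝ. Let u : [0,∞) → ℝ be a twice differentiable solution of u″ + g(u′) + f(u) = 0 such that u and u′ are bounded on [0,∞). Then there exists c ∈ ℝ with f(c) = 0 such that |u′(t)| + |u(t) − c| → 0 as t → ∞. -/
open Filter Set

private lemma antitoneOn_of_hasDerivAt_nonpos {h h' : ℝ → ℝ} {a b : ℝ}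
    (hd : ∀ t ∈ Icc a b, HasDerivAt h (h' t) t)
    (hle : ∀ t ∈ Ioo a b, h' t ≤ 0) : AntitoneOn h (Icc a b) := by
  apply antitoneOn_of_deriv_nonpos (convex_Icc a b)
  · exact fun t ht => (hd t ht).continuousAt.continuousWithinAt
  · intro t ht
    rw [interior_Icc] at ht
    exact ((hd t (Ioo_subset_Icc_self ht)).differentiableAt).differentiableWithinAt
  · intro t ht
    rw [interior_Icc] at ht
    rw [(hd t (Ioo_subset_Icc_self ht)).deriv]
    exact hle t ht

private lemma antitoneOn_of_hasDerivAt_nonpos' {h h' : ℝ → ℝ} {a b : ℝ}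
    (hc : ContinuousOn h (Icc a b))
    (hd : ∀ t ∈ Ioo a b, HasDerivAt h (h' t) t)
    (hle : ∀ t ∈ Ioo a b, h' t ≤ 0) : AntitoneOn h (Icc a b) := by
  apply antitoneOn_of_deriv_nonpos (convex_Icc a b) hc
  · intro t ht
    rw [interior_Icc] at ht
    exact ((hd t ht).differentiableAt).differentiableWithinAt
  · intro t ht
    rw [interior_Icc] at ht
    rw [(hd t ht).deriv]
    exact hle t ht

private lemma slope_le_of_deriv_le {h h' : ℝ → ℝ} {a b m : ℝ} (hab : a ≤ b)
    (hd : ∀ t ∈ Icc a b, HasDerivAt h (h' t) t)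
    (hle : ∀ t ∈ Ioo a b, h' t ≤ m) : h b ≤ h a + m * (b - a) := by
  have key : AntitoneOn (fun t => h t - m * t) (Icc a b) := by
    apply antitoneOn_of_hasDerivAt_nonpos (h' := fun t => h' t - m)
    · intro t ht
      exact (hd t ht).sub (by simpa using (hasDerivAt_id t).const_mul m)
    · intro t ht; have := hle t ht; linarith
  have := key (left_mem_Icc.2 hab) (right_mem_Icc.2 hab) hab
  simp only at this
  linarith

private lemma slope_ge_of_deriv_ge {h h' : ℝ → ℝ} {a b m : ℝ} (hab : a ≤ b)
    (hd : ∀ t ∈ Icc a b, HasDerivAt h (h' t) t)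
    (hle : ∀ t ∈ Ioo a b, m ≤ h' t) : h a + m * (b - a) ≤ h b := by
  have := slope_le_of_deriv_le (h := fun t => -h t) (h' := fun t => -h' t) (m := -m) hab
    (fun t ht => (hd t ht).neg) (fun t ht => by have := hle t ht; linarith)
  linarith

private lemma abs_sub_le_of_abs_deriv_le {h h' : ℝ → ℝ} {a b K : ℝ} (hab : a ≤ b)
    (hd : ∀ t ∈ Icc a b, HasDerivAt h (h' t) t)
    (hle : ∀ t ∈ Ioo a b, |h' t| ≤ K) : |h b - h a| ≤ K * (b - a) := by
  have h1 := slope_le_of_deriv_le hab hd (fun t ht => (abs_le.1 (hle t ht)).2)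
  have h2 := slope_ge_of_deriv_ge (m := -K) hab hd (fun t ht => (abs_le.1 (hle t ht)).1)
  rw [abs_le]; constructor <;> linarith

private lemma lemmaB {g : ℝ → ℝ} {ε δ η : ℝ} (hε0 : 0 < ε) (hδ : 0 < δ)
    (hη0 : 0 < η) (hη1 : η ≤ 1)
    (hgpos : ∀ v : ℝ, 0 < v → 0 < g v)
    (hglow : ∀ v : ℝ, 0 < v → v ≤ 1 → δ * v ^ (2 - ε) ≤ g v)
    {u u' u'' : ℝ → ℝ} {t₀ t₁ : ℝ} (h01 : t₀ ≤ t₁)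
    (hd1 : ∀ s ∈ Icc t₀ t₁, HasDerivAt u (u' s) s)
    (hd2 : ∀ s ∈ Icc t₀ t₁, HasDerivAt u' (u'' s) s)
    (hode : ∀ s ∈ Icc t₀ t₁, u'' s = - g (u' s))
    (hvb : ∀ s ∈ Icc t₀ t₁, |u' s| ≤ η) :
    u t₁ ≤ u t₀ + η ^ ε / (δ * ε) := by
  have hδε : 0 < δ * ε := mul_pos hδ hε0
  have hnn : 0 ≤ η ^ ε / (δ * ε) := div_nonneg (Real.rpow_nonneg hη0.le ε) hδε.le
  have hu'cont : ContinuousOn u' (Icc t₀ t₁) :=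
    fun s hs => (hd2 s hs).continuousAt.continuousWithinAt
  have hucont : ContinuousOn u (Icc t₀ t₁) :=
    fun s hs => (hd1 s hs).continuousAt.continuousWithinAt
  set Ψ : ℝ → ℝ := fun s => u s + (u' s) ^ ε / (δ * ε) with hΨdef
  -- bound on Ψ at a point with nonnegative velocity
  have hΨle : ∀ r ∈ Icc t₀ t₁, 0 ≤ u' r → Ψ r ≤ u r + η ^ ε / (δ * ε) := by
    intro r hr hpos
    have h1 : (u' r) ^ ε ≤ η ^ ε :=
      Real.rpow_le_rpow hpos (le_trans (le_abs_self _) (hvb r hr)) hε0.le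
    have h2 : (u' r) ^ ε / (δ * ε) ≤ η ^ ε / (δ * ε) := by gcongr
    simp only [hΨdef]
    linarith
  have hΨge : ∀ r ∈ Icc t₀ t₁, 0 ≤ u' r → u r ≤ Ψ r := by
    intro r hr hpos
    have : 0 ≤ (u' r) ^ ε / (δ * ε) := div_nonneg (Real.rpow_nonneg hpos ε) hδε.le
    simp only [hΨdef]
    linarith
  -- Ψ is decreasing along stretches of positive velocity
  have hPsiAnti : ∀ r₀ r₁ : ℝ, r₀ ∈ Icc t₀ t₁ → r₁ ∈ Icc t₀ t₁ → r₀ ≤ r₁ →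
      (∀ s ∈ Ico r₀ r₁, 0 < u' s) → Ψ r₁ ≤ Ψ r₀ := by
    intro r₀ r₁ hr₀ hr₁ hle hpos
    have hsub : Icc r₀ r₁ ⊆ Icc t₀ t₁ := Icc_subset_Icc hr₀.1 hr₁.2
    have hA : AntitoneOn Ψ (Icc r₀ r₁) := by
      apply antitoneOn_of_hasDerivAt_nonpos'
        (h' := fun s => u' s + ε * (u' s) ^ (ε - 1) * u'' s / (δ * ε))
      · apply ContinuousOn.add (hucont.mono hsub)
        exact ((Real.continuous_rpow_const hε0.le).comp_continuousOn
          (hu'cont.mono hsub)).div_const _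
      · intro s hs
        have hv : 0 < u' s := hpos s (Ioo_subset_Ico_self hs)
        have hpow : HasDerivAt (fun x : ℝ => x ^ ε) (ε * (u' s) ^ (ε - 1)) (u' s) :=
          Real.hasDerivAt_rpow_const (Or.inl hv.ne')
        have hcomp : HasDerivAt (fun y => (u' y) ^ ε) (ε * (u' s) ^ (ε - 1) * u'' s) s :=
          hpow.comp s (hd2 s (hsub (Ioo_subset_Icc_self hs)))
        exact (hd1 s (hsub (Ioo_subset_Icc_self hs))).add (hcomp.div_const _)
      · intro s hs
        have hsIcc : s ∈ Icc t₀ t₁ := hsub (Ioo_subset_Icc_self hs)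
        have hv : 0 < u' s := hpos s (Ioo_subset_Ico_self hs)
        have hv1 : u' s ≤ 1 := le_trans (le_trans (le_abs_self _) (hvb s hsIcc)) hη1
        set v := u' s with hvdef
        have hg2 : δ * v ^ (2 - ε) ≤ g v := hglow v hv hv1
        have hvp : 0 < v ^ (ε - 1) := Real.rpow_pos_of_pos hv _
        have hid : v ^ (ε - 1) * v ^ (2 - ε) = v := by
          rw [← Real.rpow_add hv]
          norm_num
        have key : δ * v ≤ v ^ (ε - 1) * g v := by
          have h2 : v ^ (ε - 1) * (δ * v ^ (2 - ε)) ≤ v ^ (ε - 1) * g v :=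
            mul_le_mul_of_nonneg_left hg2 hvp.le
          calc δ * v = v ^ (ε - 1) * (δ * v ^ (2 - ε)) := by
                rw [mul_left_comm, hid]
            _ ≤ v ^ (ε - 1) * g v := h2
        rw [hode s hsIcc]
        have hrw : ε * v ^ (ε - 1) * (-g v) / (δ * ε) = -(v ^ (ε - 1) * g v / δ) := by
          field_simp
        rw [hrw]
        have : v ≤ v ^ (ε - 1) * g v / δ := (le_div_iff₀ hδ).2 (by linarith)
        linarith
    exact hA (left_mem_Icc.2 hle) (right_mem_Icc.2 hle) hle
  -- no rise from nonpositive velocity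
  have hNoRise : ∀ r₀ ∈ Icc t₀ t₁, u' r₀ ≤ 0 → ∀ r ∈ Icc r₀ t₁, u' r ≤ 0 := by
    intro r₀ hr₀ hneg r hr
    by_contra hposr
    push_neg at hposr
    have hrIcc : r ∈ Icc t₀ t₁ := ⟨le_trans hr₀.1 hr.1, hr.2⟩
    have hr₀r : r₀ < r := by
      rcases lt_or_eq_of_le hr.1 with h | h
      · exact h
      · exact absurd hposr (by rw [← h]; linarith)
    set Z := Icc r₀ r ∩ u' ⁻¹' (Iic 0) with hZdef
    have hZne : Z.Nonempty := ⟨r₀, ⟨le_refl _, hr₀r.le⟩, hneg⟩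
    have hZbdd : BddAbove Z := ⟨r, fun q hq => hq.1.2⟩
    have hZclosed : IsClosed Z := by
      apply ContinuousOn.preimage_isClosed_of_isClosed
        (hu'cont.mono (Icc_subset_Icc hr₀.1 hrIcc.2)) isClosed_Icc isClosed_Iic
    set q₀ := sSup Z with hq₀def
    have hq₀mem : q₀ ∈ Z := hZclosed.csSup_mem hZne hZbdd
    have hq₀r : q₀ < r := by
      rcases lt_or_eq_of_le hq₀mem.1.2 with h | h
      · exact h
      · exact absurd (h ▸ hq₀mem.2) (by simp [hposr.not_ge])
    have hq₀Icc : q₀ ∈ Icc t₀ t₁ := ⟨le_trans hr₀.1 hq₀mem.1.1, le_trans hq₀mem.1.2 hrIcc.2⟩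
    have hmid : ∀ s ∈ Ioo q₀ r, 0 < u' s := by
      intro s hs
      by_contra hc
      push_neg at hc
      have : s ∈ Z := ⟨⟨le_trans hq₀mem.1.1 hs.1.le, hs.2.le⟩, hc⟩
      exact absurd (le_csSup hZbdd this) (not_le.2 hs.1)
    have hanti : AntitoneOn u' (Icc q₀ r) := by
      apply antitoneOn_of_hasDerivAt_nonpos
        (hd := fun s hs => hd2 s ⟨le_trans hq₀Icc.1 hs.1, le_trans hs.2 hrIcc.2⟩)
      intro s hs
      have hsIcc : s ∈ Icc t₀ t₁ := ⟨le_trans hq₀Icc.1 hs.1.le, le_trans hs.2.le hrIcc.2⟩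
      rw [hode s hsIcc]
      have := hgpos (u' s) (hmid s hs)
      linarith
    have := hanti (left_mem_Icc.2 hq₀r.le) (right_mem_Icc.2 hq₀r.le) hq₀r.le
    have hq₀neg : u' q₀ ≤ 0 := hq₀mem.2
    linarith
  -- main case split
  by_cases hP : (Icc t₀ t₁ ∩ u' ⁻¹' (Iic 0)).Nonempty
  · set P := Icc t₀ t₁ ∩ u' ⁻¹' (Iic 0) with hPdef
    have hPbdd : BddBelow P := ⟨t₀, fun q hq => hq.1.1⟩
    have hPclosed : IsClosed P :=
      ContinuousOn.preimage_isClosed_of_isClosed hu'cont isClosed_Icc isClosed_Iic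
    set τ := sInf P with hτdef
    have hτmem : τ ∈ P := hPclosed.csInf_mem hP hPbdd
    have hτIcc : τ ∈ Icc t₀ t₁ := hτmem.1
    have hτneg : u' τ ≤ 0 := hτmem.2
    have h1 : ∀ s ∈ Ioo τ t₁, u' s ≤ 0 := fun s hs =>
      hNoRise τ hτIcc hτneg s ⟨hs.1.le, hs.2.le⟩
    have huanti : AntitoneOn u (Icc τ t₁) := by
      apply antitoneOn_of_hasDerivAt_nonpos
        (hd := fun s hs => hd1 s ⟨le_trans hτIcc.1 hs.1, hs.2⟩)
      exact h1
    have hu1le : u t₁ ≤ u τ :=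
      huanti (left_mem_Icc.2 hτIcc.2) (right_mem_Icc.2 hτIcc.2) hτIcc.2
    rcases eq_or_lt_of_le hτIcc.1 with heq0 | hlt
    · rw [← heq0] at hu1le
      linarith
    · have hpos' : ∀ s ∈ Ico t₀ τ, 0 < u' s := by
        intro s hs
        by_contra hc
        push_neg at hc
        have : s ∈ P := ⟨⟨hs.1, le_trans hs.2.le hτIcc.2⟩, hc⟩
        exact absurd (csInf_le hPbdd this) (not_le.2 hs.2)
      have hψ : Ψ τ ≤ Ψ t₀ :=
        hPsiAnti t₀ τ (left_mem_Icc.2 h01) hτIcc hτIcc.1 hpos'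
      have hu'τ : u' τ = 0 := by
        refine le_antisymm hτneg ?_
        have hT : Tendsto u' (nhdsWithin τ (Iio τ)) (nhds (u' τ)) :=
          (hd2 τ hτIcc).continuousAt.continuousWithinAt.tendsto
        refine ge_of_tendsto hT ?_
        filter_upwards [Ioo_mem_nhdsLT_of_mem ⟨hlt, le_refl τ⟩] with s hs
        exact (hpos' s ⟨hs.1.le, hs.2⟩).le
      have hΨτ : Ψ τ = u τ := by
        simp only [hΨdef, hu'τ, Real.zero_rpow hε0.ne', zero_div, add_zero]
      have h2 : Ψ t₀ ≤ u t₀ + η ^ ε / (δ * ε) :=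
        hΨle t₀ (left_mem_Icc.2 h01) (hpos' t₀ ⟨le_refl _, hlt⟩).le
      simp only [hΨdef] at hψ h2 hΨτ
      linarith
  · have hpos' : ∀ s ∈ Icc t₀ t₁, 0 < u' s := by
      intro s hs
      by_contra hc
      push_neg at hc
      exact hP ⟨s, hs, hc⟩
    have hψ : Ψ t₁ ≤ Ψ t₀ :=
      hPsiAnti t₀ t₁ (left_mem_Icc.2 h01) (right_mem_Icc.2 h01) h01
        (fun s hs => hpos' s (Ico_subset_Icc_self hs))
    have h2 : Ψ t₀ ≤ u t₀ + η ^ ε / (δ * ε) :=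
      hΨle t₀ (left_mem_Icc.2 h01) (hpos' t₀ (left_mem_Icc.2 h01)).le
    have h3 : u t₁ ≤ Ψ t₁ :=
      hΨge t₁ (right_mem_Icc.2 h01) (hpos' t₁ (right_mem_Icc.2 h01)).le
    simp only [hΨdef] at hψ h2 h3
    linarith

/-- Theorem 8.2.1: convergence for the scalar second order ODE `u'' + g(u') + f(u) = 0`
when the damping satisfies `g(v)·v ≥ δ·min{1, |v|^{3-ε}}`. -/
theorem stmt_11 (f g : ℝ → ℝ) (hf : LocallyLipschitz f) (hg : LocallyLipschitz g)
    (hgv : ∀ v : ℝ, v ≠ 0 → 0 < g v * v)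
    (ε δ : ℝ) (hε : ε ∈ Set.Ioc (0:ℝ) 1) (hδ : 0 < δ)
    (hlow : ∀ v : ℝ, δ * min 1 (|v| ^ (3 - ε)) ≤ g v * v)
    (u u' u'' : ℝ → ℝ)
    (hu1 : ∀ t ≥ (0:ℝ), HasDerivAt u (u' t) t)
    (hu2 : ∀ t ≥ (0:ℝ), HasDerivAt u' (u'' t) t)
    (heq : ∀ t ≥ (0:ℝ), u'' t + g (u' t) + f (u t) = 0)
    (hbdd : ∃ M : ℝ, ∀ t ≥ (0:ℝ), |u t| ≤ M ∧ |u' t| ≤ M) :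
    ∃ c : ℝ, f c = 0 ∧
      Filter.Tendsto (fun t => |u' t| + |u t - c|) Filter.atTop (nhds 0) := by
  obtain ⟨M, hM⟩ := hbdd
  obtain ⟨hε0, hε1⟩ := hε
  have hfc : Continuous f := hf.continuous
  have hgc : Continuous g := hg.continuous
  have hM0 : 0 ≤ M := le_trans (abs_nonneg _) (hM 0 le_rfl).1
  have hδε : 0 < δ * ε := mul_pos hδ hε0
  -- g is positive on positive reals, and g 0 = 0
  have hgpos : ∀ v : ℝ, 0 < v → 0 < g v := by
    intro v hv
    by_contra h
    push_neg at h
    have := hgv v (ne_of_gt hv)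
    nlinarith
  have hgneg : ∀ v : ℝ, v < 0 → g v < 0 := by
    intro v hv
    by_contra h
    push_neg at h
    have := hgv v (ne_of_lt hv)
    nlinarith
  have hg0 : g 0 = 0 := by
    have ht1 : Tendsto g (nhdsWithin 0 (Ioi 0)) (nhds (g 0)) :=
      (hgc.continuousAt.continuousWithinAt : ContinuousWithinAt g (Ioi 0) 0).tendsto
    have h1 : 0 ≤ g 0 := by
      refine ge_of_tendsto ht1 ?_
      filter_upwards [self_mem_nhdsWithin] with v hv
      exact (hgpos v hv).le
    have ht2 : Tendsto g (nhdsWithin 0 (Iio 0)) (nhds (g 0)) :=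
      (hgc.continuousAt.continuousWithinAt : ContinuousWithinAt g (Iio 0) 0).tendsto
    have h2 : g 0 ≤ 0 := by
      refine le_of_tendsto ht2 ?_
      filter_upwards [self_mem_nhdsWithin] with v hv
      exact (hgneg v hv).le
    linarith
  have hgg : ∀ v : ℝ, 0 ≤ g v * v := by
    intro v
    refine le_trans ?_ (hlow v)
    have h1 : (0:ℝ) ≤ min 1 (|v| ^ (3 - ε)) :=
      le_min zero_le_one (Real.rpow_nonneg (abs_nonneg v) _)
    positivity
  -- the primitive F of f and the energy E
  set F : ℝ → ℝ := fun x => ∫ s in (0:ℝ)..x, f s with hFdef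
  have hF : ∀ x : ℝ, HasDerivAt F (f x) x := fun x =>
    intervalIntegral.integral_hasDerivAt_right (hfc.intervalIntegrable 0 x)
      (hfc.stronglyMeasurableAtFilter _ _) hfc.continuousAt
  have hFc : Continuous F := continuous_iff_continuousAt.2 fun x => (hF x).continuousAt
  set E : ℝ → ℝ := fun t => (u' t) ^ 2 / 2 + F (u t) with hEdef
  have hE : ∀ t ∈ Ici (0:ℝ), HasDerivAt E (-(g (u' t) * u' t)) t := by
    intro t ht
    have h1 : HasDerivAt (fun s => (u' s) ^ 2 / 2) (u' t * u'' t) t := by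
      have h := ((hu2 t ht).pow 2).div_const 2
      refine h.congr_deriv (Eq.symm ?_)
      simp
      ring
    have h2 : HasDerivAt (fun s => F (u s)) (f (u t) * u' t) t := (hF (u t)).comp t (hu1 t ht)
    have h3 := h1.add h2
    refine h3.congr_deriv (Eq.symm ?_)
    have h4 := heq t ht
    linear_combination (-(u' t)) * h4
  have hEanti : AntitoneOn E (Ici 0) := by
    apply antitoneOn_of_deriv_nonpos (convex_Ici 0)
    · exact fun t ht => (hE t ht).continuousAt.continuousWithinAt
    · intro t ht
      rw [interior_Ici] at ht
      exact (hE t (mem_Ici.2 (le_of_lt ht))).differentiableAt.differentiableWithinAt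
    · intro t ht
      rw [interior_Ici] at ht
      rw [(hE t (mem_Ici.2 (le_of_lt ht))).deriv]
      have := hgg (u' t)
      linarith
  -- E is bounded below and has a limit El
  obtain ⟨x₀, _, hx₀⟩ := isCompact_Icc.exists_isMinOn (α := ℝ)
    (⟨0, by constructor <;> linarith⟩ : (Icc (-M) M).Nonempty) hFc.continuousOn
  set m := F x₀ with hmdef
  have hm : ∀ x ∈ Icc (-M) M, m ≤ F x := fun x hx => hx₀ hx
  have hElb : ∀ t ≥ (0:ℝ), m ≤ E t := by
    intro t ht
    have h1 := hm (u t) (mem_Icc.2 (abs_le.1 (hM t ht).1))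
    have h2 : 0 ≤ (u' t) ^ 2 / 2 := by positivity
    simp only [hEdef]
    linarith
  set Et : ℝ → ℝ := fun t => E (max t 0) with hEtdef
  have hEtanti : Antitone Et := fun s t hst =>
    hEanti (mem_Ici.2 (le_max_right s 0)) (mem_Ici.2 (le_max_right t 0))
      (max_le_max hst (le_refl 0))
  have hbb : BddBelow (range Et) := by
    refine ⟨m, ?_⟩
    rintro x ⟨t, rfl⟩
    exact hElb _ (le_max_right t 0)
  set El := ⨅ t, Et t with hEldef
  have hEtend : Tendsto E atTop (nhds El) := by
    apply (tendsto_atTop_ciInf hEtanti hbb).congr'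
    filter_upwards [eventually_ge_atTop (0:ℝ)] with t ht
    simp only [hEtdef, max_eq_left ht]
  have hEge : ∀ t ≥ (0:ℝ), El ≤ E t := by
    intro t ht
    apply le_of_tendsto hEtend
    filter_upwards [eventually_ge_atTop t] with s hs
    exact hEanti (mem_Ici.2 ht) (mem_Ici.2 (le_trans ht hs)) hs
  -- bound on u''
  obtain ⟨Kf, hKf⟩ := isCompact_Icc.exists_bound_of_continuousOn
    (hfc.continuousOn : ContinuousOn f (Icc (-M) M))
  obtain ⟨Kg, hKg⟩ := isCompact_Icc.exists_bound_of_continuousOn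
    (hgc.continuousOn : ContinuousOn g (Icc (-M) M))
  set K := |Kf| + |Kg| + 1 with hKdef
  have hK0 : 0 < K := by positivity
  have hKb : ∀ t ≥ (0:ℝ), |u'' t| ≤ K := by
    intro t ht
    have h1 : |f (u t)| ≤ Kf := by
      have := hKf (u t) (mem_Icc.2 (abs_le.1 (hM t ht).1))
      simpa [Real.norm_eq_abs] using this
    have h2 : |g (u' t)| ≤ Kg := by
      have := hKg (u' t) (mem_Icc.2 (abs_le.1 (hM t ht).2))
      simpa [Real.norm_eq_abs] using this
    have h3 : u'' t = -(g (u' t)) - f (u t) := by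
      have := heq t ht
      linarith
    rw [h3]
    calc |(-(g (u' t))) - f (u t)| ≤ |(-(g (u' t)))| + |f (u t)| := abs_sub _ _
      _ = |g (u' t)| + |f (u t)| := by rw [abs_neg]
      _ ≤ |Kg| + |Kf| := by
          have h5 := le_abs_self Kg
          have h6 := le_abs_self Kf
          linarith
      _ ≤ K := by simp only [hKdef]; linarith
  -- u' tends to zero
  have hu'0 : Tendsto u' atTop (nhds 0) := by
    by_contra hcon
    rw [Metric.tendsto_atTop] at hcon
    push_neg at hcon
    obtain ⟨η, hη0, hfreq⟩ := hcon
    set ρ := δ * min 1 ((η / 2) ^ (3 - ε)) with hρdef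
    have hρ0 : 0 < ρ :=
      mul_pos hδ (lt_min one_pos (Real.rpow_pos_of_pos (by linarith) _))
    set L := η / (2 * K) with hLdef
    have hL0 : 0 < L := by positivity
    have hKL : K * L = η / 2 := by
      field_simp [hLdef]
      rw [hLdef]; field_simp [hK0.ne']
    obtain ⟨T, hT⟩ := eventually_atTop.1
      ((hEtend.eventually (gt_mem_nhds (by have := mul_pos hρ0 hL0; linarith : El < El + ρ * L))).and
        (eventually_ge_atTop (0:ℝ)))
    obtain ⟨t, htT, htd⟩ := hfreq T
    obtain ⟨hEt, ht0⟩ := hT t htT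
    have hdist : η ≤ |u' t| := by simpa [Real.dist_eq] using htd
    have hmid : ∀ s ∈ Icc t (t + L), η / 2 ≤ |u' s| := by
      intro s hs
      have h1 : |u' s - u' t| ≤ K * (s - t) := by
        apply abs_sub_le_of_abs_deriv_le hs.1
        · exact fun r hr => hu2 r (le_trans ht0 hr.1)
        · exact fun r hr => hKb r (le_trans ht0 hr.1.le)
      have h2 : K * (s - t) ≤ K * L := by
        apply mul_le_mul_of_nonneg_left _ hK0.le
        linarith [hs.2]
      have h3 : |u' t| - |u' s| ≤ |u' s - u' t| := by
        have := abs_sub_abs_le_abs_sub (u' t) (u' s)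
        rw [abs_sub_comm] at this
        linarith
      linarith [hKL ▸ le_trans h1 h2]
    have hdec : E (t + L) ≤ E t + (-ρ) * ((t + L) - t) := by
      apply slope_le_of_deriv_le (by linarith)
      · exact fun r hr => hE r (le_trans ht0 hr.1)
      · intro r hr
        have hr' : r ∈ Icc t (t + L) := Ioo_subset_Icc_self hr
        have h1 := hlow (u' r)
        have h2 : (η / 2) ^ (3 - ε) ≤ |u' r| ^ (3 - ε) :=
          Real.rpow_le_rpow (by linarith) (hmid r hr') (by linarith)
        have h3 : min 1 ((η / 2) ^ (3 - ε)) ≤ min 1 (|u' r| ^ (3 - ε)) :=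
          min_le_min le_rfl h2
        have h4 : ρ ≤ g (u' r) * u' r := by
          refine le_trans ?_ h1
          simp only [hρdef]
          exact mul_le_mul_of_nonneg_left h3 hδ.le
        linarith
    have hrw : E t + (-ρ) * ((t + L) - t) = E t - ρ * L := by ring
    have h5 := hEge (t + L) (by linarith)
    linarith [hrw ▸ hdec]
  -- liminf and limsup
  have hbdd_le : IsBoundedUnder (· ≤ ·) atTop u := by
    refine ⟨M, eventually_map.2 ?_⟩
    filter_upwards [eventually_ge_atTop (0:ℝ)] with t ht
    exact (abs_le.1 (hM t ht).1).2
  have hbdd_ge : IsBoundedUnder (· ≥ ·) atTop u := by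
    refine ⟨-M, eventually_map.2 ?_⟩
    filter_upwards [eventually_ge_atTop (0:ℝ)] with t ht
    exact (abs_le.1 (hM t ht).1).1
  set A := liminf u atTop with hAdef
  set B := limsup u atTop with hBdef
  have hAB : A ≤ B := liminf_le_limsup hbdd_le hbdd_ge
  rcases eq_or_lt_of_le hAB with hABeq | hABlt
  · -- the solution converges
    have hut : Tendsto u atTop (nhds B) :=
      tendsto_of_liminf_eq_limsup hABeq rfl hbdd_le hbdd_ge
    have hu''tend : Tendsto u'' atTop (nhds (-f B)) := by
      have h1 : Tendsto (fun t => -g (u' t) - f (u t)) atTop (nhds (-g 0 - f B)) :=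
        ((hgc.continuousAt.tendsto.comp hu'0).neg).sub (hfc.continuousAt.tendsto.comp hut)
      rw [hg0, neg_zero, zero_sub] at h1
      apply h1.congr'
      filter_upwards [eventually_ge_atTop (0:ℝ)] with t ht
      have := heq t ht
      linarith
    have hfB : f B = 0 := by
      by_contra hne
      rcases lt_or_gt_of_ne hne with hlt | hgt
      · -- f B < 0 : u'' converges to -f B > 0
        set q := -f B with hqdef
        have hq : 0 < q := by simp only [hqdef]; linarith
        obtain ⟨T, hT⟩ := eventually_atTop.1
          (((hu''tend.eventually (eventually_gt_nhds (by linarith : q / 2 < q))).and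
            ((Metric.tendsto_nhds.1 hu'0 (q / 8) (by linarith)).and
              (eventually_ge_atTop (0:ℝ)))))
        have h1 : u' T + (q / 2) * ((T + 1) - T) ≤ u' (T + 1) := by
          apply slope_ge_of_deriv_ge (by linarith)
          · exact fun r hr => hu2 r (le_trans (hT T le_rfl).2.2 hr.1)
          · exact fun r hr => (hT r hr.1.le).1.le
        have h2 := (hT T le_rfl).2.1
        have h3 := (hT (T + 1) (by linarith)).2.1
        rw [Real.dist_eq, sub_zero] at h2 h3
        have h2' := abs_lt.1 h2
        have h3' := abs_lt.1 h3
        have : (T + 1) - T = 1 := by ring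
        rw [this, mul_one] at h1
        linarith [h2'.1, h2'.2, h3'.1, h3'.2]
      · -- f B > 0 : u'' converges to -f B < 0
        set q := f B with hqdef
        have hq : 0 < q := hgt
        obtain ⟨T, hT⟩ := eventually_atTop.1
          (((hu''tend.eventually (eventually_lt_nhds (by linarith : -f B < -(q / 2)))).and
            ((Metric.tendsto_nhds.1 hu'0 (q / 8) (by linarith)).and
              (eventually_ge_atTop (0:ℝ)))))
        have h1 : u' (T + 1) ≤ u' T + (-(q / 2)) * ((T + 1) - T) := by
          apply slope_le_of_deriv_le (by linarith)
          · exact fun r hr => hu2 r (le_trans (hT T le_rfl).2.2 hr.1)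
          · exact fun r hr => (hT r hr.1.le).1.le
        have h2 := (hT T le_rfl).2.1
        have h3 := (hT (T + 1) (by linarith)).2.1
        rw [Real.dist_eq, sub_zero] at h2 h3
        have h2' := abs_lt.1 h2
        have h3' := abs_lt.1 h3
        have hrw : u' T + (-(q / 2)) * ((T + 1) - T) = u' T - q / 2 := by ring
        rw [hrw] at h1
        linarith [h2'.1, h2'.2, h3'.1, h3'.2]
    refine ⟨B, hfB, ?_⟩
    have h1 : Tendsto (fun t => |u' t|) atTop (nhds 0) := by
      simpa using hu'0.abs
    have h2 : Tendsto (fun t => |u t - B|) atTop (nhds 0) := by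
      have := (hut.sub_const B).abs
      simpa using this
    simpa using h1.add h2
  · -- liminf < limsup : impossible
    exfalso
    -- u attains every intermediate value at arbitrarily large times
    have hcross : ∀ x, A < x → x < B → ∀ T : ℝ, ∃ t, T ≤ t ∧ 0 ≤ t ∧ u t = x := by
      intro x hAx hxB T
      obtain ⟨t₁, ⟨hu1x, ht₁T⟩⟩ :=
        ((frequently_lt_of_liminf_lt hbdd_le.isCoboundedUnder_ge hAx).and_eventually
          (eventually_ge_atTop (max T 0))).exists
      obtain ⟨t₂, ⟨hu2x, ht₂t₁⟩⟩ :=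
        ((frequently_lt_of_lt_limsup hbdd_ge.isCoboundedUnder_le hxB).and_eventually
          (eventually_ge_atTop t₁)).exists
      have hucont : ContinuousOn u (Icc t₁ t₂) := fun s hs =>
        (hu1 s (le_trans (le_trans (le_max_right T 0) ht₁T) hs.1)).continuousAt.continuousWithinAt
      have hmem : x ∈ Icc (u t₁) (u t₂) := ⟨hu1x.le, hu2x.le⟩
      obtain ⟨t, htmem, htx⟩ := intermediate_value_Icc ht₂t₁ hucont hmem
      exact ⟨t, le_trans (le_trans (le_max_left T 0) ht₁T) htmem.1,
        le_trans (le_trans (le_max_right T 0) ht₁T) htmem.1, htx⟩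
    -- F is constant equal to El on (A, B)
    have hFconst : ∀ x, A < x → x < B → F x = El := by
      intro x hAx hxB
      by_contra hne
      have habs : 0 < |F x - El| := abs_pos.2 (sub_ne_zero.2 hne)
      set e := |F x - El| with hedef
      have hsq : Tendsto (fun t => (u' t) ^ 2 / 2) atTop (nhds 0) := by
        have := (hu'0.mul hu'0).div_const 2
        simp only [mul_zero, zero_div] at this
        apply this.congr
        intro t
        ring
      obtain ⟨T, hT⟩ := eventually_atTop.1
        ((Metric.tendsto_nhds.1 hEtend (e / 2) (by linarith)).and
          (Metric.tendsto_nhds.1 hsq (e / 2) (by linarith)))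
      obtain ⟨t, htT, ht0, htx⟩ := hcross x hAx hxB T
      obtain ⟨hc1, hc2⟩ := hT t htT
      rw [Real.dist_eq] at hc1 hc2
      rw [sub_zero] at hc2
      have h1 : E t = (u' t) ^ 2 / 2 + F x := by rw [← htx]
      have h2 : F x - El = (E t - El) - (u' t) ^ 2 / 2 := by rw [h1]; ring
      have h3 : |F x - El| ≤ |E t - El| + |(u' t) ^ 2 / 2| := by
        rw [h2]
        exact abs_sub _ _
      linarith
    -- hence f vanishes on (A, B)
    have hf0 : ∀ x, A < x → x < B → f x = 0 := by
      intro x hAx hxB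
      have hev : F =ᶠ[nhds x] fun _ => El := by
        filter_upwards [isOpen_Ioo.mem_nhds (⟨hAx, hxB⟩ : x ∈ Ioo A B)] with y hy
        exact hFconst y hy.1 hy.2
      have h0 : HasDerivAt F 0 x :=
        (hasDerivAt_const x El).congr_of_eventuallyEq hev
      exact (hF x).unique h0
    -- the crossing argument
    set l := (B - A) / 3 with hldef
    have hl0 : 0 < l := by simp only [hldef]; linarith
    set a' := A + l with ha'def
    set b' := A + 2 * l with hb'def
    have hab' : a' < b' := by simp only [ha'def, hb'def]; linarith
    have hb'B : b' < B := by simp only [hb'def, hldef]; linarith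
    have hAa' : A < a' := by simp only [ha'def]; linarith
    set c0 := δ * ε * (l / 2) with hc0def
    have hc0 : 0 < c0 := by positivity
    set η := min 1 (c0 ^ (1 / ε)) with hηdef
    have hη0 : 0 < η := lt_min one_pos (Real.rpow_pos_of_pos hc0 _)
    have hη1 : η ≤ 1 := min_le_left _ _
    have hηkey : η ^ ε / (δ * ε) ≤ l / 2 := by
      have h1 : η ^ ε ≤ (c0 ^ (1 / ε)) ^ ε :=
        Real.rpow_le_rpow hη0.le (min_le_right _ _) hε0.le
      have h2 : (c0 ^ (1 / ε)) ^ ε = c0 := by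
        rw [← Real.rpow_mul hc0.le, one_div_mul_cancel hε0.ne', Real.rpow_one]
      rw [div_le_iff₀ hδε]
      calc η ^ ε ≤ c0 := h2 ▸ h1
        _ = l / 2 * (δ * ε) := by simp only [hc0def]; ring
    -- lower bound for g on (0, 1]
    have hglow : ∀ v : ℝ, 0 < v → v ≤ 1 → δ * v ^ (2 - ε) ≤ g v := by
      intro v hv hv1
      have h1 := hlow v
      rw [abs_of_pos hv] at h1
      have h2 : v ^ (3 - ε) ≤ 1 := Real.rpow_le_one hv.le hv1 (by linarith)
      rw [min_eq_right h2] at h1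
      have h3 : v ^ (3 - ε) = v ^ (2 - ε) * v := by
        have : (3:ℝ) - ε = (2 - ε) + 1 := by ring
        rw [this, Real.rpow_add hv, Real.rpow_one]
      rw [h3] at h1
      have h4 : δ * v ^ (2 - ε) * v ≤ g v * v := by linarith [h1]; 
      exact le_of_mul_le_mul_right h4 hv
    -- eventually the velocity is at most η
    obtain ⟨T₀, hT₀⟩ := eventually_atTop.1
      ((Metric.tendsto_nhds.1 hu'0 η hη0).and (eventually_ge_atTop (0:ℝ)))
    have hT₀' : ∀ t ≥ T₀, |u' t| ≤ η ∧ 0 ≤ t := by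
      intro t ht
      obtain ⟨h1, h2⟩ := hT₀ t ht
      rw [Real.dist_eq, sub_zero] at h1
      exact ⟨h1.le, h2⟩
    -- find the crossing interval
    obtain ⟨tl, ⟨hutl, htlT₀⟩⟩ :=
      ((frequently_lt_of_liminf_lt hbdd_le.isCoboundedUnder_ge hAa').and_eventually
        (eventually_ge_atTop T₀)).exists
    obtain ⟨t₂, ⟨hut₂, ht₂tl⟩⟩ :=
      ((frequently_lt_of_lt_limsup hbdd_ge.isCoboundedUnder_le hb'B).and_eventually
        (eventually_ge_atTop tl)).exists
    have hucont : ContinuousOn u (Icc tl t₂) := fun s hs =>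
      (hu1 s (hT₀' s (le_trans htlT₀ hs.1)).2).continuousAt.continuousWithinAt
    -- first hitting time of b'
    have hb'mem : b' ∈ Icc (u tl) (u t₂) := ⟨by linarith, hut₂.le⟩
    obtain ⟨r, hrmem, hrb'⟩ := intermediate_value_Icc ht₂tl hucont hb'mem
    set S1 := Icc tl t₂ ∩ u ⁻¹' {b'} with hS1def
    have hS1ne : S1.Nonempty := ⟨r, hrmem, hrb'⟩
    have hS1closed : IsClosed S1 :=
      hucont.preimage_isClosed_of_isClosed isClosed_Icc isClosed_singleton
    have hS1bdd : BddBelow S1 := ⟨tl, fun q hq => hq.1.1⟩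
    set tb := sInf S1 with htbdef
    have htbmem : tb ∈ S1 := hS1closed.csInf_mem hS1ne hS1bdd
    have hutb : u tb = b' := htbmem.2
    have hbefore : ∀ s ∈ Ico tl tb, u s < b' := by
      intro s hs
      by_contra hc
      push_neg at hc
      rcases eq_or_lt_of_le hc with hceq | hclt
      · exact absurd (csInf_le hS1bdd ⟨⟨hs.1, le_trans hs.2.le htbmem.1.2⟩, hceq.symm⟩)
          (not_le.2 hs.2)
      · have hmem2 : b' ∈ Icc (u tl) (u s) := ⟨by linarith, hclt.le⟩
        obtain ⟨r', hr'mem, hr'⟩ := intermediate_value_Icc hs.1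
          (hucont.mono (Icc_subset_Icc le_rfl (le_trans hs.2.le htbmem.1.2))) hmem2
        exact absurd (csInf_le hS1bdd ⟨⟨hr'mem.1,
          le_trans hr'mem.2 (le_trans hs.2.le htbmem.1.2)⟩, hr'⟩)
          (not_le.2 (lt_of_le_of_lt hr'mem.2 hs.2))
    -- last hitting time of a' before tb
    have ha'mem : a' ∈ Icc (u tl) (u tb) := ⟨hutl.le, by rw [hutb]; linarith⟩
    obtain ⟨r2, hr2mem, hr2⟩ := intermediate_value_Icc htbmem.1.1
      (hucont.mono (Icc_subset_Icc le_rfl htbmem.1.2)) ha'mem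
    set S2 := Icc tl tb ∩ u ⁻¹' {a'} with hS2def
    have hS2ne : S2.Nonempty := ⟨r2, hr2mem, hr2⟩
    have hS2closed : IsClosed S2 :=
      (hucont.mono (Icc_subset_Icc le_rfl htbmem.1.2)).preimage_isClosed_of_isClosed
        isClosed_Icc isClosed_singleton
    have hS2bdd : BddAbove S2 := ⟨tb, fun q hq => hq.1.2⟩
    set ta := sSup S2 with htadef
    have htamem : ta ∈ S2 := hS2closed.csSup_mem hS2ne hS2bdd
    have huta : u ta = a' := htamem.2
    have hafter : ∀ s ∈ Ioc ta tb, a' < u s := by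
      intro s hs
      by_contra hc
      push_neg at hc
      rcases eq_or_lt_of_le hc with hceq | hclt
      · exact absurd (le_csSup hS2bdd ⟨⟨le_trans htamem.1.1 hs.1.le, hs.2⟩, hceq⟩)
          (not_le.2 hs.1)
      · have hmem2 : a' ∈ Icc (u s) (u tb) := ⟨hclt.le, by rw [hutb]; linarith⟩
        obtain ⟨r', hr'mem, hr'⟩ := intermediate_value_Icc hs.2
          (hucont.mono (Icc_subset_Icc (le_trans htamem.1.1 hs.1.le) htbmem.1.2)) hmem2
        exact absurd (le_csSup hS2bdd ⟨⟨le_trans htamem.1.1 (le_trans hs.1.le hr'mem.1),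
          hr'mem.2⟩, hr'⟩) (not_le.2 (lt_of_lt_of_le hs.1 hr'mem.1))
    have htatb : ta < tb := by
      rcases eq_or_lt_of_le htamem.1.2 with h | h
      · exfalso
        rw [h, hutb] at huta
        linarith
      · exact h
    -- all points of [ta, tb] lie in [a', b'] and times are ≥ 0 with small velocity
    have hrange : ∀ s ∈ Icc ta tb, a' ≤ u s ∧ u s ≤ b' := by
      intro s hs
      constructor
      · rcases eq_or_lt_of_le hs.1 with h | h
        · rw [← h, huta]
        · exact (hafter s ⟨h, hs.2⟩).le
      · rcases eq_or_lt_of_le hs.2 with h | h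
        · rw [h, hutb]
        · exact (hbefore s ⟨le_trans htamem.1.1 hs.1, h⟩).le
    have hsge : ∀ s ∈ Icc ta tb, T₀ ≤ s := fun s hs =>
      le_trans htlT₀ (le_trans htamem.1.1 hs.1)
    have hs0 : ∀ s ∈ Icc ta tb, (0:ℝ) ≤ s := fun s hs => (hT₀' s (hsge s hs)).2
    -- apply the key lemma
    have hmain := lemmaB hε0 hδ hη0 hη1 hgpos hglow htatb.le
      (fun s hs => hu1 s (hs0 s hs)) (fun s hs => hu2 s (hs0 s hs))
      (fun s hs => by
        have h1 := heq s (hs0 s hs)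
        have h2 := hrange s hs
        have h3 : f (u s) = 0 := hf0 (u s) (lt_of_lt_of_le hAa' h2.1)
          (lt_of_le_of_lt h2.2 hb'B)
        linarith)
      (fun s hs => (hT₀' s (hsge s hs)).1)
    rw [huta, hutb] at hmain
    have : b' - a' = l := by simp only [ha'def, hb'def]; ring
    linarith
end

section
/- Let f, g : ℝ → ℝ be locally Lipschitz continuous with g(v)·v > 0 for all v ≠ 0. Assume there exist a < b and a constant C > 0 such that f(s) < 0 for s < a, f(s) = 0 for s ∈ [a,b], f(s) > 0 for s > b, and |g(v)| ≤ C·v² for all |v| ≤ 1. Then for every bounded, non-constant, twice differentiable solution u : [0,∞) → ℝ of u″ + g(u′) + f(u) = 0, there exist a sequence t_n → ∞ with u(t_n) < a for all n, and a sequence θ_n → ∞ with u(θ_n) > b for all n. In particular u does not converge. -/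
open Filter Set intervalIntegral

/-- comparison: if `w' ≥ -C w²` whenever `0 < w ≤ 1`, and `w t₀ > η`, then
`w` stays above `η / (1 + 2Cη(t-t₀))`. -/
lemma noTouch {C η t₀ : ℝ} (hC : 0 < C) (w w' : ℝ → ℝ)
    (hw : ∀ t ≥ t₀, HasDerivAt w (w' t) t)
    (hkey : ∀ t ≥ t₀, 0 < w t → w t ≤ 1 → -(C * (w t)^2) ≤ w' t)
    (hη0 : 0 < η) (hη1 : η ≤ 1) (hηw : η < w t₀) :
    ∀ t ≥ t₀, η / (1 + 2*C*η*(t - t₀)) < w t := by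
  set k : ℝ := 2*C*η with hk
  have hk0 : 0 < k := by positivity
  set r : ℝ → ℝ := fun t => η / (1 + k*(t - t₀)) with hrdef
  have hden : ∀ t ≥ t₀, (1:ℝ) ≤ 1 + k*(t - t₀) := by
    intro t ht
    nlinarith [mul_nonneg hk0.le (sub_nonneg.mpr ht)]
  have hden0 : ∀ t ≥ t₀, (0:ℝ) < 1 + k*(t - t₀) := fun t ht => lt_of_lt_of_le one_pos (hden t ht)
  have hr' : ∀ t ≥ t₀, HasDerivAt r (-(2*C*(r t)^2)) t := by
    intro t ht
    have h1 : HasDerivAt (fun t => 1 + k*(t - t₀)) k t := by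
      simpa using (((hasDerivAt_id t).sub_const t₀).const_mul k).const_add 1
    have h2 := (h1.inv (ne_of_gt (hden0 t ht))).const_mul η
    refine h2.congr_deriv (Eq.symm ?_)
    rw [hrdef, hk]
    field_simp
  have hrpos : ∀ t ≥ t₀, 0 < r t := fun t ht => div_pos hη0 (hden0 t ht)
  have hrle : ∀ t ≥ t₀, r t ≤ η := by
    intro t ht
    rw [hrdef]
    exact div_le_of_le_mul₀ (by nlinarith [hden t ht]) hη0.le (by nlinarith [hden t ht])
  intro t₁ ht₁
  by_contra hcon
  push_neg at hcon
  -- first touching point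
  have hwc : ContinuousOn w (Icc t₀ t₁) := fun s hs => ((hw s hs.1).continuousAt).continuousWithinAt
  have hrc : ContinuousOn r (Icc t₀ t₁) := fun s hs =>
    ((hr' s hs.1).continuousAt).continuousWithinAt
  set S : Set ℝ := Icc t₀ t₁ ∩ (fun s => w s - r s) ⁻¹' Iic 0 with hS
  have hScl : IsClosed S :=
    (hwc.sub hrc).preimage_isClosed_of_isClosed isClosed_Icc isClosed_Iic
  have hSne : S.Nonempty := ⟨t₁, ⟨⟨ht₁, le_rfl⟩, by simpa using sub_nonpos.mpr hcon⟩⟩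
  have hSbd : BddBelow S := ⟨t₀, fun s hs => hs.1.1⟩
  set τ := sInf S with hτ
  have hτS : τ ∈ S := hScl.csInf_mem hSne hSbd
  have hτIcc : τ ∈ Icc t₀ t₁ := hτS.1
  have hτle : w τ ≤ r τ := by simpa using hτS.2
  have hτ0 : t₀ < τ := by
    rcases lt_or_eq_of_le hτIcc.1 with h | h
    · exact h
    · exfalso
      have : r τ = η := by rw [hrdef, ← h]; simp
      rw [← h] at hτle
      rw [← h] at this
      rw [this] at hτle
      exact absurd hτle (not_le.mpr hηw)
  have hlt : ∀ s ∈ Ico t₀ τ, r s < w s := by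
    intro s hs
    by_contra hsle
    push_neg at hsle
    have : s ∈ S := ⟨⟨hs.1, le_trans hs.2.le hτIcc.2⟩, by simpa using sub_nonpos.mpr hsle⟩
    exact absurd (csInf_le hSbd this) (not_le.mpr hs.2)
  -- continuity pushes equality
  have hτge : r τ ≤ w τ := by
    have hcont : ContinuousAt (fun s => w s - r s) τ :=
      ((hw τ hτIcc.1).continuousAt).sub ((hr' τ hτIcc.1).continuousAt)
    have htend : Tendsto (fun s => w s - r s) (nhdsWithin τ (Iio τ)) (nhds (w τ - r τ)) :=
      hcont.continuousWithinAt.tendsto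
    have hev : ∀ᶠ s in nhdsWithin τ (Iio τ), 0 ≤ w s - r s := by
      filter_upwards [Ioo_mem_nhdsLT_of_mem ⟨hτ0, le_rfl⟩] with s hs
      exact sub_nonneg.mpr (hlt s ⟨hs.1.le, hs.2⟩).le
    have := ge_of_tendsto htend hev
    linarith
  have hτeq : w τ = r τ := le_antisymm hτle hτge
  -- derivative contradiction at τ
  have hwτpos : 0 < w τ := hτeq ▸ hrpos τ hτIcc.1
  have hwτ1 : w τ ≤ 1 := le_trans (hτeq ▸ hrle τ hτIcc.1) hη1
  have hd : HasDerivAt (fun s => w s - r s) (w' τ + 2*C*(r τ)^2) τ := by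
    have hsub := (hw τ hτIcc.1).sub (hr' τ hτIcc.1)
    rw [sub_neg_eq_add] at hsub
    exact hsub
  set d := w' τ + 2*C*(r τ)^2 with hdd
  have hd0 : 0 < d := by
    have := hkey τ hτIcc.1 hwτpos hwτ1
    rw [hτeq] at this
    have hrτ : 0 < r τ := hrpos τ hτIcc.1
    have hpos : 0 < C * r τ ^ 2 := by positivity
    rw [hdd]
    linarith
  have hslope := hasDerivAt_iff_tendsto_slope.mp hd
  have hslope' : Tendsto (slope (fun s => w s - r s) τ) (nhdsWithin τ (Iio τ)) (nhds d) :=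
    hslope.mono_left (nhdsWithin_mono τ (fun s hs => ne_of_lt hs))
  have hev1 : ∀ᶠ s in nhdsWithin τ (Iio τ), 0 < slope (fun s => w s - r s) τ s :=
    hslope'.eventually (eventually_gt_nhds hd0)
  have hev2 : ∀ᶠ s in nhdsWithin τ (Iio τ), slope (fun s => w s - r s) τ s < 0 := by
    filter_upwards [Ioo_mem_nhdsLT_of_mem ⟨hτ0, le_rfl⟩] with s hs
    have h1 : 0 < w s - r s := sub_pos.mpr (hlt s ⟨hs.1.le, hs.2⟩)
    have h2 : s - τ < 0 := sub_neg.mpr hs.2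
    have : w τ - r τ = 0 := by rw [hτeq]; ring
    simp only [slope_def_field]
    rw [this, sub_zero]
    exact div_neg_of_pos_of_neg h1 h2
  have : ∃ s, 0 < slope (fun s => w s - r s) τ s ∧ slope (fun s => w s - r s) τ s < 0 :=
    (hev1.and hev2).exists
  obtain ⟨s, h1, h2⟩ := this
  linarith

/-- If additionally `w` is the derivative of a bounded function `W`, we get a contradiction. -/
lemma blowup {C M η t₀ : ℝ} (hC : 0 < C) (W w w' : ℝ → ℝ)
    (hW : ∀ t ≥ t₀, HasDerivAt W (w t) t)
    (hw : ∀ t ≥ t₀, HasDerivAt w (w' t) t)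
    (hkey : ∀ t ≥ t₀, 0 < w t → w t ≤ 1 → -(C * (w t)^2) ≤ w' t)
    (hη0 : 0 < η) (hη1 : η ≤ 1) (hηw : η < w t₀)
    (hWb : ∀ t ≥ t₀, |W t| ≤ M) : False := by
  have hno := noTouch hC w w' hw hkey hη0 hη1 hηw
  set k : ℝ := 2*C*η with hk
  have hk0 : 0 < k := by positivity
  have hM0 : 0 ≤ M := le_trans (abs_nonneg _) (hWb t₀ le_rfl)
  set A : ℝ := 2*C*(2*M+1) with hA
  have hA0 : 0 < A := by positivity
  set t₁ : ℝ := t₀ + (Real.exp A - 1)/k with ht₁def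
  have hexp1 : 1 < Real.exp A := by
    rw [← Real.exp_zero]; exact Real.exp_lt_exp.mpr hA0
  have ht01 : t₀ ≤ t₁ := by
    rw [ht₁def]
    have : 0 ≤ (Real.exp A - 1)/k := div_nonneg (by linarith) hk0.le
    linarith
  set r : ℝ → ℝ := fun s => η / (1 + k*(s - t₀)) with hrdef
  have hden0 : ∀ s ≥ t₀, (0:ℝ) < 1 + k*(s - t₀) := by
    intro s hs
    nlinarith [mul_nonneg hk0.le (sub_nonneg.mpr hs)]
  set R : ℝ → ℝ := fun s => (2*C)⁻¹ * Real.log (1 + k*(s - t₀)) with hRdef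
  have hR : ∀ s ≥ t₀, HasDerivAt R (r s) s := by
    intro s hs
    have h1 : HasDerivAt (fun s => 1 + k*(s - t₀)) k s := by
      simpa using (((hasDerivAt_id s).sub_const t₀).const_mul k).const_add 1
    have h2 := (Real.hasDerivAt_log (ne_of_gt (hden0 s hs))).comp s h1
    have h3 := h2.const_mul (2*C)⁻¹
    refine h3.congr_deriv (Eq.symm ?_)
    rw [hrdef]
    show η / (1 + k*(s - t₀)) = (2*C)⁻¹ * ((1 + k*(s - t₀))⁻¹ * k)
    rw [hk]
    field_simp
  have hwc : ContinuousOn w (Icc t₀ t₁) := fun s hs => ((hw s hs.1).continuousAt).continuousWithinAt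
  have hrc : ContinuousOn r (Icc t₀ t₁) := by
    apply ContinuousOn.div continuousOn_const
    · fun_prop
    · exact fun s hs => ne_of_gt (hden0 s hs.1)
  have hwInt : IntervalIntegrable w MeasureTheory.volume t₀ t₁ :=
    (hwc.mono (by rw [uIcc_of_le ht01])).intervalIntegrable
  have hrInt : IntervalIntegrable r MeasureTheory.volume t₀ t₁ :=
    (hrc.mono (by rw [uIcc_of_le ht01])).intervalIntegrable
  have hftcW : ∫ s in t₀..t₁, w s = W t₁ - W t₀ := by
    apply intervalIntegral.integral_eq_sub_of_hasDerivAt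
    · intro s hs
      rw [uIcc_of_le ht01] at hs
      exact hW s hs.1
    · exact hwInt
  have hftcR : ∫ s in t₀..t₁, r s = R t₁ - R t₀ := by
    apply intervalIntegral.integral_eq_sub_of_hasDerivAt
    · intro s hs
      rw [uIcc_of_le ht01] at hs
      exact hR s hs.1
    · exact hrInt
  have hmono : ∫ s in t₀..t₁, r s ≤ ∫ s in t₀..t₁, w s := by
    apply intervalIntegral.integral_mono_on ht01 hrInt hwInt
    intro s hs
    exact (hno s hs.1).le
  have hRt₀ : R t₀ = 0 := by rw [hRdef]; simp
  have hRt₁ : R t₁ = 2*M + 1 := by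
    have h5 : 1 + k * (t₁ - t₀) = Real.exp A := by
      rw [ht₁def]
      field_simp
      ring
    show (2 * C)⁻¹ * Real.log (1 + k * (t₁ - t₀)) = 2*M + 1
    rw [h5, Real.log_exp, hA]
    field_simp
  have h1 : W t₁ - W t₀ ≤ 2*M := by
    cases abs_le.mp (hWb t₁ ht01) with
    | intro a b => cases abs_le.mp (hWb t₀ le_rfl) with
      | intro c d => linarith
  rw [hftcW, hftcR, hRt₀, hRt₁] at hmono
  linarith

/-- Energy bound: the velocity of a bounded solution is bounded. -/
lemma deriv_bound (f g : ℝ → ℝ) (hfc : Continuous f)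
    (hgv : ∀ v : ℝ, v ≠ 0 → 0 < g v * v)
    (u u' u'' : ℝ → ℝ)
    (hu1 : ∀ t ≥ (0:ℝ), HasDerivAt u (u' t) t)
    (hu2 : ∀ t ≥ (0:ℝ), HasDerivAt u' (u'' t) t)
    (heq : ∀ t ≥ (0:ℝ), u'' t + g (u' t) + f (u t) = 0)
    (M : ℝ) (hM : ∀ t ≥ (0:ℝ), |u t| ≤ M) :
    ∃ B ≥ (0:ℝ), ∀ t ≥ (0:ℝ), |u' t| ≤ B := by
  set F : ℝ → ℝ := fun s => ∫ x in (0:ℝ)..s, f x with hFdef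
  have hF : ∀ s : ℝ, HasDerivAt F (f s) s := fun s =>
    (hfc.integral_hasStrictDerivAt 0 s).hasDerivAt
  set E : ℝ → ℝ := fun t => (u' t)^2/2 + F (u t) with hEdef
  have hE : ∀ t ≥ (0:ℝ), HasDerivAt E (-(g (u' t) * u' t)) t := by
    intro t ht
    have h1 : HasDerivAt (fun t => (u' t)^2/2) (u' t * u'' t) t := by
      have := ((hu2 t ht).pow 2).div_const 2
      refine this.congr_deriv (Eq.symm ?_)
      ring
    have h2 : HasDerivAt (fun t => F (u t)) (f (u t) * u' t) t :=
      (hF (u t)).comp t (hu1 t ht)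
    have h3 := h1.add h2
    refine h3.congr_deriv (Eq.symm ?_)
    have h4 := heq t ht
    have : u'' t = -(g (u' t)) - f (u t) := by linarith
    rw [this]
    ring
  have hgpos : ∀ v : ℝ, 0 ≤ g v * v := by
    intro v
    rcases eq_or_ne v 0 with h | h
    · simp [h]
    · exact (hgv v h).le
  have hEanti : AntitoneOn E (Ici (0:ℝ)) := by
    apply antitoneOn_of_deriv_nonpos (convex_Ici 0)
    · exact fun t ht => ((hE t ht).continuousAt).continuousWithinAt
    · intro t ht
      rw [interior_Ici] at ht
      exact ((hE t (le_of_lt ht)).differentiableAt).differentiableWithinAt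
    · intro t ht
      rw [interior_Ici] at ht
      rw [(hE t (le_of_lt ht)).deriv]
      simpa using hgpos (u' t)
  have hFc : Continuous F := by
    apply continuous_iff_continuousAt.mpr
    exact fun s => (hF s).continuousAt
  obtain ⟨C0, hC0⟩ := isCompact_Icc.exists_bound_of_continuousOn
    (s := Icc (-M) M) hFc.continuousOn
  have hsq : ∀ t ≥ (0:ℝ), (u' t)^2 ≤ 2*(E 0 + C0) := by
    intro t ht
    have h1 : E t ≤ E 0 := hEanti self_mem_Ici ht ht
    have h2 : u t ∈ Icc (-M) M := abs_le.mp (hM t ht)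
    have h3 : ‖F (u t)‖ ≤ C0 := hC0 (u t) h2
    rw [Real.norm_eq_abs, abs_le] at h3
    obtain ⟨h3l, h3r⟩ := h3
    have h6 : (u' t)^2/2 + F (u t) ≤ E 0 := h1
    obtain ⟨e0, he0⟩ : ∃ x, E 0 = x := ⟨_, rfl⟩
    obtain ⟨f0, hf0⟩ : ∃ x, F (u t) = x := ⟨_, rfl⟩
    rw [he0, hf0] at h6
    rw [hf0] at h3l
    rw [he0]
    linarith
  refine ⟨Real.sqrt (2*(E 0 + C0)), Real.sqrt_nonneg _, fun t ht => ?_⟩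
  calc |u' t| = Real.sqrt ((u' t)^2) := (Real.sqrt_sq_eq_abs _).symm
  _ ≤ Real.sqrt (2*(E 0 + C0)) := Real.sqrt_le_sqrt (hsq t ht)

/-- Main lemma: if a bounded solution eventually stays `≤ b`, it is constant on `[0,∞)`. -/
lemma tailConst (f g : ℝ → ℝ) (hf : LocallyLipschitz f) (hg : LocallyLipschitz g)
    (hgv : ∀ v : ℝ, v ≠ 0 → 0 < g v * v)
    (a b C : ℝ) (hab : a < b) (hC : 0 < C)
    (hf1 : ∀ s : ℝ, s < a → f s < 0)
    (hf2 : ∀ s ∈ Set.Icc a b, f s = 0)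
    (hgC : ∀ v : ℝ, |v| ≤ 1 → |g v| ≤ C * v ^ 2)
    (u u' u'' : ℝ → ℝ)
    (hu1 : ∀ t ≥ (0:ℝ), HasDerivAt u (u' t) t)
    (hu2 : ∀ t ≥ (0:ℝ), HasDerivAt u' (u'' t) t)
    (heq : ∀ t ≥ (0:ℝ), u'' t + g (u' t) + f (u t) = 0)
    (M : ℝ) (hM : ∀ t ≥ (0:ℝ), |u t| ≤ M)
    (T : ℝ) (hT0 : 0 ≤ T) (hTb : ∀ t ≥ T, u t ≤ b) :
    ∀ s ≥ (0:ℝ), u s = u T := by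
  have hfc : Continuous f := hf.continuous
  have hgc : Continuous g := hg.continuous
  have hg0 : g 0 = 0 := by
    have h := hgC 0 (by norm_num)
    simp only [ne_eq, OfNat.ofNat_ne_zero, not_false_eq_true, zero_pow, mul_zero] at h
    exact abs_nonpos_iff.mp h
  obtain ⟨B, hB0, hB⟩ := deriv_bound f g hfc hgv u u' u'' hu1 hu2 heq M hM
  have hM0 : (0:ℝ) ≤ M := le_trans (abs_nonneg _) (hM 0 le_rfl)
  have hu''eq : ∀ t ≥ (0:ℝ), u'' t = -(g (u' t)) - f (u t) := by
    intro t ht; have := heq t ht; linarith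
  obtain ⟨Kg, hKg⟩ := isCompact_Icc.exists_bound_of_continuousOn
    (s := Icc (-B) B) hgc.continuousOn
  obtain ⟨Kf, hKf⟩ := isCompact_Icc.exists_bound_of_continuousOn
    (s := Icc (-M) M) hfc.continuousOn
  have hKg0 : 0 ≤ Kg := le_trans (norm_nonneg _) (hKg 0 (by constructor <;> linarith))
  have hKf0 : 0 ≤ Kf := le_trans (norm_nonneg _) (hKf 0 (by constructor <;> linarith))
  obtain ⟨K, hKdef⟩ : ∃ x : ℝ, x = Kg + Kf + 1 := ⟨_, rfl⟩
  have hK0 : 0 < K := by rw [hKdef]; positivity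
  have hK : ∀ t ≥ (0:ℝ), |u'' t| ≤ K := by
    intro t ht
    rw [hu''eq t ht]
    have h1 : ‖g (u' t)‖ ≤ Kg := hKg _ (abs_le.mp (hB t ht))
    have h2 : ‖f (u t)‖ ≤ Kf := hKf _ (abs_le.mp (hM t ht))
    rw [Real.norm_eq_abs] at h1 h2
    calc |(-(g (u' t)) - f (u t))| ≤ |(-(g (u' t)))| + |f (u t)| := abs_sub _ _
    _ = |g (u' t)| + |f (u t)| := by rw [abs_neg]
    _ ≤ Kg + Kf := add_le_add h1 h2
    _ ≤ K := by rw [hKdef]; linarith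
  have hfle : ∀ t ≥ T, f (u t) ≤ 0 := by
    intro t ht
    rcases lt_or_ge (u t) a with h | h
    · exact (hf1 _ h).le
    · exact le_of_eq (hf2 _ ⟨h, hTb t ht⟩)
  -- Step 1 : no positive velocity after time T
  have hup : ∀ t ≥ T, u' t ≤ 0 := by
    by_contra hcon
    push_neg at hcon
    obtain ⟨t₀, ht₀T, ht₀⟩ := hcon
    have ht₀0 : (0:ℝ) ≤ t₀ := le_trans hT0 ht₀T
    have hmin0 : 0 < min (u' t₀) 1 := lt_min ht₀ one_pos
    refine blowup (M := M) hC u u' u''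
      (fun t ht => hu1 t (le_trans ht₀0 ht)) (fun t ht => hu2 t (le_trans ht₀0 ht))
      ?_ (η := min (u' t₀) 1 / 2) (by positivity)
      (by cases le_total (u' t₀) 1 with
        | inl h => simp [min_eq_left h]; linarith
        | inr h => simp [min_eq_right h]; norm_num)
      (by cases le_total (u' t₀) 1 with
        | inl h => rw [min_eq_left h]; linarith
        | inr h => rw [min_eq_right h]; linarith)
      (fun t ht => hM t (le_trans ht₀0 ht))
    intro t ht hp h1
    have ht0 : (0:ℝ) ≤ t := le_trans ht₀0 ht
    have htT : T ≤ t := le_trans ht₀T ht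
    rw [hu''eq t ht0]
    have habs : |u' t| ≤ 1 := abs_le.mpr ⟨by linarith, h1⟩
    have h2 := abs_le.mp (hgC (u' t) habs)
    have h3 := hfle t htT
    obtain ⟨h2l, h2r⟩ := h2
    linarith
  -- Step 2 : u is antitone on [T,∞)
  have hanti : AntitoneOn u (Ici T) := by
    apply antitoneOn_of_deriv_nonpos (convex_Ici T)
    · exact fun t ht => ((hu1 t (le_trans hT0 ht)).continuousAt).continuousWithinAt
    · intro t ht
      rw [interior_Ici] at ht
      exact ((hu1 t (le_trans hT0 ht.le)).differentiableAt).differentiableWithinAt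
    · intro t ht
      rw [interior_Ici] at ht
      rw [(hu1 t (le_trans hT0 ht.le)).deriv]
      exact hup t ht.le
  -- Step 3 : convergence of u
  have hLne : (u '' Ici T).Nonempty := ⟨u T, mem_image_of_mem u self_mem_Ici⟩
  have hLbd : BddBelow (u '' Ici T) := by
    refine ⟨-M, fun y hy => ?_⟩
    obtain ⟨t, ht, rfl⟩ := hy
    exact (abs_le.mp (hM t (le_trans hT0 ht))).1
  obtain ⟨L, hLdef⟩ : ∃ x : ℝ, x = sInf (u '' Ici T) := ⟨_, rfl⟩
  have hLle : ∀ t ≥ T, L ≤ u t := fun t ht => hLdef ▸ csInf_le hLbd (mem_image_of_mem u ht)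
  have hLM : -M ≤ L := by
    rw [hLdef]
    apply le_csInf hLne
    rintro y ⟨t, ht, rfl⟩
    exact (abs_le.mp (hM t (le_trans hT0 ht))).1
  have htendL : Tendsto u atTop (nhds L) := by
    rw [Metric.tendsto_atTop]
    intro ε hε
    obtain ⟨y, hy, hyε⟩ := exists_lt_of_csInf_lt hLne (hLdef ▸ show L < L + ε by linarith)
    obtain ⟨t₁, ht₁, rfl⟩ := hy
    refine ⟨t₁, fun t ht => ?_⟩
    have h1 : L ≤ u t := hLle t (le_trans ht₁ ht)
    have h2 : u t ≤ u t₁ := hanti ht₁ (le_trans ht₁ ht) ht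
    rw [Real.dist_eq, abs_lt]
    constructor <;> linarith
  -- Step 4 : u' tends to 0
  have htend0 : Tendsto u' atTop (nhds 0) := by
    rw [Metric.tendsto_atTop]
    intro ε hε
    by_contra hcon
    push_neg at hcon
    obtain ⟨ℓ, hℓdef⟩ : ∃ x : ℝ, x = ε / (2*K) := ⟨_, rfl⟩
    have hℓ0 : 0 < ℓ := by rw [hℓdef]; positivity
    obtain ⟨δ, hδdef⟩ : ∃ x : ℝ, x = ε * ℓ / 2 := ⟨_, rfl⟩
    have hδ0 : 0 < δ := by rw [hδdef]; positivity
    have key : ∀ n : ℕ, ∃ t ≥ T, u t ≤ u T - n * δ := by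
      intro n
      induction n with
      | zero => exact ⟨T, le_rfl, by simp⟩
      | succ n ih =>
        obtain ⟨tn, htn, hun⟩ := ih
        obtain ⟨t, ht, hdist⟩ := hcon (max tn T)
        have htT : T ≤ t := le_trans (le_max_right _ _) ht
        have htn' : tn ≤ t := le_trans (le_max_left _ _) ht
        have ht0 : (0:ℝ) ≤ t := le_trans hT0 htT
        have hu't : u' t ≤ -ε := by
          have h1 := hup t htT
          rw [Real.dist_eq, sub_zero, abs_of_nonpos h1] at hdist
          linarith
        have hstep : ∀ s ∈ Icc t (t + ℓ), u' s ≤ -(ε/2) := by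
          intro s hs
          have hs0 : (0:ℝ) ≤ s := le_trans ht0 hs.1
          have hlip : ‖u' s - u' t‖ ≤ K * ‖s - t‖ :=
            (convex_Ici (0:ℝ)).norm_image_sub_le_of_norm_hasDerivWithin_le
              (fun x hx => (hu2 x hx).hasDerivWithinAt)
              (fun x hx => by rw [Real.norm_eq_abs]; exact hK x hx) ht0 hs0
          rw [Real.norm_eq_abs, Real.norm_eq_abs, abs_of_nonneg (by linarith [hs.1] : (0:ℝ) ≤ s - t)] at hlip
          have h4 : K * (s - t) ≤ K * ℓ := by
            apply mul_le_mul_of_nonneg_left _ hK0.le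
            linarith [hs.2]
          have h5 : K * ℓ = ε/2 := by
            rw [hℓdef]; field_simp
          have h6 := (abs_le.mp hlip).2
          linarith
        have hcont' : ContinuousOn u' (Icc t (t+ℓ)) := fun s hs =>
          ((hu2 s (le_trans ht0 hs.1)).continuousAt).continuousWithinAt
        have hIntu' : IntervalIntegrable u' MeasureTheory.volume t (t+ℓ) :=
          (hcont'.mono (by rw [uIcc_of_le (by linarith)])).intervalIntegrable
        have hftc : ∫ s in t..(t+ℓ), u' s = u (t+ℓ) - u t := by
          apply intervalIntegral.integral_eq_sub_of_hasDerivAt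
          · intro s hs
            rw [uIcc_of_le (by linarith : t ≤ t + ℓ)] at hs
            exact hu1 s (le_trans ht0 hs.1)
          · exact hIntu'
        have hintle : ∫ s in t..(t+ℓ), u' s ≤ ∫ _ in t..(t+ℓ), (-(ε/2)) := by
          apply intervalIntegral.integral_mono_on (by linarith) hIntu'
            intervalIntegrable_const hstep
        rw [intervalIntegral.integral_const, hftc] at hintle
        have h7 : u (t+ℓ) - u t ≤ -δ := by
          rw [hδdef]
          have : (t + ℓ - t) • (-(ε/2)) = -(ε * ℓ /2) := by
            rw [smul_eq_mul]; ring_nf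
          rw [this] at hintle
          linarith
        have h8 : u t ≤ u tn := hanti htn htT htn'
        refine ⟨t + ℓ, by linarith, ?_⟩
        push_cast
        linarith
    obtain ⟨n, hn⟩ := exists_nat_gt ((u T + M)/δ)
    obtain ⟨t, htT', hut⟩ := key n
    have h9 : -M ≤ u t := (abs_le.mp (hM t (le_trans hT0 htT'))).1
    have h10 : (n:ℝ) * δ ≤ u T + M := by linarith
    have h11 : (n:ℝ) ≤ (u T + M)/δ := by
      rw [le_div_iff₀ hδ0]; linarith
    linarith
  -- Step 5 : the limit is ≥ a
  have hLa : a ≤ L := by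
    by_contra hcon
    push_neg at hcon
    have hfL : f L < 0 := hf1 L hcon
    obtain ⟨m, hmdef⟩ : ∃ x : ℝ, x = -(f L)/4 := ⟨_, rfl⟩
    have hm0 : 0 < m := by rw [hmdef]; linarith
    have h1 : Tendsto (fun t => f (u t)) atTop (nhds (f L)) :=
      (hfc.continuousAt).tendsto.comp htendL
    have h2 : Tendsto (fun t => g (u' t)) atTop (nhds 0) := by
      have h3 := (hgc.continuousAt (x := (0:ℝ))).tendsto.comp htend0
      rwa [hg0] at h3
    have hev1 : ∀ᶠ t in atTop, f (u t) < f L / 2 :=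
      h1.eventually (eventually_lt_nhds (by linarith))
    have hev2 : ∀ᶠ (t:ℝ) in atTop, |g (u' t)| < m := by
      have h4 : ∀ᶠ x in nhds (0:ℝ), |x| < m := by
        have : Tendsto (fun x : ℝ => |x|) (nhds 0) (nhds 0) := by
          simpa using continuous_abs.tendsto (0:ℝ)
        exact this.eventually (eventually_lt_nhds hm0)
      exact h2.eventually h4
    obtain ⟨N, hN⟩ := eventually_atTop.mp (hev1.and hev2)
    obtain ⟨T₄, hT₄def⟩ : ∃ x : ℝ, x = max N (max T 0) := ⟨_, rfl⟩
    have hT₄0 : (0:ℝ) ≤ T₄ := hT₄def ▸ le_trans (le_max_right _ _) (le_max_right _ _)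
    have hT₄T : T ≤ T₄ := hT₄def ▸ le_trans (le_max_left _ _) (le_max_right _ _)
    have hge : ∀ t ≥ T₄, m ≤ u'' t := by
      intro t ht
      have ht0 : (0:ℝ) ≤ t := le_trans hT₄0 ht
      obtain ⟨ha1, ha2⟩ := hN t (le_trans (hT₄def ▸ le_max_left _ _) ht)
      rw [hu''eq t ht0]
      have h5 := abs_lt.mp ha2
      have h6 : f L / 2 = -(2*m) := by rw [hmdef]; ring
      rw [h6] at ha1
      linarith [h5.1, h5.2]
    have hu''cont : ContinuousOn u'' (Ici (0:ℝ)) := by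
      apply ContinuousOn.congr (f := fun t => -(g (u' t)) - f (u t))
      · apply ContinuousOn.sub
        · apply ContinuousOn.neg
          exact hgc.comp_continuousOn (fun s hs => ((hu2 s hs).continuousAt).continuousWithinAt)
        · exact hfc.comp_continuousOn (fun s hs => ((hu1 s hs).continuousAt).continuousWithinAt)
      · intro s hs
        exact hu''eq s hs
    have grow : ∀ t ≥ T₄, u' T₄ + m * (t - T₄) ≤ u' t := by
      intro t ht
      have hIcc : Icc T₄ t ⊆ Ici (0:ℝ) := fun x hx => le_trans hT₄0 hx.1
      have hInt : IntervalIntegrable u'' MeasureTheory.volume T₄ t :=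
        ((hu''cont.mono hIcc).mono (by rw [uIcc_of_le ht])).intervalIntegrable
      have hftc : ∫ s in T₄..t, u'' s = u' t - u' T₄ := by
        apply intervalIntegral.integral_eq_sub_of_hasDerivAt
        · intro s hs
          rw [uIcc_of_le ht] at hs
          exact hu2 s (le_trans hT₄0 hs.1)
        · exact hInt
      have hmono : ∫ _ in T₄..t, m ≤ ∫ s in T₄..t, u'' s := by
        apply intervalIntegral.integral_mono_on ht intervalIntegrable_const hInt
        intro s hs
        exact hge s hs.1
      rw [intervalIntegral.integral_const, hftc, smul_eq_mul] at hmono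
      nlinarith
    have hq : 0 < (|u' T₄| + 1)/m := by positivity
    have hbig : u' (T₄ + (|u' T₄| + 1)/m) > 0 := by
      have h7 := grow (T₄ + (|u' T₄| + 1)/m) (by linarith)
      have h8 : m * (T₄ + (|u' T₄| + 1)/m - T₄) = |u' T₄| + 1 := by
        field_simp
        ring
      rw [h8] at h7
      have h9 := neg_abs_le (u' T₄)
      linarith
    have h10 := hup (T₄ + (|u' T₄| + 1)/m) (by linarith)
    linarith
  -- Step 6 : the tail lies in [a,b], so f(u t) = 0 there
  have huab : ∀ t ≥ T, u t ∈ Icc a b := fun t ht => ⟨le_trans hLa (hLle t ht), hTb t ht⟩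
  have hfzero : ∀ t ≥ T, f (u t) = 0 := fun t ht => hf2 _ (huab t ht)
  have hu''g : ∀ t ≥ T, u'' t = -(g (u' t)) := by
    intro t ht
    rw [hu''eq t (le_trans hT0 ht), hfzero t ht]
    ring
  -- Step 7 : the velocity vanishes identically after time T
  have hzero : ∀ t ≥ T, u' t = 0 := by
    by_contra hcon
    push_neg at hcon
    obtain ⟨t₀, ht₀T, ht₀⟩ := hcon
    have hneg : u' t₀ < 0 := lt_of_le_of_ne (hup t₀ ht₀T) ht₀
    have ht₀0 : (0:ℝ) ≤ t₀ := le_trans hT0 ht₀T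
    have hmin0 : 0 < min (-(u' t₀)) 1 := lt_min (by linarith) one_pos
    refine blowup (M := M) hC (fun t => -(u t)) (fun t => -(u' t)) (fun t => -(u'' t))
      (fun t ht => (hu1 t (le_trans ht₀0 ht)).neg) (fun t ht => (hu2 t (le_trans ht₀0 ht)).neg)
      ?_ (η := min (-(u' t₀)) 1 / 2) (by positivity)
      (by cases le_total (-(u' t₀)) 1 with
        | inl h => rw [min_eq_left h]; linarith
        | inr h => rw [min_eq_right h]; norm_num)
      (by cases le_total (-(u' t₀)) 1 with
        | inl h => rw [min_eq_left h]; linarith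
        | inr h => rw [min_eq_right h]; linarith)
      (fun t ht => by rw [abs_neg]; exact hM t (le_trans ht₀0 ht))
    intro t ht hp h1
    have hp' : 0 < -(u' t) := hp
    have h1' : -(u' t) ≤ 1 := h1
    have htT : T ≤ t := le_trans ht₀T ht
    have hr : -(u'' t) = g (u' t) := by rw [hu''g t htT]; ring
    show -(C * (-(u' t))^2) ≤ -(u'' t)
    rw [hr]
    have habs : |u' t| ≤ 1 := abs_le.mpr ⟨by linarith, by linarith⟩
    have h2 := abs_le.mp (hgC (u' t) habs)
    have h3 : (-(u' t))^2 = (u' t)^2 := by ring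
    rw [h3]
    linarith [h2.1]
  -- Step 8 : u is constant on [T,∞)
  have hconst : ∀ t ≥ T, u t = u T := by
    intro t ht
    have h0 : ‖u t - u T‖ ≤ 0 * ‖t - T‖ :=
      (convex_Ici T).norm_image_sub_le_of_norm_hasDerivWithin_le
        (f' := u') (fun x hx => (hu1 x (le_trans hT0 hx)).hasDerivWithinAt)
        (fun x hx => by rw [Real.norm_eq_abs, hzero x hx, abs_zero]) self_mem_Ici ht
    rw [zero_mul, Real.norm_eq_abs] at h0
    have := abs_nonneg (u t - u T)
    have h1 : |u t - u T| = 0 := le_antisymm h0 this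
    have h2 := abs_eq_zero.mp h1
    linarith
  -- Step 9 : backward uniqueness of the ODE
  obtain ⟨c, hcdef⟩ : ∃ x : ℝ, x = u T := ⟨_, rfl⟩
  have hfc0 : f c = 0 := by rw [hcdef]; exact hfzero T le_rfl
  obtain ⟨V, hVdef⟩ : ∃ V : ℝ × ℝ → ℝ × ℝ, V = fun p => (p.2, -g p.2 - f p.1) := ⟨_, rfl⟩
  have hVlip : LocallyLipschitz V := by
    rw [hVdef]
    apply LocallyLipschitz.prodMk
    · exact LipschitzWith.prod_snd.locallyLipschitz
    · have h1 : LocallyLipschitz (fun p : ℝ × ℝ => g p.2) :=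
        hg.comp LipschitzWith.prod_snd.locallyLipschitz
      have h2 : LocallyLipschitz (fun p : ℝ × ℝ => f p.1) :=
        hf.comp LipschitzWith.prod_fst.locallyLipschitz
      have h3 : LocallyLipschitz (fun p : ℝ × ℝ => (0:ℝ) - g p.2 - f p.1) :=
        ((LocallyLipschitz.const 0).sub h1).sub h2
      have h4 : (fun p : ℝ × ℝ => -g p.2 - f p.1) = fun p : ℝ × ℝ => (0:ℝ) - g p.2 - f p.1 := by
        funext p; ring
      rw [h4]
      exact h3
  have hy : ∀ t > (0:ℝ), HasDerivAt (fun s => (u s, u' s)) (V (u t, u' t)) t := by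
    intro t ht
    have h := (hu1 t ht.le).prodMk (hu2 t ht.le)
    have hV1 : V (u t, u' t) = (u' t, u'' t) := by
      rw [hVdef]
      simp only
      rw [hu''eq t ht.le]
    rw [hV1]
    exact h
  have hVc : V (c, 0) = (0, 0) := by
    rw [hVdef]
    simp [hg0, hfc0]
  obtain ⟨A, hAdef⟩ : ∃ A : Set ℝ, A = {t : ℝ | 0 ≤ t ∧ ∀ s, t ≤ s → u s = c ∧ u' s = 0} :=
    ⟨_, rfl⟩
  have hTA : T ∈ A := by
    rw [hAdef]
    exact ⟨hT0, fun s hs => ⟨by rw [hcdef]; exact hconst s hs, hzero s hs⟩⟩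
  have hAbd : BddBelow A := ⟨0, fun x hx => by rw [hAdef] at hx; exact hx.1⟩
  obtain ⟨τ, hτdef⟩ : ∃ x : ℝ, x = sInf A := ⟨_, rfl⟩
  have hAne : A.Nonempty := ⟨T, hTA⟩
  have hτ0 : 0 ≤ τ := by
    rw [hτdef]
    exact le_csInf hAne (fun x hx => by rw [hAdef] at hx; exact hx.1)
  have hτT : τ ≤ T := hτdef ▸ csInf_le hAbd hTA
  have htail : ∀ s, τ < s → u s = c ∧ u' s = 0 := by
    intro s hs
    obtain ⟨tA, htA, hlt⟩ := exists_lt_of_csInf_lt hAne (hτdef ▸ hs)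
    rw [hAdef] at htA
    exact htA.2 s hlt.le
  have hτA : u τ = c ∧ u' τ = 0 := by
    constructor
    · have h1 : Tendsto u (nhdsWithin τ (Ioi τ)) (nhds (u τ)) :=
        ((hu1 τ hτ0).continuousAt).continuousWithinAt.tendsto
      have h2 : u =ᶠ[nhdsWithin τ (Ioi τ)] fun _ => c := by
        filter_upwards [self_mem_nhdsWithin] with x hx
        exact (htail x hx).1
      have h3 : Tendsto (fun _ : ℝ => c) (nhdsWithin τ (Ioi τ)) (nhds (u τ)) :=
        Tendsto.congr' h2 h1
      exact tendsto_nhds_unique h3 tendsto_const_nhds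
    · have h1 : Tendsto u' (nhdsWithin τ (Ioi τ)) (nhds (u' τ)) :=
        ((hu2 τ hτ0).continuousAt).continuousWithinAt.tendsto
      have h2 : u' =ᶠ[nhdsWithin τ (Ioi τ)] fun _ => 0 := by
        filter_upwards [self_mem_nhdsWithin] with x hx
        exact (htail x hx).2
      have h3 : Tendsto (fun _ : ℝ => (0:ℝ)) (nhdsWithin τ (Ioi τ)) (nhds (u' τ)) :=
        Tendsto.congr' h2 h1
      exact tendsto_nhds_unique h3 tendsto_const_nhds
  have hτmem : ∀ s, τ ≤ s → u s = c ∧ u' s = 0 := by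
    intro s hs
    rcases eq_or_lt_of_le hs with h | h
    · rw [← h]; exact hτA
    · exact htail s h
  have hτeq0 : τ = 0 := by
    by_contra hne
    have hτpos : 0 < τ := lt_of_le_of_ne hτ0 (Ne.symm hne)
    obtain ⟨Kv, sV, hsV, hlipV⟩ := hVlip (c, 0)
    obtain ⟨ρ, hρ0, hball⟩ := Metric.mem_nhds_iff.mp hsV
    have hyτ : (u τ, u' τ) = (c, (0:ℝ)) := by rw [hτA.1, hτA.2]
    have huniq : (fun t => (u t, u' t)) =ᶠ[nhds τ] (fun _ => ((c : ℝ), (0:ℝ))) := by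
      apply ODE_solution_unique_of_eventually
        (v := fun _ : ℝ => V) (s := fun _ : ℝ => Metric.ball ((c:ℝ), (0:ℝ)) ρ)
        (Filter.Eventually.of_forall fun _ => hlipV.mono hball)
      · have hyc : ContinuousAt (fun t => (u t, u' t)) τ :=
          ((hu1 τ hτ0).continuousAt).prodMk ((hu2 τ hτ0).continuousAt)
        have hmem : ∀ᶠ t in nhds τ, (u t, u' t) ∈ Metric.ball ((c:ℝ), (0:ℝ)) ρ := by
          apply hyc.preimage_mem_nhds
          rw [hyτ]
          exact Metric.ball_mem_nhds _ hρ0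
        have hpos : ∀ᶠ t in nhds τ, 0 < t := eventually_gt_nhds hτpos
        filter_upwards [hmem, hpos] with t h1 h2
        exact ⟨hy t h2, h1⟩
      · apply Filter.Eventually.of_forall
        intro t
        constructor
        · rw [show V ((c:ℝ), (0:ℝ)) = ((0:ℝ), (0:ℝ)) from hVc]
          exact hasDerivAt_const t _
        · exact Metric.mem_ball_self hρ0
      · exact hyτ
    obtain ⟨ε, hε0, hball2⟩ := Metric.eventually_nhds_iff.mp huniq
    obtain ⟨τ', hτ'def⟩ : ∃ x : ℝ, x = max 0 (τ - ε/2) := ⟨_, rfl⟩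
    have hτ'A : τ' ∈ A := by
      rw [hAdef]
      refine ⟨hτ'def ▸ le_max_left _ _, fun s hs => ?_⟩
      rcases le_or_gt τ s with h | h
      · exact hτmem s h
      · have h1 : τ - ε/2 ≤ s := le_trans (hτ'def ▸ le_max_right _ _) hs
        have h2 : dist s τ < ε := by
          rw [Real.dist_eq, abs_lt]
          constructor <;> linarith
        have h3 := hball2 h2
        exact ⟨congrArg Prod.fst h3, congrArg Prod.snd h3⟩
    have h4 : τ ≤ τ' := hτdef ▸ csInf_le hAbd hτ'A
    have h5 : τ' < τ := by
      rw [hτ'def]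
      apply max_lt hτpos
      linarith
    linarith
  intro s hs
  rw [← hcdef]
  exact (hτmem s (hτeq0 ▸ hs)).1

/-- Theorem 8.2.3: non-convergence (oscillation between values below `a` and above `b`)
for bounded non-constant solutions of `u'' + g(u') + f(u) = 0` when the damping is
quadratically degenerate near `0` and `f` vanishes exactly on `[a,b]`. -/
theorem stmt_12 (f g : ℝ → ℝ) (hf : LocallyLipschitz f) (hg : LocallyLipschitz g)
    (hgv : ∀ v : ℝ, v ≠ 0 → 0 < g v * v)
    (a b C : ℝ) (hab : a < b) (hC : 0 < C)
    (hf1 : ∀ s : ℝ, s < a → f s < 0)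
    (hf2 : ∀ s ∈ Set.Icc a b, f s = 0)
    (hf3 : ∀ s : ℝ, b < s → 0 < f s)
    (hgC : ∀ v : ℝ, |v| ≤ 1 → |g v| ≤ C * v ^ 2)
    (u u' u'' : ℝ → ℝ)
    (hu1 : ∀ t ≥ (0:ℝ), HasDerivAt u (u' t) t)
    (hu2 : ∀ t ≥ (0:ℝ), HasDerivAt u' (u'' t) t)
    (heq : ∀ t ≥ (0:ℝ), u'' t + g (u' t) + f (u t) = 0)
    (hbdd : ∃ M : ℝ, ∀ t ≥ (0:ℝ), |u t| ≤ M)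
    (hnc : ∃ s ≥ (0:ℝ), ∃ t ≥ (0:ℝ), u s ≠ u t) :
    (∃ tn : ℕ → ℝ, Filter.Tendsto tn Filter.atTop Filter.atTop ∧ ∀ n, u (tn n) < a) ∧
    (∃ θn : ℕ → ℝ, Filter.Tendsto θn Filter.atTop Filter.atTop ∧ ∀ n, b < u (θn n)) ∧
    ¬ ∃ L : ℝ, Filter.Tendsto u Filter.atTop (nhds L) := by
  obtain ⟨M, hM⟩ := hbdd
  obtain ⟨s₀, hs₀, t₀, ht₀, hne⟩ := hnc
  have claimA : ∀ T ≥ (0:ℝ), ∃ t ≥ T, b < u t := by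
    intro T hT
    by_contra hcon
    push_neg at hcon
    have hconst := tailConst f g hf hg hgv a b C hab hC hf1 hf2 hgC u u' u''
      hu1 hu2 heq M hM T hT hcon
    exact hne ((hconst s₀ hs₀).trans (hconst t₀ ht₀).symm)
  have claimB : ∀ T ≥ (0:ℝ), ∃ t ≥ T, u t < a := by
    intro T hT
    by_contra hcon
    push_neg at hcon
    have hneglip : LocallyLipschitz (fun x : ℝ => -x) := by
      have h := (LipschitzWith.id (α := ℝ)).neg
      exact h.locallyLipschitz
    have hf' : LocallyLipschitz (fun s : ℝ => -f (-s)) :=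
      hneglip.comp (hf.comp hneglip)
    have hg' : LocallyLipschitz (fun v : ℝ => -g (-v)) :=
      hneglip.comp (hg.comp hneglip)
    have hgv' : ∀ v : ℝ, v ≠ 0 → 0 < (fun v : ℝ => -g (-v)) v * v := by
      intro v hv
      have h1 := hgv (-v) (neg_ne_zero.mpr hv)
      simp only
      nlinarith
    have hf1' : ∀ s : ℝ, s < -b → (fun s : ℝ => -f (-s)) s < 0 := by
      intro s hs
      simp only
      have := hf3 (-s) (by linarith)
      linarith
    have hf2' : ∀ s ∈ Set.Icc (-b) (-a), (fun s : ℝ => -f (-s)) s = 0 := by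
      intro s hs
      simp only
      have := hf2 (-s) ⟨by linarith [hs.2], by linarith [hs.1]⟩
      linarith
    have hgC' : ∀ v : ℝ, |v| ≤ 1 → |(fun v : ℝ => -g (-v)) v| ≤ C * v ^ 2 := by
      intro v hv
      simp only [abs_neg]
      have := hgC (-v) (by rwa [abs_neg])
      have h2 : (-v)^2 = v^2 := by ring
      linarith [h2 ▸ this]
    have heq' : ∀ t ≥ (0:ℝ), -(u'' t) + (fun v : ℝ => -g (-v)) (-(u' t))
        + (fun s : ℝ => -f (-s)) (-(u t)) = 0 := by
      intro t ht
      have := heq t ht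
      simp only [neg_neg]
      linarith
    have hconst := tailConst (fun s : ℝ => -f (-s)) (fun v : ℝ => -g (-v)) hf' hg' hgv'
      (-b) (-a) C (by linarith) hC hf1' hf2' hgC'
      (fun t => -(u t)) (fun t => -(u' t)) (fun t => -(u'' t))
      (fun t ht => (hu1 t ht).neg) (fun t ht => (hu2 t ht).neg) heq'
      M (fun t ht => by rw [abs_neg]; exact hM t ht)
      T hT (fun t ht => neg_le_neg (hcon t ht))
    have e1 := hconst s₀ hs₀
    have e2 := hconst t₀ ht₀
    exact hne (by linarith)
  have hseq : ∀ (P : ℝ → Prop), (∀ T ≥ (0:ℝ), ∃ t ≥ T, P t) →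
      ∃ tn : ℕ → ℝ, Tendsto tn atTop atTop ∧ ∀ n, P (tn n) := by
    intro P hP
    choose tfun h1 h2 using fun n : ℕ => hP n (Nat.cast_nonneg n)
    exact ⟨tfun, tendsto_atTop_mono h1 tendsto_natCast_atTop_atTop, h2⟩
  obtain ⟨tn, htn1, htn2⟩ := hseq _ claimB
  obtain ⟨θn, hθ1, hθ2⟩ := hseq _ claimA
  refine ⟨⟨tn, htn1, htn2⟩, ⟨θn, hθ1, hθ2⟩, ?_⟩
  rintro ⟨L, hL⟩
  have h1 : Tendsto (fun n => u (tn n)) atTop (nhds L) := hL.comp htn1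
  have h2 : Tendsto (fun n => u (θn n)) atTop (nhds L) := hL.comp hθ1
  have hLa : L ≤ a := le_of_tendsto h1 (Filter.Eventually.of_forall fun n => (htn2 n).le)
  have hLb : b ≤ L := ge_of_tendsto h2 (Filter.Eventually.of_forall fun n => (hθ2 n).le)
  linarith
end

section
/- (Łojasiewicz convergence theorem for gradient flows in ℝ^N.) Let φ : ℝ^N → ℝ be continuously differentiable and assume that at every critical point a (i.e. ∇φ(a) = 0) there exist c_a > 0, σ_a > 0 and θ_a ∈ (0,1/2] such that ‖∇φ(u)‖ ≥ c_a·|φ(u) − φ(a)|^{1−θ_a} whenever ‖u − a‖ < σ_a. Let u : [0,∞) → ℝ^N be a bounded C¹ solution of u′(t) + ∇φ(u(t)) = 0. Then there exists a ∈ ℝ^N with ∇φ(a) = 0 such that u(t) → a as t → ∞. Moreover, if θ ∈ (0,1/2] is any exponent for which the above inequality holds at a (for some constants c,σ > 0), then ‖u(t) − a‖ = O(e^{−δt}) for some δ > 0 if θ = 1/2, and ‖u(t) − a‖ = O(t^{−θ/(1−2θ)}) if 0 < θ < 1/2. -/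
open Filter Set Asymptotics

private lemma anti_aux {f f' : ℝ → ℝ} {t₀ : ℝ}
    (hf : ∀ t ∈ Set.Ici t₀, HasDerivAt f (f' t) t)
    (h : ∀ t ∈ Set.Ici t₀, f' t ≤ 0) : AntitoneOn f (Set.Ici t₀) := by
  apply antitoneOn_of_deriv_nonpos (convex_Ici t₀)
  · exact fun t ht => (hf t ht).continuousAt.continuousWithinAt
  · intro t ht
    rw [interior_Ici] at ht
    exact ((hf t (Set.Ioi_subset_Ici_self ht)).differentiableAt).differentiableWithinAt
  · intro t ht
    rw [interior_Ici] at ht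
    rw [(hf t (Set.Ioi_subset_Ici_self ht)).deriv]
    exact h t (Set.Ioi_subset_Ici_self ht)

private lemma mono_aux {f f' : ℝ → ℝ} {t₀ : ℝ}
    (hf : ∀ t ∈ Set.Ici t₀, HasDerivAt f (f' t) t)
    (h : ∀ t ∈ Set.Ici t₀, 0 ≤ f' t) : MonotoneOn f (Set.Ici t₀) := by
  apply monotoneOn_of_deriv_nonneg (convex_Ici t₀)
  · exact fun t ht => (hf t ht).continuousAt.continuousWithinAt
  · intro t ht
    rw [interior_Ici] at ht
    exact ((hf t (Set.Ioi_subset_Ici_self ht)).differentiableAt).differentiableWithinAt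
  · intro t ht
    rw [interior_Ici] at ht
    rw [(hf t (Set.Ioi_subset_Ici_self ht)).deriv]
    exact h t (Set.Ioi_subset_Ici_self ht)


set_option maxHeartbeats 1600000 in
/-- Theorem 9.1.4 (Łojasiewicz convergence theorem for gradient flows in ℝ^N):
every bounded solution of `u' + ∇φ(u) = 0` converges to a critical point `a`,
with exponential rate if a Łojasiewicz exponent `θ = 1/2` holds at `a`, and
rate `t^{-θ/(1-2θ)}` if `0 < θ < 1/2`. -/
theorem stmt_13 {N : ℕ} (φ : EuclideanSpace ℝ (Fin N) → ℝ) (hφ : ContDiff ℝ 1 φ)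
    (hLoj : ∀ a : EuclideanSpace ℝ (Fin N), gradient φ a = 0 →
      ∃ c > 0, ∃ σ > 0, ∃ θ ∈ Set.Ioc (0:ℝ) (1/2),
        ∀ v : EuclideanSpace ℝ (Fin N), ‖v - a‖ < σ →
          c * |φ v - φ a| ^ (1 - θ) ≤ ‖gradient φ v‖)
    (u : ℝ → EuclideanSpace ℝ (Fin N))
    (hu : ∀ t ≥ (0:ℝ), HasDerivAt u (-(gradient φ (u t))) t)
    (hbdd : ∃ M : ℝ, ∀ t ≥ (0:ℝ), ‖u t‖ ≤ M) :
    ∃ a : EuclideanSpace ℝ (Fin N), gradient φ a = 0 ∧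
      Filter.Tendsto u Filter.atTop (nhds a) ∧
      ∀ θ ∈ Set.Ioc (0:ℝ) (1/2), ∀ c > (0:ℝ), ∀ σ > (0:ℝ),
        (∀ v : EuclideanSpace ℝ (Fin N), ‖v - a‖ < σ →
          c * |φ v - φ a| ^ (1 - θ) ≤ ‖gradient φ v‖) →
        ((θ = 1/2 → ∃ δ > (0:ℝ),
            (fun t => u t - a) =O[Filter.atTop] fun t => Real.exp (-δ * t)) ∧
         (θ < 1/2 →
            (fun t => u t - a) =O[Filter.atTop] fun t : ℝ => t ^ (-(θ / (1 - 2 * θ))))) := by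
  obtain ⟨M, hM⟩ := hbdd
  have hG_cont : Continuous (fun x : EuclideanSpace ℝ (Fin N) => gradient φ x) := by
    have h1 : Continuous (fderiv ℝ φ) := hφ.continuous_fderiv one_ne_zero
    exact (InnerProductSpace.toDual ℝ (EuclideanSpace ℝ (Fin N))).symm.continuous.comp h1
  have hfd : ∀ (x v : EuclideanSpace ℝ (Fin N)),
      fderiv ℝ φ x v = (inner ℝ (gradient φ x) v : ℝ) := by
    intro x v
    have h1 : fderiv ℝ φ x = (InnerProductSpace.toDual ℝ _) (gradient φ x) := by
      rw [gradient, LinearIsometryEquiv.apply_symm_apply]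
    rw [h1, InnerProductSpace.toDual_apply_apply]
  have hy : ∀ t ∈ Set.Ici (0:ℝ),
      HasDerivAt (fun t => φ (u t)) (-‖gradient φ (u t)‖ ^ 2) t := by
    intro t ht
    have h1 : HasFDerivAt φ (fderiv ℝ φ (u t)) (u t) :=
      (hφ.differentiable one_ne_zero (u t)).hasFDerivAt
    have h2 := h1.comp_hasDerivAt t (hu t ht)
    rw [hfd, inner_neg_right, real_inner_self_eq_norm_sq] at h2
    exact h2
  have hu_cont : ContinuousOn u (Set.Ici (0:ℝ)) :=
    fun t ht => (hu t ht).continuousAt.continuousWithinAt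
  have hy_anti : AntitoneOn (fun t => φ (u t)) (Set.Ici (0:ℝ)) :=
    anti_aux hy (fun t _ => neg_nonpos.mpr (sq_nonneg _))
  obtain ⟨m, hm⟩ : ∃ m : ℝ, ∀ t ≥ (0:ℝ), m ≤ φ (u t) := by
    have hMn : (0:ℝ) ≤ M := le_trans (norm_nonneg _) (hM 0 le_rfl)
    obtain ⟨x, -, hx⟩ := (isCompact_closedBall (0 : EuclideanSpace ℝ (Fin N)) M).exists_isMinOn
      ⟨0, Metric.mem_closedBall_self hMn⟩ (hφ.continuous.continuousOn)
    exact ⟨φ x, fun t ht => hx (mem_closedBall_zero_iff.mpr (hM t ht))⟩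
  have hY_anti : Antitone (fun t : ℝ => φ (u (max t 0))) := fun s t hst =>
    hy_anti (Set.mem_Ici.mpr (le_max_right s 0)) (Set.mem_Ici.mpr (le_max_right t 0))
      (max_le_max hst le_rfl)
  have hY_bdd : BddBelow (Set.range fun t : ℝ => φ (u (max t 0))) :=
    ⟨m, by rintro x ⟨t, rfl⟩; exact hm _ (le_max_right t 0)⟩
  set L : ℝ := ⨅ t : ℝ, φ (u (max t 0)) with hLdef
  have hYL : Tendsto (fun t : ℝ => φ (u (max t 0))) atTop (nhds L) :=
    tendsto_atTop_ciInf hY_anti hY_bdd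
  have hyL : Tendsto (fun t => φ (u t)) atTop (nhds L) := by
    apply hYL.congr'
    filter_upwards [eventually_ge_atTop (0:ℝ)] with t ht
    rw [max_eq_left ht]
  have hy_ge : ∀ t ≥ (0:ℝ), L ≤ φ (u t) := by
    intro t ht
    have := ciInf_le hY_bdd t
    rwa [max_eq_left ht] at this
  have hseq : ∀ n : ℕ, ∃ t ≥ (n:ℝ), ‖gradient φ (u t)‖ < 1/(n+1) := by
    intro n
    by_contra hcon
    push_neg at hcon
    set ε : ℝ := 1/(n+1) with hεdef
    have hε : 0 < ε := by positivity
    have hn0 : (0:ℝ) ≤ (n:ℝ) := Nat.cast_nonneg n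
    have hanti : AntitoneOn (fun t => φ (u t) + ε^2 * t) (Set.Ici (n:ℝ)) := by
      apply anti_aux (f' := fun t => -‖gradient φ (u t)‖^2 + ε^2 * 1)
      · intro t ht
        exact (hy t (le_trans hn0 ht)).add ((hasDerivAt_id t).const_mul (ε^2))
      · intro t ht
        have h1 := hcon t ht
        nlinarith [norm_nonneg (gradient φ (u t))]
    set T : ℝ := (n:ℝ) + (φ (u n) - L + 1)/ε^2 with hTdef
    have hyn : L ≤ φ (u n) := hy_ge _ hn0
    have hTn : (n:ℝ) ≤ T := by
      rw [hTdef]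
      have : (0:ℝ) ≤ (φ (u n) - L + 1)/ε^2 :=
        div_nonneg (by linarith [hy_ge (n:ℝ) hn0]) (by positivity)
      linarith
    have h2 := hanti (Set.self_mem_Ici) (Set.mem_Ici.mpr hTn) hTn
    have h3 : L ≤ φ (u T) := hy_ge _ (le_trans hn0 hTn)
    have h4 : ε^2 * T = ε^2 * n + (φ (u n) - L + 1) := by
      rw [hTdef]
      field_simp
    simp only [] at h2
    linarith
  choose s hs hs' using hseq
  have hs0 : ∀ n : ℕ, (0:ℝ) ≤ s n := fun n => le_trans (Nat.cast_nonneg n) (hs n)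
  have hMn : (0:ℝ) ≤ M := le_trans (norm_nonneg _) (hM 0 le_rfl)
  obtain ⟨a, -, ψ, hψ, hψT⟩ := tendsto_subseq_of_bounded
    (Metric.isBounded_closedBall (x := (0 : EuclideanSpace ℝ (Fin N))) (r := M))
    (x := fun n => u (s n)) (fun n => mem_closedBall_zero_iff.mpr (hM (s n) (hs0 n)))
  have hsψ : Tendsto (fun n => s (ψ n)) atTop atTop := by
    apply tendsto_atTop_mono (fun n => le_trans (le_trans (Nat.cast_le.mpr (hψ.le_apply)) (hs (ψ n))) le_rfl)
    exact tendsto_natCast_atTop_atTop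
  have hGa0 : gradient φ a = 0 := by
    have h1 : Tendsto (fun n => ‖gradient φ (u (s (ψ n)))‖) atTop (nhds ‖gradient φ a‖) :=
      ((hG_cont.tendsto a).comp hψT).norm
    have h2 : Tendsto (fun n => ‖gradient φ (u (s (ψ n)))‖) atTop (nhds 0) := by
      apply squeeze_zero (fun n => norm_nonneg _) (fun n => (hs' (ψ n)).le.trans ?_)
      · exact tendsto_one_div_add_atTop_nhds_zero_nat
      · have h3 : n ≤ ψ n := hψ.le_apply
        have h4 : (n:ℝ) + 1 ≤ (ψ n : ℝ) + 1 := by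
          have := Nat.cast_le (α := ℝ).mpr h3; linarith
        exact one_div_le_one_div_of_le (by positivity) h4
    have := tendsto_nhds_unique h1 h2
    rwa [norm_eq_zero] at this
  have hφaL : φ a = L := by
    have h1 : Tendsto (fun n => φ (u (s (ψ n)))) atTop (nhds (φ a)) :=
      (hφ.continuous.tendsto a).comp hψT
    have h2 : Tendsto (fun n => φ (u (s (ψ n)))) atTop (nhds L) := hyL.comp hsψ
    exact tendsto_nhds_unique h1 h2
  by_cases hcase : ∃ t₁ ≥ (0:ℝ), φ (u t₁) = L
  · obtain ⟨t₁, ht₁, hyt₁⟩ := hcase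
    have hyconst : ∀ t ≥ t₁, φ (u t) = L := fun t ht =>
      le_antisymm (hyt₁ ▸ hy_anti (Set.mem_Ici.mpr ht₁) (Set.mem_Ici.mpr (ht₁.trans ht)) ht)
        (hy_ge t (ht₁.trans ht))
    have hG0 : ∀ t > t₁, gradient φ (u t) = 0 := by
      intro t ht
      have ht0 : (0:ℝ) ≤ t := le_of_lt (lt_of_le_of_lt ht₁ ht)
      have hmin : IsLocalMin (fun t => φ (u t)) t := by
        filter_upwards [Ioi_mem_nhds ht] with r hr
        rw [hyconst t ht.le]
        exact hy_ge r (le_trans ht₁ (le_of_lt hr))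
      have h0 := hmin.hasDerivAt_eq_zero (hy t ht0)
      have : ‖gradient φ (u t)‖ = 0 := by nlinarith [norm_nonneg (gradient φ (u t))]
      rwa [norm_eq_zero] at this
    have hG0' : ∀ t ≥ t₁, gradient φ (u t) = 0 := by
      intro t ht
      rcases eq_or_lt_of_le ht with rfl | h
      · have h1 : Tendsto (fun r => gradient φ (u r)) (nhdsWithin t₁ (Set.Ioi t₁))
            (nhds (gradient φ (u t₁))) :=
          ((hG_cont.continuousAt).comp (hu t₁ ht₁).continuousAt).tendsto.mono_left nhdsWithin_le_nhds
        have heq : (fun _ : ℝ => (0 : EuclideanSpace ℝ (Fin N))) =ᶠ[nhdsWithin t₁ (Set.Ioi t₁)]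
            (fun r => gradient φ (u r)) := by
          filter_upwards [self_mem_nhdsWithin] with r hr
          exact (hG0 r hr).symm
        exact tendsto_nhds_unique h1 (Tendsto.congr' heq tendsto_const_nhds)
      · exact hG0 t h
    have huconst : ∀ t ≥ t₁, u t = u t₁ := by
      intro t ht
      have hb := (convex_Ici t₁).norm_image_sub_le_of_norm_hasDerivWithin_le
        (f := u) (f' := fun t => -(gradient φ (u t))) (C := 0)
        (fun r hr => (hu r (le_trans ht₁ hr)).hasDerivWithinAt)
        (fun r hr => by rw [norm_neg, hG0' r hr, norm_zero])
        Set.self_mem_Ici (Set.mem_Ici.mpr ht)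
      rw [zero_mul] at hb
      exact sub_eq_zero.mp (norm_le_zero_iff.mp hb)
    have hut₁a : u t₁ = a := by
      have h2 : (fun n => u (s (ψ n))) =ᶠ[atTop] (fun _ => u t₁) := by
        filter_upwards [hsψ.eventually_ge_atTop t₁] with n hn
        exact huconst _ hn
      exact tendsto_nhds_unique tendsto_const_nhds (Tendsto.congr' h2 hψT)
    have hzero : ∀ᶠ t in atTop, u t - a = 0 := by
      filter_upwards [eventually_ge_atTop t₁] with t ht
      rw [huconst t ht, hut₁a, sub_self]
    refine ⟨a, hGa0, ?_, ?_⟩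
    · have heq : (fun _ : ℝ => a) =ᶠ[atTop] u := by
        filter_upwards [eventually_ge_atTop t₁] with t ht
        rw [huconst t ht, hut₁a]
      exact Tendsto.congr' heq tendsto_const_nhds
    · intro θ hθ c hc σ hσ hineq
      constructor
      · intro _
        refine ⟨1, one_pos, ?_⟩
        apply IsBigO.of_bound 1
        filter_upwards [hzero] with t ht
        rw [ht, norm_zero]
        positivity
      · intro _
        apply IsBigO.of_bound 1
        filter_upwards [hzero] with t ht
        rw [ht, norm_zero]
        positivity
  · push_neg at hcase
    have hzpos : ∀ t ≥ (0:ℝ), 0 < φ (u t) - L := fun t ht =>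
      lt_of_le_of_ne (by linarith [hy_ge t ht]) (fun h => hcase t ht (by linarith))
    have key : ∀ θ c : ℝ, 0 < θ → θ ≤ 1 → 0 < c →
        ∀ s' t : ℝ, 0 ≤ s' → s' ≤ t →
        (∀ r ∈ Set.Icc s' t, c * (φ (u r) - L) ^ (1 - θ) ≤ ‖gradient φ (u r)‖) →
        ‖u t - u s'‖ ≤ (θ * c)⁻¹ * ((φ (u s') - L) ^ θ - (φ (u t) - L) ^ θ) := by
      intro θ c hθ hθ1 hc s' t hs'0 hs't hLoc
      have hIcc0 : Set.Icc s' t ⊆ Set.Ici (0:ℝ) := fun r hr => le_trans hs'0 hr.1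
      have huIcc : Set.uIcc s' t = Set.Icc s' t := Set.uIcc_of_le hs't
      have hu_int : IntervalIntegrable (fun r => -(gradient φ (u r)))
          MeasureTheory.volume s' t := by
        apply ContinuousOn.intervalIntegrable
        rw [huIcc]
        exact (hG_cont.comp_continuousOn (hu_cont.mono hIcc0)).neg
      have hftc : ∫ r in s'..t, -(gradient φ (u r)) = u t - u s' :=
        intervalIntegral.integral_eq_sub_of_hasDerivAt
          (fun r hr => hu r (hIcc0 (huIcc ▸ hr))) hu_int
      set H' : ℝ → ℝ := fun r => θ * (φ (u r) - L) ^ (θ - 1) * (-‖gradient φ (u r)‖ ^ 2)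
        with hH'def
      have hH : ∀ r ∈ Set.Icc s' t, HasDerivAt (fun r => (φ (u r) - L) ^ θ) (H' r) r := by
        intro r hr
        have hz := hzpos r (hIcc0 hr)
        have h1 : HasDerivAt (fun r => φ (u r) - L) (-‖gradient φ (u r)‖ ^ 2) r :=
          (hy r (hIcc0 hr)).sub_const L
        have h2 := (Real.hasDerivAt_rpow_const (x := φ (u r) - L) (p := θ)
          (Or.inl (ne_of_gt hz))).comp r h1
        exact h2
      have hH'cont : ContinuousOn H' (Set.Icc s' t) := by
        apply ContinuousOn.mul
        · apply ContinuousOn.mul continuousOn_const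
          exact ((hφ.continuous.comp_continuousOn (hu_cont.mono hIcc0)).sub
            continuousOn_const).rpow_const
            (fun r hr => Or.inl (ne_of_gt (hzpos r (hIcc0 hr))))
        · exact (((hG_cont.comp_continuousOn (hu_cont.mono hIcc0)).norm).pow 2).neg
      have hH'int : IntervalIntegrable H' MeasureTheory.volume s' t := by
        apply ContinuousOn.intervalIntegrable; rwa [huIcc]
      have hftcH : ∫ r in s'..t, H' r = (φ (u t) - L) ^ θ - (φ (u s') - L) ^ θ :=
        intervalIntegral.integral_eq_sub_of_hasDerivAt (fun r hr => hH r (huIcc ▸ hr)) hH'int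
      have hpt : ∀ r ∈ Set.Icc s' t, ‖gradient φ (u r)‖ ≤ (θ * c)⁻¹ * (-H' r) := by
        intro r hr
        have hz := hzpos r (hIcc0 hr)
        have hL1 := hLoc r hr
        have hg : (0:ℝ) ≤ ‖gradient φ (u r)‖ := norm_nonneg _
        have hzpow : (φ (u r) - L) ^ (θ - 1) * (φ (u r) - L) ^ (1 - θ) = 1 := by
          rw [← Real.rpow_add hz]; norm_num
        have hq : 0 < (φ (u r) - L) ^ (θ - 1) := Real.rpow_pos_of_pos hz _
        rw [le_inv_mul_iff₀ (by positivity)]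
        simp only [hH'def]
        have h6 : c * ‖gradient φ (u r)‖
            ≤ (φ (u r) - L) ^ (θ - 1) * ‖gradient φ (u r)‖ ^ 2 := by
          have e1 : c * ‖gradient φ (u r)‖
              = c * (φ (u r) - L) ^ (1 - θ) * ((φ (u r) - L) ^ (θ - 1) * ‖gradient φ (u r)‖) := by
            rw [show c * (φ (u r) - L) ^ (1 - θ) * ((φ (u r) - L) ^ (θ - 1) * ‖gradient φ (u r)‖)
              = c * ((φ (u r) - L) ^ (θ - 1) * (φ (u r) - L) ^ (1 - θ)) * ‖gradient φ (u r)‖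
              from by ring, hzpow, mul_one]
          rw [e1]
          calc c * (φ (u r) - L) ^ (1 - θ) * ((φ (u r) - L) ^ (θ - 1) * ‖gradient φ (u r)‖)
              ≤ ‖gradient φ (u r)‖ * ((φ (u r) - L) ^ (θ - 1) * ‖gradient φ (u r)‖) :=
                mul_le_mul_of_nonneg_right hL1 (mul_nonneg hq.le hg)
            _ = (φ (u r) - L) ^ (θ - 1) * ‖gradient φ (u r)‖ ^ 2 := by ring
        nlinarith [mul_le_mul_of_nonneg_left h6 hθ.le]
      calc ‖u t - u s'‖ = ‖∫ r in s'..t, -(gradient φ (u r))‖ := by rw [hftc]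
        _ ≤ ∫ r in s'..t, ‖-(gradient φ (u r))‖ :=
            intervalIntegral.norm_integral_le_integral_norm hs't
        _ ≤ ∫ r in s'..t, (θ * c)⁻¹ * (-H' r) := by
            apply intervalIntegral.integral_mono_on hs't _ ((hH'int.neg).const_mul _)
              (fun r hr => by rw [norm_neg]; exact hpt r hr)
            apply ContinuousOn.intervalIntegrable
            rw [huIcc]
            exact ((hG_cont.comp_continuousOn (hu_cont.mono hIcc0)).neg).norm
        _ = (θ * c)⁻¹ * ((φ (u s') - L) ^ θ - (φ (u t) - L) ^ θ) := by
            rw [intervalIntegral.integral_const_mul, intervalIntegral.integral_neg, hftcH]; ring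
    have habs : ∀ r ≥ (0:ℝ), |φ (u r) - φ a| = φ (u r) - L := by
      intro r hr; rw [hφaL]; exact abs_of_pos (hzpos r hr)
    have hLtraj : ∀ (θ c σ : ℝ),
        (∀ v, ‖v - a‖ < σ → c * |φ v - φ a| ^ (1 - θ) ≤ ‖gradient φ v‖) →
        ∀ r ≥ (0:ℝ), ‖u r - a‖ < σ →
          c * (φ (u r) - L) ^ (1 - θ) ≤ ‖gradient φ (u r)‖ := by
      intro θ c σ hIn r hr hball
      have := hIn (u r) hball
      rwa [habs r hr] at this
    obtain ⟨c₀, hc₀, σ₀, hσ₀, θ₀, hθ₀, hL₀⟩ := hLoj a hGa0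
    have hθ₀1 : θ₀ ≤ 1 := le_trans hθ₀.2 (by norm_num)
    have hinv₀ : (0:ℝ) ≤ (θ₀ * c₀)⁻¹ := inv_nonneg.mpr (mul_nonneg hθ₀.1.le hc₀.le)
    have hζ : Tendsto (fun n => ‖u (s (ψ n)) - a‖ + (θ₀ * c₀)⁻¹ * (φ (u (s (ψ n))) - L) ^ θ₀)
        atTop (nhds 0) := by
      have h1 : Tendsto (fun n => ‖u (s (ψ n)) - a‖) atTop (nhds 0) := by
        have := (hψT.sub_const a).norm
        rwa [sub_self, norm_zero] at this
      have h2 : Tendsto (fun n => (φ (u (s (ψ n))) - L) ^ θ₀) atTop (nhds 0) := by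
        have h3 : Tendsto (fun n => φ (u (s (ψ n))) - L) atTop (nhds 0) := by
          have := (hyL.comp hsψ).sub_const L
          rwa [sub_self] at this
        have h4 : ContinuousAt (fun x : ℝ => x ^ θ₀) 0 :=
          Real.continuousAt_rpow_const 0 θ₀ (Or.inr hθ₀.1.le)
        have h5 := h4.tendsto.comp h3
        rwa [Function.comp_def, Real.zero_rpow (ne_of_gt hθ₀.1)] at h5
      have h6 := h1.add (h2.const_mul ((θ₀ * c₀)⁻¹))
      simpa [mul_comm] using h6
    obtain ⟨n₀, hn₀⟩ := (hζ.eventually (gt_mem_nhds hσ₀)).exists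
    set t₀ := s (ψ n₀) with ht₀def
    have ht₀0 : (0:ℝ) ≤ t₀ := hs0 _
    have hζ0 : ‖u t₀ - a‖ + (θ₀ * c₀)⁻¹ * (φ (u t₀) - L) ^ θ₀ < σ₀ := hn₀
    have hHnn : ∀ t ≥ (0:ℝ), ∀ θ : ℝ, (0:ℝ) ≤ (φ (u t) - L) ^ θ :=
      fun t ht θ => Real.rpow_nonneg (hzpos t ht).le _
    have htrap : ∀ t ≥ t₀, ‖u t - a‖ < σ₀ := by
      by_contra hcon
      push_neg at hcon
      obtain ⟨τ₀, hτ₀, hτ₀'⟩ := hcon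
      set B := {t : ℝ | t₀ ≤ t ∧ σ₀ ≤ ‖u t - a‖} with hBdef
      have hBne : B.Nonempty := ⟨τ₀, hτ₀, hτ₀'⟩
      have hBbd : BddBelow B := ⟨t₀, fun x hx => hx.1⟩
      set τ := sInf B with hτdef
      have hτt₀ : t₀ ≤ τ := le_csInf hBne (fun x hx => hx.1)
      have hτ0 : (0:ℝ) ≤ τ := le_trans ht₀0 hτt₀
      have hcont : ContinuousAt (fun t => ‖u t - a‖) τ :=
        (((hu τ hτ0).continuousAt).sub continuousAt_const).norm
      have hτB : σ₀ ≤ ‖u τ - a‖ := by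
        have hmem : τ ∈ closure B := csInf_mem_closure hBne hBbd
        have hne : (nhdsWithin τ B).NeBot := mem_closure_iff_nhdsWithin_neBot.mp hmem
        refine ge_of_tendsto (hcont.tendsto.mono_left
          (nhdsWithin_le_nhds : nhdsWithin τ B ≤ nhds τ)) ?_
        filter_upwards [self_mem_nhdsWithin] with x hx using hx.2
      have ht₀τ : t₀ < τ := by
        rcases eq_or_lt_of_le hτt₀ with heq | h
        · exfalso
          have hp : (0:ℝ) ≤ (θ₀ * c₀)⁻¹ * (φ (u t₀) - L) ^ θ₀ :=
            mul_nonneg hinv₀ (hHnn t₀ ht₀0 θ₀)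
          rw [← heq] at hτB
          linarith
        · exact h
      have hball : ∀ r, t₀ ≤ r → r < τ → ‖u r - a‖ < σ₀ := by
        intro r hr hrτ
        by_contra hcon2
        exact absurd (csInf_le hBbd ⟨hr, not_lt.mp hcon2⟩) (not_le.mpr hrτ)
      have hbound : ∀ r, t₀ ≤ r → r < τ →
          ‖u r - a‖ ≤ ‖u t₀ - a‖ + (θ₀ * c₀)⁻¹ * (φ (u t₀) - L) ^ θ₀ := by
        intro r hr hrτ
        have hk := key θ₀ c₀ hθ₀.1 hθ₀1 hc₀ t₀ r ht₀0 hr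
          (fun ρ hρ => hLtraj θ₀ c₀ σ₀ hL₀ ρ (le_trans ht₀0 hρ.1)
            (hball ρ hρ.1 (lt_of_le_of_lt hρ.2 hrτ)))
        have hzr := hHnn r (le_trans ht₀0 hr) θ₀
        have htri : ‖u r - a‖ ≤ ‖u r - u t₀‖ + ‖u t₀ - a‖ := by
          calc ‖u r - a‖ = ‖(u r - u t₀) + (u t₀ - a)‖ := by rw [sub_add_sub_cancel]
            _ ≤ _ := norm_add_le _ _
        have hm2 := mul_le_mul_of_nonneg_left
          (sub_le_self ((φ (u t₀) - L) ^ θ₀) hzr) hinv₀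
        linarith
      have hlim : ‖u τ - a‖ ≤ ‖u t₀ - a‖ + (θ₀ * c₀)⁻¹ * (φ (u t₀) - L) ^ θ₀ := by
        refine le_of_tendsto (hcont.tendsto.mono_left
          (nhdsWithin_le_nhds : nhdsWithin τ (Set.Iio τ) ≤ nhds τ)) ?_
        filter_upwards [self_mem_nhdsWithin,
          mem_nhdsWithin_of_mem_nhds (Ioi_mem_nhds ht₀τ)] with r hr1 hr2
        exact hbound r (le_of_lt hr2) hr1
      linarith
    have hconv : Tendsto u atTop (nhds a) := by
      rw [Metric.tendsto_atTop]
      intro ε hε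
      obtain ⟨n₁, hn₁⟩ := ((hζ.eventually (gt_mem_nhds hε)).and
        (hsψ.eventually_ge_atTop t₀)).exists
      refine ⟨s (ψ n₁), fun t ht => ?_⟩
      have hs₁t₀ : t₀ ≤ s (ψ n₁) := hn₁.2
      have hs₁0 : (0:ℝ) ≤ s (ψ n₁) := le_trans ht₀0 hs₁t₀
      have hk := key θ₀ c₀ hθ₀.1 hθ₀1 hc₀ (s (ψ n₁)) t hs₁0 ht
        (fun ρ hρ => hLtraj θ₀ c₀ σ₀ hL₀ ρ (le_trans hs₁0 hρ.1)
          (htrap ρ (le_trans hs₁t₀ hρ.1)))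
      have hzr := hHnn t (le_trans hs₁0 ht) θ₀
      rw [dist_eq_norm]
      have htri : ‖u t - a‖ ≤ ‖u t - u (s (ψ n₁))‖ + ‖u (s (ψ n₁)) - a‖ := by
        calc ‖u t - a‖ = ‖(u t - u (s (ψ n₁))) + (u (s (ψ n₁)) - a)‖ := by
              rw [sub_add_sub_cancel]
          _ ≤ _ := norm_add_le _ _
      have hm2 := mul_le_mul_of_nonneg_left
        (sub_le_self ((φ (u (s (ψ n₁))) - L) ^ θ₀) hzr) hinv₀
      linarith [hn₁.1]
    have hrate0 : ∀ θ c σ : ℝ, 0 < θ → θ ≤ 1 → 0 < c → 0 < σ →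
        (∀ v, ‖v - a‖ < σ → c * |φ v - φ a| ^ (1 - θ) ≤ ‖gradient φ v‖) →
        ∃ t₁ : ℝ, 0 ≤ t₁ ∧ ∀ t ≥ t₁, ‖u t - a‖ < σ ∧
          ‖u t - a‖ ≤ (θ * c)⁻¹ * (φ (u t) - L) ^ θ := by
      intro θ c σ hθ hθ1 hc hσ hIn
      obtain ⟨T, hT⟩ := (Metric.tendsto_atTop.mp hconv) σ hσ
      refine ⟨max T 0, le_max_right _ _, fun t ht => ?_⟩
      have ht0 : (0:ℝ) ≤ t := le_trans (le_max_right T 0) ht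
      have hballt : ∀ r ≥ t, ‖u r - a‖ < σ := fun r hr => by
        have := hT r (le_trans (le_max_left T 0) (le_trans ht hr))
        rwa [dist_eq_norm] at this
      refine ⟨hballt t le_rfl, ?_⟩
      have hlim : Tendsto (fun T' => ‖u T' - u t‖) atTop (nhds ‖a - u t‖) :=
        (hconv.sub_const (u t)).norm
      have hev : ∀ᶠ T' in atTop, ‖u T' - u t‖ ≤ (θ * c)⁻¹ * (φ (u t) - L) ^ θ := by
        filter_upwards [eventually_ge_atTop t] with T' hT'
        have hk := key θ c hθ hθ1 hc t T' ht0 hT'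
          (fun ρ hρ => hLtraj θ c σ hIn ρ (le_trans ht0 hρ.1) (hballt ρ hρ.1))
        have hzr := hHnn T' (le_trans ht0 hT') θ
        have hinv : (0:ℝ) ≤ (θ * c)⁻¹ := inv_nonneg.mpr (mul_nonneg hθ.le hc.le)
        have hm2 := mul_le_mul_of_nonneg_left
          (sub_le_self ((φ (u t) - L) ^ θ) hzr) hinv
        linarith
      have hfin := le_of_tendsto hlim hev
      rwa [norm_sub_rev] at hfin
    refine ⟨a, hGa0, hconv, ?_⟩
    intro θ hθIoc c hc σ hσ hineq
    have hθpos : (0:ℝ) < θ := hθIoc.1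
    have hθ1 : θ ≤ 1 := le_trans hθIoc.2 (by norm_num)
    obtain ⟨t₁, ht₁0, hB⟩ := hrate0 θ c σ hθpos hθ1 hc hσ hineq
    have hzt₁ : 0 < φ (u t₁) - L := hzpos t₁ ht₁0
    constructor
    · intro hhalf
      subst hhalf
      refine ⟨2⁻¹ * c^2, mul_pos (by norm_num) (pow_pos hc 2), ?_⟩
      have hg2 : ∀ t ≥ t₁, c^2 * (φ (u t) - L) ≤ ‖gradient φ (u t)‖^2 := by
        intro t ht
        have ht0 : (0:ℝ) ≤ t := le_trans ht₁0 ht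
        have hz := hzpos t ht0
        have h1 := hLtraj (1/2) c σ hineq t ht0 (hB t ht).1
        have h2 : (0:ℝ) ≤ c * (φ (u t) - L) ^ (1 - (1/2 : ℝ)) :=
          mul_nonneg hc.le (Real.rpow_nonneg hz.le _)
        have h3 := mul_self_le_mul_self h2 h1
        have h4 : (φ (u t) - L) ^ (1 - (1/2:ℝ)) * (φ (u t) - L) ^ (1 - (1/2:ℝ))
            = φ (u t) - L := by
          rw [← Real.rpow_add hz]; norm_num
        nlinarith [h3, h4]
      have hganti : AntitoneOn (fun t => (φ (u t) - L) * Real.exp (c^2 * t))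
          (Set.Ici t₁) := by
        apply anti_aux (f' := fun t =>
          (-‖gradient φ (u t)‖^2) * Real.exp (c^2 * t)
            + (φ (u t) - L) * (Real.exp (c^2 * t) * c^2))
        · intro t ht
          have ht0 : (0:ℝ) ≤ t := le_trans ht₁0 ht
          have hexp : HasDerivAt (fun t => Real.exp (c^2 * t))
              (Real.exp (c^2 * t) * c^2) t := by
            simpa using ((hasDerivAt_id t).const_mul (c^2)).exp
          exact ((hy t ht0).sub_const L).mul hexp
        · intro t ht
          have hE : (0:ℝ) < Real.exp (c^2 * t) := Real.exp_pos _
          nlinarith [hg2 t ht]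
      have hzdecay : ∀ t ≥ t₁, φ (u t) - L
          ≤ (φ (u t₁) - L) * Real.exp (c^2 * t₁) * Real.exp (-(c^2) * t) := by
        intro t ht
        have h5 := hganti Set.self_mem_Ici (Set.mem_Ici.mpr ht) ht
        have hE : (0:ℝ) < Real.exp (c^2 * t) := Real.exp_pos _
        rw [show (-(c^2) * t) = -(c^2 * t) from by ring, Real.exp_neg, ← div_eq_mul_inv,
          le_div_iff₀ hE]
        exact h5
      set K : ℝ := (φ (u t₁) - L) * Real.exp (c^2 * t₁) with hKdef
      have hK : 0 < K := mul_pos hzt₁ (Real.exp_pos _)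
      apply IsBigO.of_bound (((1/2:ℝ)*c)⁻¹ * K ^ ((1:ℝ)/2))
      filter_upwards [eventually_ge_atTop t₁] with t ht
      have ht0 : (0:ℝ) ≤ t := le_trans ht₁0 ht
      have h6 := (hB t ht).2
      have hz := hzpos t ht0
      have h7 : (φ (u t) - L) ^ ((1:ℝ)/2) ≤ (K * Real.exp (-(c^2) * t)) ^ ((1:ℝ)/2) :=
        Real.rpow_le_rpow hz.le (hzdecay t ht) (by norm_num)
      have h8 : (K * Real.exp (-(c^2) * t)) ^ ((1:ℝ)/2)
          = K ^ ((1:ℝ)/2) * Real.exp (-(2⁻¹ * c^2) * t) := by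
        rw [Real.mul_rpow hK.le (Real.exp_pos _).le, ← Real.exp_mul]
        ring_nf
      have h9 : ‖Real.exp (-(2⁻¹ * c^2) * t)‖ = Real.exp (-(2⁻¹ * c^2) * t) := by
        rw [Real.norm_eq_abs, abs_of_pos (Real.exp_pos _)]
      rw [h9]
      have hinv : (0:ℝ) ≤ ((1/2:ℝ)*c)⁻¹ := inv_nonneg.mpr (by positivity)
      have h10 := mul_le_mul_of_nonneg_left (le_trans h7 (le_of_eq h8)) hinv
      calc ‖u t - a‖ ≤ ((1/2:ℝ)*c)⁻¹ * (φ (u t) - L) ^ ((1:ℝ)/2) := by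
            convert h6 using 3
        _ ≤ ((1/2:ℝ)*c)⁻¹ * (K ^ ((1:ℝ)/2) * Real.exp (-(2⁻¹ * c^2) * t)) := h10
        _ = ((1/2:ℝ)*c)⁻¹ * K ^ ((1:ℝ)/2) * Real.exp (-(2⁻¹ * c^2) * t) := by ring
    · intro hlt
      set βm : ℝ := 1 - 2*θ with hmdef
      have hm : 0 < βm := by rw [hmdef]; linarith
      set κ : ℝ := c^2 * βm with hκdef
      have hκ : 0 < κ := mul_pos (pow_pos hc 2) hm
      set β : ℝ := θ / βm with hβdef
      have hβ : 0 < β := div_pos hθpos hm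
      have hg2 : ∀ t ≥ t₁, c^2 * (φ (u t) - L) ^ (2 - 2*θ) ≤ ‖gradient φ (u t)‖^2 := by
        intro t ht
        have ht0 : (0:ℝ) ≤ t := le_trans ht₁0 ht
        have hz := hzpos t ht0
        have h1 := hLtraj θ c σ hineq t ht0 (hB t ht).1
        have h2 : (0:ℝ) ≤ c * (φ (u t) - L) ^ (1 - θ) :=
          mul_nonneg hc.le (Real.rpow_nonneg hz.le _)
        have h3 := mul_self_le_mul_self h2 h1
        have h4 : (φ (u t) - L) ^ (1 - θ) * (φ (u t) - L) ^ (1 - θ)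
            = (φ (u t) - L) ^ (2 - 2*θ) := by
          rw [← Real.rpow_add hz]; ring_nf
        nlinarith [h3, h4]
      have hwmono : MonotoneOn (fun t => (φ (u t) - L) ^ (-βm) - κ * t) (Set.Ici t₁) := by
        apply mono_aux (f' := fun t =>
          (-βm) * (φ (u t) - L) ^ (-βm - 1) * (-‖gradient φ (u t)‖^2) - κ)
        · intro t ht
          have ht0 : (0:ℝ) ≤ t := le_trans ht₁0 ht
          have h1 : HasDerivAt (fun r => φ (u r) - L) (-‖gradient φ (u t)‖ ^ 2) t :=
            (hy t ht0).sub_const L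
          have h2 := (Real.hasDerivAt_rpow_const (x := φ (u t) - L) (p := -βm)
            (Or.inl (ne_of_gt (hzpos t ht0)))).comp t h1
          exact (h2.sub ((hasDerivAt_id t).const_mul κ)).congr_deriv (by simp)
        · intro t ht
          have hz := hzpos t (le_trans ht₁0 ht)
          have hq : 0 < (φ (u t) - L) ^ (-βm - 1) := Real.rpow_pos_of_pos hz _
          have h3 := hg2 t ht
          have h5 : (φ (u t) - L) ^ (-βm - 1) * (c^2 * (φ (u t) - L) ^ (2 - 2*θ))
              = c^2 := by
            rw [show (φ (u t) - L) ^ (-βm - 1) * (c^2 * (φ (u t) - L) ^ (2 - 2*θ))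
              = c^2 * ((φ (u t) - L) ^ (-βm - 1) * (φ (u t) - L) ^ (2 - 2*θ)) from by ring,
              ← Real.rpow_add hz, show -βm - 1 + (2 - 2*θ) = 0 from by rw [hmdef]; ring,
              Real.rpow_zero, mul_one]
          have h6 := mul_le_mul_of_nonneg_left h3 hq.le
          have h7 : c^2 ≤ (φ (u t) - L) ^ (-βm - 1) * ‖gradient φ (u t)‖^2 := by
            rw [← h5]; exact h6
          nlinarith [mul_le_mul_of_nonneg_left h7 hm.le]
      have hwlb : ∀ t ≥ t₁, κ * (t - t₁) ≤ (φ (u t) - L) ^ (-βm) := by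
        intro t ht
        have h7 := hwmono Set.self_mem_Ici (Set.mem_Ici.mpr ht) ht
        have h8 : 0 < (φ (u t₁) - L) ^ (-βm) := Real.rpow_pos_of_pos hzt₁ _
        simp only [] at h7
        nlinarith
      apply IsBigO.of_bound ((θ*c)⁻¹ * (κ/2) ^ (-β))
      filter_upwards [eventually_ge_atTop (max (2*t₁) 1)] with t ht
      have ht1 : (1:ℝ) ≤ t := le_trans (le_max_right _ _) ht
      have ht2 : 2*t₁ ≤ t := le_trans (le_max_left _ _) ht
      have htt₁ : t₁ ≤ t := by linarith
      have htpos : (0:ℝ) < t := lt_of_lt_of_le zero_lt_one ht1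
      have hhalf : t/2 ≤ t - t₁ := by linarith
      have hw := hwlb t htt₁
      have hz := hzpos t (le_trans ht₁0 htt₁)
      have hzw : (φ (u t) - L) ^ θ = ((φ (u t) - L) ^ (-βm)) ^ (-β) := by
        rw [← Real.rpow_mul hz.le]
        congr 1
        rw [hβdef]
        field_simp
      have hκt : 0 < κ * (t - t₁) := mul_pos hκ (by linarith)
      have h9 : ((φ (u t) - L) ^ (-βm)) ^ (-β) ≤ (κ * (t - t₁)) ^ (-β) :=
        Real.rpow_le_rpow_of_nonpos hκt hw (neg_nonpos.mpr hβ.le)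
      have h10 : (κ * (t - t₁)) ^ (-β) ≤ (κ * (t/2)) ^ (-β) :=
        Real.rpow_le_rpow_of_nonpos (mul_pos hκ (by linarith))
          (mul_le_mul_of_nonneg_left hhalf hκ.le) (neg_nonpos.mpr hβ.le)
      have h11 : (κ * (t/2)) ^ (-β) = (κ/2) ^ (-β) * t ^ (-β) := by
        rw [show κ * (t/2) = (κ/2) * t from by ring,
          Real.mul_rpow (by positivity) htpos.le]
      have h13 : ‖(t : ℝ) ^ (-β)‖ = t ^ (-β) := by
        rw [Real.norm_eq_abs, abs_of_nonneg (Real.rpow_nonneg htpos.le _)]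
      rw [h13]
      have hinv : (0:ℝ) ≤ (θ*c)⁻¹ := inv_nonneg.mpr (mul_nonneg hθpos.le hc.le)
      have h12 := (hB t htt₁).2
      calc ‖u t - a‖ ≤ (θ*c)⁻¹ * (φ (u t) - L) ^ θ := h12
        _ ≤ (θ*c)⁻¹ * ((κ/2) ^ (-β) * t ^ (-β)) := by
            rw [hzw] at h12 ⊢
            exact mul_le_mul_of_nonneg_left (le_trans h9 (le_trans h10 (le_of_eq h11))) hinv
        _ = (θ*c)⁻¹ * (κ/2) ^ (-β) * t ^ (-β) := by ring
end

section
/- Let 𝓕 : ℝ^N → ℝ^N be continuous and let u : [0,∞) → ℝ^N be a bounded C¹ solution of u′(t) + 𝓕(u(t)) = 0. Assume there exist a C¹ function 𝓔 : ℝ^N → ℝ, constants β ≥ 1, θ ∈ (0,1), c, c₁, T > 0 such that: β(1−θ) < 1; 𝓔(u(t)) ≥ 0 for all t ≥ T; ⟨∇𝓔(u(t)), 𝓕(u(t))⟩ ≥ c·‖∇𝓔(u(t))‖^β·‖𝓕(u(t))‖ for all t ≥ T; ‖∇𝓔(u(t))‖ ≥ c₁·𝓔(u(t))^{1−θ} for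 all t ≥ T; and ∇𝓔(a) = 0 implies 𝓕(a) = 0 for every a ∈ ℝ^N. Then there exists a ∈ ℝ^N with u(t) → a as t → ∞. Moreover, if in addition there exists c₂ > 0 with ‖𝓕(u(t))‖ ≥ c₂·𝓔(u(t))^{1−θ} for all t ≥ T, then ‖u(t) − a‖ = O(e^{−δt}) for some δ > 0 if β = θ/(1−θ), and ‖u(t) − a‖ = O(t^{−(1−β(1−θ))/(β(1−θ)−θ)}) if β > θ/(1−θ). -/
open Filter Set Asymptotics
open scoped RealInnerProductSpace

set_option maxHeartbeats 2000000 in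
/-- Theorem 9.3.1 (abstract convergence theorem of Haraux–Jendoubi type):
convergence and decay rates for bounded solutions of `u' + 𝓕(u) = 0` under an
angle condition and Łojasiewicz-type inequalities along the trajectory. -/
theorem stmt_15 {N : ℕ} (F : EuclideanSpace ℝ (Fin N) → EuclideanSpace ℝ (Fin N))
    (hF : Continuous F)
    (u : ℝ → EuclideanSpace ℝ (Fin N))
    (hu : ∀ t ≥ (0:ℝ), HasDerivAt u (-(F (u t))) t)
    (hbdd : ∃ M : ℝ, ∀ t ≥ (0:ℝ), ‖u t‖ ≤ M)
    (E : EuclideanSpace ℝ (Fin N) → ℝ) (hE : ContDiff ℝ 1 E)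
    (β θ c c₁ T : ℝ) (hβ : 1 ≤ β) (hθ : θ ∈ Set.Ioo (0:ℝ) 1)
    (hc : 0 < c) (hc₁ : 0 < c₁) (hT : 0 < T)
    (hβθ : β * (1 - θ) < 1)
    (hpos : ∀ t ≥ T, 0 ≤ E (u t))
    (hangle : ∀ t ≥ T,
      c * ‖gradient E (u t)‖ ^ β * ‖F (u t)‖ ≤ ⟪gradient E (u t), F (u t)⟫)
    (hgrad : ∀ t ≥ T, c₁ * E (u t) ^ (1 - θ) ≤ ‖gradient E (u t)‖)
    (hcrit : ∀ a : EuclideanSpace ℝ (Fin N), gradient E a = 0 → F a = 0) :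
    ∃ a : EuclideanSpace ℝ (Fin N), Filter.Tendsto u Filter.atTop (nhds a) ∧
      ∀ c₂ > (0:ℝ), (∀ t ≥ T, c₂ * E (u t) ^ (1 - θ) ≤ ‖F (u t)‖) →
        ((β = θ / (1 - θ) → ∃ δ > (0:ℝ),
            (fun t => u t - a) =O[Filter.atTop] fun t => Real.exp (-δ * t)) ∧
         (θ / (1 - θ) < β →
            (fun t => u t - a) =O[Filter.atTop]
              fun t : ℝ => t ^ (-((1 - β * (1 - θ)) / (β * (1 - θ) - θ))))) := by
  obtain ⟨hθ0, hθ1⟩ := hθ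
  have h1θ : (0:ℝ) < 1 - θ := by linarith
  set g : ℝ → EuclideanSpace ℝ (Fin N) := fun t => gradient E (u t) with hgdef
  set e : ℝ → ℝ := fun t => E (u t) with hedef
  have hT0 : (0:ℝ) ≤ T := hT.le
  have hpos' : ∀ t, T ≤ t → 0 ≤ e t := hpos
  have hangle' : ∀ t, T ≤ t → c * ‖g t‖ ^ β * ‖F (u t)‖ ≤ ⟪g t, F (u t)⟫ := hangle
  have hgrad' : ∀ t, T ≤ t → c₁ * e t ^ (1 - θ) ≤ ‖g t‖ := hgrad
  -- derivative of the energy along the trajectory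
  have he' : ∀ t : ℝ, 0 ≤ t → HasDerivAt e (-⟪g t, F (u t)⟫) t := by
    intro t ht
    have h1 : HasGradientAt E (gradient E (u t)) (u t) :=
      (hE.differentiable one_ne_zero (u t)).hasGradientAt
    have h2 := h1.hasFDerivAt.comp_hasDerivAt t (hu t ht)
    simpa [hgdef, hedef, gradient, InnerProductSpace.toDual_symm_apply, inner_neg_right, Function.comp_def] using h2
  have hinner : ∀ t, T ≤ t → 0 ≤ ⟪g t, F (u t)⟫ := by
    intro t ht
    refine le_trans ?_ (hangle' t ht)
    positivity
  -- the energy is nonincreasing on [T, ∞)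
  have he_anti : AntitoneOn e (Ici T) := by
    apply antitoneOn_of_deriv_nonpos (convex_Ici T)
    · exact fun t ht => ((he' t (hT0.trans ht)).continuousAt).continuousWithinAt
    · intro t ht
      rw [interior_Ici] at ht
      exact ((he' t (hT0.trans ht.le)).differentiableAt).differentiableWithinAt
    · intro t ht
      rw [interior_Ici] at ht
      rw [(he' t (hT0.trans ht.le)).deriv]
      simpa using hinner t ht.le
  by_cases hzero : ∃ t₀, T ≤ t₀ ∧ e t₀ = 0
  · -- degenerate case: the energy vanishes, the solution is eventually constant
    obtain ⟨t₀, ht₀T, ht₀⟩ := hzero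
    have hez : ∀ t, t₀ ≤ t → e t = 0 := by
      intro t ht
      refine le_antisymm ?_ (hpos' t (ht₀T.trans ht))
      have := he_anti (mem_Ici.mpr ht₀T) (mem_Ici.mpr (ht₀T.trans ht)) ht
      linarith
    have hF0 : ∀ t, t₀ ≤ t → F (u t) = 0 := by
      intro t ht
      have h1 : HasDerivWithinAt e (-⟪g t, F (u t)⟫) (Ici t) t :=
        (he' t (hT0.trans (ht₀T.trans ht))).hasDerivWithinAt
      have h2 : HasDerivWithinAt e 0 (Ici t) t := by
        have hcg : ∀ s ∈ Ici t, e s = 0 := fun s hs => hez s (ht.trans hs)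
        exact (hasDerivWithinAt_const t _ (0:ℝ)).congr hcg (hcg t self_mem_Ici)
      have hud : UniqueDiffWithinAt ℝ (Ici t) t := uniqueDiffOn_Ici t t (self_mem_Ici)
      have h3 : -⟪g t, F (u t)⟫ = 0 := by
        rw [← h1.derivWithin hud, h2.derivWithin hud]
      have h4 : c * ‖g t‖ ^ β * ‖F (u t)‖ ≤ 0 := by
        have := hangle' t (ht₀T.trans ht)
        have h5 : ⟪g t, F (u t)⟫ = 0 := by linarith [neg_eq_zero.mp h3]
        linarith [h5 ▸ this]
      have h6 : ‖g t‖ ^ β * ‖F (u t)‖ = 0 := by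
        have h7 : 0 ≤ ‖g t‖ ^ β * ‖F (u t)‖ := by positivity
        nlinarith
      rcases mul_eq_zero.mp h6 with h8 | h8
      · have h9 : ‖g t‖ = 0 := by
          have : β ≠ 0 := by linarith
          exact (Real.rpow_eq_zero (norm_nonneg _) this).mp h8
        exact hcrit (u t) (norm_eq_zero.mp h9)
      · exact norm_eq_zero.mp h8
    have hconst : ∀ t, t₀ ≤ t → u t = u t₀ := by
      intro t ht
      have key := norm_image_sub_le_of_norm_deriv_le_segment'
        (f := u) (f' := fun s => -(F (u s))) (a := t₀) (b := t) (C := 0)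
        (fun x hx => ((hu x (hT0.trans (ht₀T.trans hx.1))).hasDerivWithinAt))
        (fun x hx => by show ‖-(F (u x))‖ ≤ (0:ℝ); rw [hF0 x hx.1]; simp)
        t (right_mem_Icc.mpr ht)
      have : ‖u t - u t₀‖ ≤ 0 := by simpa using key
      have := le_antisymm this (norm_nonneg _)
      rwa [norm_eq_zero, sub_eq_zero] at this
    refine ⟨u t₀, ?_, ?_⟩
    · refine Tendsto.congr' ?_ (tendsto_const_nhds (x := u t₀))
      filter_upwards [eventually_ge_atTop t₀] with t ht
      exact (hconst t ht).symm
    · intro c₂ hc₂ hF2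
      have hzero' : (fun t => u t - u t₀) =ᶠ[atTop]
          (fun _ => (0 : EuclideanSpace ℝ (Fin N))) := by
        filter_upwards [eventually_ge_atTop t₀] with t ht
        simp [hconst t ht]
      exact ⟨fun _ => ⟨1, one_pos, hzero'.trans_isBigO (isBigO_zero _ _)⟩,
        fun _ => hzero'.trans_isBigO (isBigO_zero _ _)⟩
  · -- main case: the energy is positive on [T, ∞)
    push_neg at hzero
    have he_pos : ∀ t, T ≤ t → 0 < e t := fun t ht =>
      lt_of_le_of_ne (hpos' t ht) (Ne.symm (hzero t ht))
    set γ : ℝ := 1 - β * (1 - θ) with hγdef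
    set μ : ℝ := β * (1 - θ) - θ with hμdef
    have hγ : 0 < γ := by rw [hγdef]; linarith
    set c₁β : ℝ := c₁ ^ β with hc₁βdef
    have hc₁β : 0 < c₁β := Real.rpow_pos_of_pos hc₁ β
    set K : ℝ := (γ * (c * c₁β))⁻¹ with hKdef
    have hK : 0 < K := by positivity
    -- gradient lower bound in power form
    have hgb : ∀ t, T ≤ t → c₁β * e t ^ (β * (1 - θ)) ≤ ‖g t‖ ^ β := by
      intro t ht
      have het := he_pos t ht
      have h2 : (c₁ * e t ^ (1 - θ)) ^ β ≤ ‖g t‖ ^ β :=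
        Real.rpow_le_rpow (by positivity) (hgrad' t ht) (by linarith)
      calc c₁β * e t ^ (β * (1 - θ))
          = (c₁ * e t ^ (1 - θ)) ^ β := by
            rw [Real.mul_rpow hc₁.le (Real.rpow_nonneg het.le _), mul_comm β,
              Real.rpow_mul het.le]
        _ ≤ ‖g t‖ ^ β := h2
    -- key pointwise bound for the length estimate
    have hkey : ∀ t, T ≤ t →
        c * c₁β * ‖F (u t)‖ ≤ e t ^ (γ - 1) * ⟪g t, F (u t)⟫ := by
      intro t ht
      have het := he_pos t ht
      have h3 : c * (c₁β * e t ^ (β * (1 - θ))) * ‖F (u t)‖ ≤ ⟪g t, F (u t)⟫ := by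
        refine le_trans ?_ (hangle' t ht)
        have := hgb t ht
        exact mul_le_mul_of_nonneg_right
          (mul_le_mul_of_nonneg_left (hgb t ht) hc.le) (norm_nonneg _)
      have h4 : (0:ℝ) ≤ e t ^ (γ - 1) := (Real.rpow_pos_of_pos het _).le
      have h5 := mul_le_mul_of_nonneg_left h3 h4
      have h6 : e t ^ (γ - 1) * e t ^ (β * (1 - θ)) = 1 := by
        rw [← Real.rpow_add het, show γ - 1 + β * (1 - θ) = 0 by rw [hγdef]; ring,
          Real.rpow_zero]
      calc c * c₁β * ‖F (u t)‖
          = e t ^ (γ - 1) * (c * (c₁β * e t ^ (β * (1 - θ))) * ‖F (u t)‖) := by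
            rw [show e t ^ (γ - 1) * (c * (c₁β * e t ^ (β * (1 - θ))) * ‖F (u t)‖)
              = (e t ^ (γ - 1) * e t ^ (β * (1 - θ))) * (c * c₁β * ‖F (u t)‖) from by ring,
              h6, one_mul]
        _ ≤ e t ^ (γ - 1) * ⟪g t, F (u t)⟫ := h5
    -- derivative of φ = e ^ γ
    have hφ' : ∀ t, T ≤ t → HasDerivAt (fun s => e s ^ γ)
        (γ * e t ^ (γ - 1) * -⟪g t, F (u t)⟫) t := by
      intro t ht
      exact (Real.hasDerivAt_rpow_const (p := γ) (Or.inl (he_pos t ht).ne')).comp t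
        (he' t (hT0.trans ht))
    -- length estimate
    have hlen : ∀ s s', T ≤ s → s ≤ s' →
        ‖u s' - u s‖ ≤ K * (e s ^ γ - e s' ^ γ) := by
      intro s s' hs hss'
      have key := image_norm_le_of_norm_deriv_right_le_deriv_boundary'
        (f := fun x => u x - u s) (f' := fun x => -(F (u x)))
        (a := s) (b := s')
        (B := fun x => K * (e s ^ γ - e x ^ γ))
        (B' := fun x => K * (γ * e x ^ (γ - 1) * ⟪g x, F (u x)⟫))
        (fun x hx => (((hu x (hT0.trans (hs.trans hx.1))).continuousAt).sub
          continuousAt_const).continuousWithinAt)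
        (fun x hx => ((hu x (hT0.trans (hs.trans hx.1))).sub_const (u s)).hasDerivWithinAt)
        (by simp)
        (fun x hx => (continuousAt_const.mul (continuousAt_const.sub
          ((hφ' x (hs.trans hx.1)).continuousAt))).continuousWithinAt)
        (fun x hx => by
          have h1 := ((hasDerivAt_const x (e s ^ γ)).sub (hφ' x (hs.trans hx.1))).const_mul K
          have h2 : K * (0 - γ * e x ^ (γ - 1) * -⟪g x, F (u x)⟫)
              = K * (γ * e x ^ (γ - 1) * ⟪g x, F (u x)⟫) := by ring
          rw [h2] at h1
          exact h1.hasDerivWithinAt)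
        (fun x hx => by
          have hxT : T ≤ x := hs.trans hx.1
          have h1 := hkey x hxT
          have h2 : K * (γ * e x ^ (γ - 1) * ⟪g x, F (u x)⟫)
              = (e x ^ (γ - 1) * ⟪g x, F (u x)⟫) / (c * c₁β) := by
            rw [hKdef]; field_simp
          show ‖-(F (u x))‖ ≤ K * (γ * e x ^ (γ - 1) * ⟪g x, F (u x)⟫)
          rw [norm_neg, h2, le_div_iff₀ (by positivity)]
          nlinarith)
      have := key (right_mem_Icc.mpr hss')
      simpa using this
    -- φ is nonincreasing in the weak sense we need
    have hφ_anti : ∀ s s', T ≤ s → s ≤ s' → e s' ^ γ ≤ e s ^ γ := by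
      intro s s' hs hss'
      have h1 := (norm_nonneg (u s' - u s)).trans (hlen s s' hs hss')
      nlinarith
    -- the Cauchy property
    set ψ : ℝ → ℝ := fun t => e (max t T) ^ γ with hψdef
    have hψ_anti : Antitone ψ := fun x y hxy =>
      hφ_anti _ _ (le_max_right x T) (max_le_max hxy le_rfl)
    have hψ_bdd : BddBelow (range ψ) := by
      refine ⟨0, ?_⟩
      rintro z ⟨t, rfl⟩
      exact Real.rpow_nonneg (hpos' _ (le_max_right _ _)) γ
    set L : ℝ := ⨅ t, ψ t with hLdef
    have htendψ : Tendsto ψ atTop (nhds L) := tendsto_atTop_ciInf hψ_anti hψ_bdd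
    have hLle : ∀ t, L ≤ ψ t := fun t => ciInf_le hψ_bdd t
    have hcauchy : CauchySeq (fun t => u (max t T)) := by
      apply cauchySeq_of_le_tendsto_0 (fun n => K * (ψ n - L))
      · intro n m n' hn hm
        have key : ∀ x y : ℝ, n' ≤ x → max x T ≤ max y T →
            dist (u (max x T)) (u (max y T)) ≤ K * (ψ n' - L) := by
          intro x y hx hxy
          calc dist (u (max x T)) (u (max y T))
              = ‖u (max y T) - u (max x T)‖ := by rw [dist_eq_norm, norm_sub_rev]
            _ ≤ K * (ψ x - ψ y) := hlen _ _ (le_max_right _ _) hxy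
            _ ≤ K * (ψ n' - L) := by
                have h1 := hψ_anti hx
                have h2 := hLle y
                nlinarith
        rcases le_total (max n T) (max m T) with h | h
        · exact key n m hn h
        · rw [dist_comm]; exact key m n hm h
      · have h1 := (htendψ.sub_const L).const_mul K
        simpa using h1
    obtain ⟨a, ha⟩ := cauchySeq_tendsto_of_complete hcauchy
    have htendu : Tendsto u atTop (nhds a) := by
      refine Tendsto.congr' ?_ ha
      filter_upwards [eventually_ge_atTop T] with t ht
      rw [max_eq_left ht]
    -- the final distance bound
    have hdista : ∀ t, T ≤ t → ‖u t - a‖ ≤ K * e t ^ γ := by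
      intro t ht
      have h1 : ∀ s', t ≤ s' → ‖u s' - u t‖ ≤ K * e t ^ γ := by
        intro s' hs'
        refine (hlen t s' ht hs').trans ?_
        have h2 : 0 ≤ e s' ^ γ := Real.rpow_nonneg (hpos' s' (ht.trans hs')) γ
        nlinarith
      have h2 : Tendsto (fun s' => ‖u s' - u t‖) atTop (nhds ‖a - u t‖) :=
        ((htendu.sub_const (u t)).norm)
      have h3 := le_of_tendsto h2 (eventually_atTop.mpr ⟨t, h1⟩)
      rwa [norm_sub_rev] at h3
    refine ⟨a, htendu, ?_⟩
    intro c₂ hc₂ hF2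
    set K₂ : ℝ := c * c₁β * c₂ with hK₂def
    have hK₂ : 0 < K₂ := by positivity
    -- differential inequality
    have hdiff : ∀ t, T ≤ t →
        K₂ * (e t ^ (β * (1 - θ)) * e t ^ (1 - θ)) ≤ ⟪g t, F (u t)⟫ := by
      intro t ht
      refine le_trans ?_ (hangle' t ht)
      have h1 := hgb t ht
      have h2 := hF2 t ht
      have h3 : (0:ℝ) ≤ c₂ * e t ^ (1 - θ) :=
        mul_nonneg hc₂.le (Real.rpow_nonneg (hpos' t ht) _)
      have h4 : (0:ℝ) ≤ c * ‖g t‖ ^ β := by positivity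
      calc K₂ * (e t ^ (β * (1 - θ)) * e t ^ (1 - θ))
          = c * (c₁β * e t ^ (β * (1 - θ))) * (c₂ * e t ^ (1 - θ)) := by
            rw [hK₂def]; ring
        _ ≤ c * ‖g t‖ ^ β * (c₂ * e t ^ (1 - θ)) := by
            have h5 := mul_le_mul_of_nonneg_left h1 hc.le
            exact mul_le_mul_of_nonneg_right (by nlinarith) h3
        _ ≤ c * ‖g t‖ ^ β * ‖F (u t)‖ := mul_le_mul_of_nonneg_left h2 h4
    constructor
    · -- exponential decay
      intro hβeq
      have hβθeq : β * (1 - θ) = θ := by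
        rw [hβeq]; field_simp
      have hde : ∀ t, T ≤ t → K₂ * e t ≤ ⟪g t, F (u t)⟫ := by
        intro t ht
        have h1 := hdiff t ht
        rwa [← Real.rpow_add (he_pos t ht), hβθeq,
          show θ + (1 - θ) = 1 by ring, Real.rpow_one] at h1
      -- h(t) = e t * exp(K₂ t) is nonincreasing
      have hhd : ∀ t, T ≤ t → HasDerivAt (fun s => e s * Real.exp (K₂ * s))
          (-⟪g t, F (u t)⟫ * Real.exp (K₂ * t) + e t * (Real.exp (K₂ * t) * K₂)) t := by
        intro t ht
        have h1 : HasDerivAt (fun s : ℝ => Real.exp (K₂ * s)) (Real.exp (K₂ * t) * K₂) t := by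
          have h2 := ((hasDerivAt_id t).const_mul K₂).exp
          simpa using h2
        exact (he' t (hT0.trans ht)).mul h1
      have hh_anti : AntitoneOn (fun s => e s * Real.exp (K₂ * s)) (Ici T) := by
        apply antitoneOn_of_deriv_nonpos (convex_Ici T)
        · exact fun t ht => ((hhd t ht).continuousAt).continuousWithinAt
        · intro t ht
          rw [interior_Ici] at ht
          exact ((hhd t ht.le).differentiableAt).differentiableWithinAt
        · intro t ht
          rw [interior_Ici] at ht
          rw [(hhd t ht.le).deriv]
          have h1 := hde t ht.le
          nlinarith [Real.exp_pos (K₂ * t)]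
      set C₀ : ℝ := e T * Real.exp (K₂ * T) with hC₀def
      have hC₀ : 0 < C₀ := mul_pos (he_pos T le_rfl) (Real.exp_pos _)
      have hexp_bound : ∀ t, T ≤ t → e t ≤ C₀ * Real.exp (-K₂ * t) := by
        intro t ht
        have h1 : e t * Real.exp (K₂ * t) ≤ C₀ :=
          hh_anti (self_mem_Ici) (mem_Ici.mpr ht) ht
        have h2 : (0:ℝ) < Real.exp (K₂ * t) := Real.exp_pos _
        have h3 : Real.exp (-K₂ * t) = (Real.exp (K₂ * t))⁻¹ := by
          rw [← Real.exp_neg]; ring_nf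
        rw [h3]
        have h4 := mul_le_mul_of_nonneg_right h1 (inv_nonneg.mpr h2.le)
        calc e t = e t * Real.exp (K₂ * t) * (Real.exp (K₂ * t))⁻¹ := by
              field_simp
          _ ≤ C₀ * (Real.exp (K₂ * t))⁻¹ := h4
      refine ⟨K₂ * γ, by positivity, ?_⟩
      rw [isBigO_iff]
      refine ⟨K * C₀ ^ γ, ?_⟩
      filter_upwards [eventually_ge_atTop T] with t ht
      have h1 := hdista t ht
      have h2 : e t ^ γ ≤ (C₀ * Real.exp (-K₂ * t)) ^ γ :=
        Real.rpow_le_rpow (hpos' t ht) (hexp_bound t ht) hγ.le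
      have h3 : (C₀ * Real.exp (-K₂ * t)) ^ γ = C₀ ^ γ * Real.exp (-(K₂ * γ) * t) := by
        rw [Real.mul_rpow hC₀.le (Real.exp_pos _).le, ← Real.exp_mul,
          show -K₂ * t * γ = -(K₂ * γ) * t by ring]
      have h4 : ‖Real.exp (-(K₂ * γ) * t)‖ = Real.exp (-(K₂ * γ) * t) := by
        rw [Real.norm_eq_abs, abs_of_pos (Real.exp_pos _)]
      rw [h4]
      calc ‖u t - a‖ ≤ K * e t ^ γ := h1
        _ ≤ K * (C₀ ^ γ * Real.exp (-(K₂ * γ) * t)) := by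
            rw [← h3]; exact mul_le_mul_of_nonneg_left h2 hK.le
        _ = K * C₀ ^ γ * Real.exp (-(K₂ * γ) * t) := by ring
    · -- polynomial decay
      intro hβgt
      have hμ : 0 < μ := by
        rw [hμdef]
        have := (div_lt_iff₀ h1θ).mp hβgt
        linarith
      have hde2 : ∀ t, T ≤ t → K₂ * e t ^ (β * (1 - θ) + (1 - θ)) ≤ ⟪g t, F (u t)⟫ := by
        intro t ht
        have h1 := hdiff t ht
        rwa [← Real.rpow_add (he_pos t ht)] at h1
      -- ρ(t) = e t ^ (-μ) - μ K₂ t is nondecreasing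
      have hρd : ∀ t, T ≤ t → HasDerivAt (fun s => e s ^ (-μ) - μ * K₂ * s)
          (-μ * e t ^ (-μ - 1) * -⟪g t, F (u t)⟫ - μ * K₂) t := by
        intro t ht
        have h1 := (Real.hasDerivAt_rpow_const (p := -μ)
          (Or.inl (he_pos t ht).ne')).comp t (he' t (hT0.trans ht))
        have h2 : HasDerivAt (fun s : ℝ => μ * K₂ * s) (μ * K₂) t := by
          simpa using (hasDerivAt_id t).const_mul (μ * K₂)
        exact h1.sub h2
      have hρ_mono : MonotoneOn (fun s => e s ^ (-μ) - μ * K₂ * s) (Ici T) := by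
        apply monotoneOn_of_deriv_nonneg (convex_Ici T)
        · exact fun t ht => ((hρd t ht).continuousAt).continuousWithinAt
        · intro t ht
          rw [interior_Ici] at ht
          exact ((hρd t ht.le).differentiableAt).differentiableWithinAt
        · intro t ht
          rw [interior_Ici] at ht
          rw [(hρd t ht.le).deriv]
          have h1 := hde2 t ht.le
          have h2 : (0:ℝ) < e t ^ (-μ - 1) := Real.rpow_pos_of_pos (he_pos t ht.le) _
          have h3 : e t ^ (-μ - 1) * e t ^ (β * (1 - θ) + (1 - θ)) = 1 := by
            rw [← Real.rpow_add (he_pos t ht.le),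
              show -μ - 1 + (β * (1 - θ) + (1 - θ)) = 0 by rw [hμdef]; ring,
              Real.rpow_zero]
          have h4 : K₂ ≤ e t ^ (-μ - 1) * ⟪g t, F (u t)⟫ := by
            have h5 := mul_le_mul_of_nonneg_left h1 h2.le
            calc K₂ = e t ^ (-μ - 1) * (K₂ * e t ^ (β * (1 - θ) + (1 - θ))) := by
                  rw [show e t ^ (-μ - 1) * (K₂ * e t ^ (β * (1 - θ) + (1 - θ)))
                    = K₂ * (e t ^ (-μ - 1) * e t ^ (β * (1 - θ) + (1 - θ))) from by ring,
                    h3, mul_one]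
              _ ≤ e t ^ (-μ - 1) * ⟪g t, F (u t)⟫ := h5
          nlinarith
      rw [isBigO_iff]
      refine ⟨K * (μ * K₂) ^ (-(γ / μ)) * 2 ^ (γ / μ), ?_⟩
      filter_upwards [eventually_ge_atTop (max (2 * T) (T + 1))] with t ht
      have htT1 : T + 1 ≤ t := le_trans (le_max_right _ _) ht
      have ht2T : 2 * T ≤ t := le_trans (le_max_left _ _) ht
      have htT : T ≤ t := by linarith
      have htpos : 0 < t := by linarith
      have htsub : (0:ℝ) < t - T := by linarith
      -- lower bound on e t ^ (-μ)
      have h1 : e T ^ (-μ) - μ * K₂ * T ≤ e t ^ (-μ) - μ * K₂ * t :=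
        hρ_mono (self_mem_Ici) (mem_Ici.mpr htT) htT
      have h2 : μ * K₂ * (t - T) ≤ e t ^ (-μ) := by
        have h3 : (0:ℝ) < e T ^ (-μ) := Real.rpow_pos_of_pos (he_pos T le_rfl) _
        nlinarith
      set A : ℝ := μ * K₂ * (t - T) with hAdef
      have hA : 0 < A := by positivity
      -- invert: e t ≤ A ^ (-1/μ)
      have h4 : e t ≤ A ^ (-(1 / μ)) := by
        have h5 : (e t ^ (-μ)) ^ (-(1 / μ)) ≤ A ^ (-(1 / μ)) :=
          Real.rpow_le_rpow_of_nonpos hA h2 (neg_nonpos.mpr (by positivity))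
        have h6 : (e t ^ (-μ)) ^ (-(1 / μ)) = e t := by
          rw [← Real.rpow_mul (he_pos t htT).le,
            show -μ * -(1 / μ) = 1 by field_simp, Real.rpow_one]
        rwa [h6] at h5
      -- conclude for φ
      have h7 : e t ^ γ ≤ A ^ (-(γ / μ)) := by
        have h8 : e t ^ γ ≤ (A ^ (-(1 / μ))) ^ γ :=
          Real.rpow_le_rpow (hpos t htT) h4 hγ.le
        rwa [← Real.rpow_mul hA.le, show -(1 / μ) * γ = -(γ / μ) by field_simp] at h8
      have h9 : A ^ (-(γ / μ)) = (μ * K₂) ^ (-(γ / μ)) * (t - T) ^ (-(γ / μ)) := by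
        rw [hAdef, Real.mul_rpow (by positivity) htsub.le]
      have h10 : (t - T) ^ (-(γ / μ)) ≤ 2 ^ (γ / μ) * t ^ (-(γ / μ)) := by
        have h11 : t / 2 ≤ t - T := by linarith
        have h12 : (0:ℝ) < t / 2 := by linarith
        have h13 : (t - T) ^ (-(γ / μ)) ≤ (t / 2) ^ (-(γ / μ)) :=
          Real.rpow_le_rpow_of_nonpos h12 h11 (neg_nonpos.mpr (by positivity))
        have h14 : (t / 2) ^ (-(γ / μ)) = 2 ^ (γ / μ) * t ^ (-(γ / μ)) := by
          rw [Real.div_rpow htpos.le (by norm_num : (0:ℝ) ≤ 2),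
            Real.rpow_neg (by norm_num : (0:ℝ) ≤ 2)]
          field_simp
        rwa [h14] at h13
      have h15 : ‖(t : ℝ) ^ (-(γ / μ))‖ = t ^ (-(γ / μ)) := by
        rw [Real.norm_eq_abs, abs_of_nonneg (Real.rpow_nonneg htpos.le _)]
      rw [h15]
      have h16 := hdista t htT
      have h17 : (0:ℝ) ≤ (μ * K₂) ^ (-(γ / μ)) := Real.rpow_nonneg (by positivity) _
      have h18 : (0:ℝ) ≤ (t - T) ^ (-(γ / μ)) := Real.rpow_nonneg htsub.le _
      calc ‖u t - a‖ ≤ K * e t ^ γ := h16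
        _ ≤ K * ((μ * K₂) ^ (-(γ / μ)) * (t - T) ^ (-(γ / μ))) := by
            rw [← h9]; exact mul_le_mul_of_nonneg_left h7 hK.le
        _ ≤ K * ((μ * K₂) ^ (-(γ / μ)) * (2 ^ (γ / μ) * t ^ (-(γ / μ)))) := by
            refine mul_le_mul_of_nonneg_left ?_ hK.le
            exact mul_le_mul_of_nonneg_left h10 h17
        _ = K * (μ * K₂) ^ (-(γ / μ)) * 2 ^ (γ / μ) * t ^ (-(γ / μ)) := by ring
end
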